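/- arXiv:2206.09226 — 8 statements merged into one kernel-verified Lean document; each statement's English description precedes it below -/
import Mathlib

section
/- Let α be a permutation of a finite nonempty set Ω. For each integer ℓ ≥ 1 let a_ℓ denote the number of orbits of size ℓ of the cyclic group generated by α acting on Ω (so fixed points of α are counted as orbits of size 1). Then the number of permutations τ of Ω with τ² = α equals the product over ℓ from 1 to |Ω| of sr(ℓ, a_ℓ). -/
/-- `ma m j` is the number of `j`-matchings (sets of `j` pairwise disjoint 2-element
subsets) of an `m`-element set: `m! / ((m - 2j)! · 2^j · j!)`. -/
def ma (m j : ℕ) : ℕ := m.factorial / ((m - 2 * j).factorial * 2 ^ j * j.factorial)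

/-- `sr ℓ m`: the number of ways the cycles of a square root can produce `m` cycles of
length `ℓ`. -/
def sr (l m : ℕ) : ℕ :=
  if l % 2 = 0 then
    if m % 2 = 1 then 0 else ma m (m / 2) * l ^ (m / 2)
  else
    ∑ j ∈ Finset.range (m / 2 + 1), ma m j * l ^ j

/-!
A square root `τ` of `α` commutes with `α`, so it maps each `α`-orbit onto an `α`-orbit of the
same size. Fix `x` and let `O` be its orbit, of size `ℓ`. If `τ` maps `O` to itself, then
`ℓ` is odd and `τ = α ^ ((ℓ + 1) / 2)` on `O`. Otherwise `τ x = y` lies in another orbit `O'`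
of size `ℓ`, and `y` determines `τ` on `O ∪ O'`: `τ (α ^ k x) = α ^ k y` and
`τ (α ^ k y) = α ^ (k + 1) x`. In both cases the remaining freedom is a square root of `α` on the
complement, and the `ℓ (a_ℓ - 1)` choices of `y` give the recursion
`sr ℓ (m + 1) = [ℓ odd] sr ℓ m + m ℓ sr ℓ (m - 1)`, which the matching numbers satisfy.
-/

section Matchings

open Nat Finset

/-- Agrees with `ma m j` when `2 * j ≤ m`, but vanishes instead of taking a junk value when
`m < 2 * j`. -/
def matchingCount (m j : ℕ) : ℕ := m.choose (2 * j) * (2 * j - 1)‼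

lemma factorial_two_mul_eq (j : ℕ) : (2 * j)! = (2 * j - 1)‼ * (2 ^ j * j !) := by
  rcases j with _ | j
  · rfl
  · rw [show 2 * (j + 1) = 2 * j + 1 + 1 by ring, factorial_eq_mul_doubleFactorial,
      show 2 * j + 1 + 1 = 2 * (j + 1) by ring, doubleFactorial_two_mul,
      show 2 * (j + 1) - 1 = 2 * j + 1 by omega, mul_comm]

lemma ma_eq_matchingCount {m j : ℕ} (h : 2 * j ≤ m) : ma m j = matchingCount m j := by
  refine Nat.div_eq_of_eq_mul_left (by positivity) ?_
  rw [← choose_mul_factorial_mul_factorial h, factorial_two_mul_eq, matchingCount]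
  ring

@[simp] lemma matchingCount_zero_right (m : ℕ) : matchingCount m 0 = 1 := by
  simp [matchingCount]

lemma matchingCount_eq_zero {m j : ℕ} (h : m < 2 * j) : matchingCount m j = 0 := by
  simp [matchingCount, choose_eq_zero_of_lt h]

lemma matchingCount_add_two_succ (n j : ℕ) :
    matchingCount (n + 2) (j + 1) =
      matchingCount (n + 1) (j + 1) + (n + 1) * matchingCount n j := by
  have hdf : (2 * j + 1)‼ = (2 * j + 1) * (2 * j - 1)‼ := by
    rcases j with _ | j
    · rfl
    · rw [show 2 * (j + 1) + 1 = 2 * j + 1 + 2 by ring, doubleFactorial_add_two,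
        show 2 * (j + 1) - 1 = 2 * j + 1 by omega]
  have hchoose : (n + 1) * n.choose (2 * j) = (n + 1).choose (2 * j + 1) * (2 * j + 1) :=
    add_one_mul_choose_eq n (2 * j)
  simp only [matchingCount, show 2 * (j + 1) = 2 * j + 1 + 1 by ring,
    show 2 * j + 1 + 1 - 1 = 2 * j + 1 by omega, choose_succ_succ (n + 1) (2 * j + 1), hdf]
  rw [← mul_assoc (n + 1), hchoose]
  ring

lemma sr_of_odd {l : ℕ} (hl : Odd l) {m N : ℕ} (hN : m < 2 * N) :
    sr l m = ∑ j ∈ range N, matchingCount m j * l ^ j := by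
  rw [sr, if_neg (by simpa [← Nat.odd_iff] using hl),
    ← sum_range_add_sum_Ico (fun j => matchingCount m j * l ^ j) (show m / 2 + 1 ≤ N by omega),
    sum_eq_zero (s := Ico _ _) fun j hj => by
      rw [matchingCount_eq_zero (by simp at hj; omega), zero_mul], add_zero]
  exact sum_congr rfl fun j hj => by rw [ma_eq_matchingCount (by simp at hj; omega)]

lemma sr_of_even_of_even {l m : ℕ} (hl : Even l) (hm : Even m) :
    sr l m = matchingCount m (m / 2) * l ^ (m / 2) := by
  rw [sr, if_pos (Nat.even_iff.mp hl), if_neg (by simpa [← Nat.odd_iff] using hm),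
    ma_eq_matchingCount (by omega)]

lemma sr_of_even_of_odd {l m : ℕ} (hl : Even l) (hm : Odd m) : sr l m = 0 := by
  rw [sr, if_pos (Nat.even_iff.mp hl), if_pos (Nat.odd_iff.mp hm)]

lemma sr_zero_right (l : ℕ) : sr l 0 = 1 := by
  rcases Nat.even_or_odd l with hl | hl
  · simp [sr_of_even_of_even hl ⟨0, rfl⟩]
  · simp [sr_of_odd hl (m := 0) (N := 1) (by norm_num)]

lemma sr_add_two (l m : ℕ) :
    sr l (m + 2) = (if Odd l then sr l (m + 1) else 0) + (m + 1) * l * sr l m := by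
  rcases Nat.even_or_odd l with hl | hl
  · rw [if_neg (Nat.not_odd_iff_even.mpr hl)]
    rcases Nat.even_or_odd m with ⟨k, rfl⟩ | hm
    · rw [sr_of_even_of_even hl ⟨k + 1, by ring⟩, sr_of_even_of_even hl ⟨k, rfl⟩,
        show (k + k + 2) / 2 = k + 1 by omega, show (k + k) / 2 = k by omega,
        matchingCount_add_two_succ,
        matchingCount_eq_zero (by omega)]
      ring
    · rw [sr_of_even_of_odd hl (by simpa [parity_simps] using hm), sr_of_even_of_odd hl hm]
      ring
  · have hshift : ∑ j ∈ range (m + 1), (m + 1) * matchingCount m j * l ^ (j + 1)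
        = (m + 1) * l * ∑ j ∈ range (m + 1), matchingCount m j * l ^ j := by
      rw [mul_sum]
      exact sum_congr rfl fun j _ => by ring
    rw [if_pos hl, sr_of_odd hl (N := m + 2) (by omega), sr_of_odd hl (N := m + 2) (by omega),
      sr_of_odd hl (N := m + 1) (by omega), sum_range_succ', sum_range_succ' _ (m + 1)]
    simp only [matchingCount_add_two_succ, add_mul (matchingCount (m + 1) _), sum_add_distrib,
      matchingCount_zero_right, hshift]
    ring

lemma sr_succ (l m : ℕ) :
    sr l (m + 1) = (if Odd l then sr l m else 0) + m * l * sr l (m - 1) := by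
  rcases m with _ | m
  · rcases Nat.even_or_odd l with hl | hl
    · simp [sr_of_even_of_odd hl odd_one, Nat.not_odd_iff_even.mpr hl]
    · simp [sr_of_odd hl (m := 1) (N := 1) (by norm_num), sr_zero_right, hl]
  · exact sr_add_two l m

end Matchings

open Function Set

namespace Equiv.Perm

variable {Ω : Type*} {α τ : Perm Ω} {x y : Ω}

lemma apply_zpow_apply_of_commute (hc : Commute τ α) (k : ℤ) (z : Ω) :
    τ ((α ^ k) z) = (α ^ k) (τ z) :=
  DFunLike.congr_fun (hc.zpow_right k).eq z

lemma commute_of_mul_self_eq (h : τ * τ = α) : Commute τ α :=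
  h ▸ (Commute.refl τ).mul_right (Commute.refl τ)

lemma minimalPeriod_apply_of_commute (hc : Commute τ α) (x : Ω) :
    minimalPeriod α (τ x) = minimalPeriod α x := by
  refine minimalPeriod_eq_minimalPeriod_iff.mpr fun n => ?_
  change (α ^ n) (τ x) = τ x ↔ (α ^ n) x = x
  rw [← mul_apply, ← (hc.pow_right n).eq, mul_apply, τ.injective.eq_iff]

lemma minimalPeriod_zpow_apply (α : Perm Ω) (k : ℤ) (x : Ω) :
    minimalPeriod α ((α ^ k) x) = minimalPeriod α x :=
  minimalPeriod_apply_of_commute (Commute.zpow_left (Commute.refl α) k) x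

lemma SameCycle.minimalPeriod_eq (h : α.SameCycle x y) :
    minimalPeriod α y = minimalPeriod α x := by
  obtain ⟨k, rfl⟩ := h
  exact minimalPeriod_zpow_apply α k x

lemma zpow_apply_eq_self_iff (α : Perm Ω) (x : Ω) (k : ℤ) :
    (α ^ k) x = x ↔ (minimalPeriod α x : ℤ) ∣ k :=
  MulAction.zpow_smul_eq_iff_minimalPeriod_dvd (a := α) (b := x)

lemma zpow_apply_eq_zpow_apply_iff (α : Perm Ω) (x : Ω) (k j : ℤ) :
    (α ^ k) x = (α ^ j) x ↔ (minimalPeriod α x : ℤ) ∣ k - j := by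
  rw [← minimalPeriod_zpow_apply α j x, ← zpow_apply_eq_self_iff, ← mul_apply, ← zpow_add,
    sub_add_cancel]

lemma card_setOf_sameCycle (α : Perm Ω) (x : Ω) :
    Nat.card {z | α.SameCycle x z} = minimalPeriod α x := by
  have horbit : MulAction.orbit (Subgroup.zpowers α) x = {z | α.SameCycle x z} := by
    ext z
    constructor
    · rintro ⟨⟨_, k, rfl⟩, rfl⟩
      exact ⟨k, rfl⟩
    · rintro ⟨k, rfl⟩
      exact ⟨⟨α ^ k, k, rfl⟩, rfl⟩
  rw [← horbit, Nat.card_congr (MulAction.orbitZPowersEquiv α x), Nat.card_zmod]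
  rfl

lemma setOf_sameCycle_eq (h : α.SameCycle x y) :
    {z | α.SameCycle y z} = {z | α.SameCycle x z} :=
  Set.ext fun _ => ⟨h.trans, h.symm.trans⟩

lemma minimalPeriod_subtypePerm {q : Ω → Prop} (hq : ∀ z, q (α z) ↔ q z) (z : {z // q z}) :
    minimalPeriod (α.subtypePerm hq) z = minimalPeriod α z := by
  refine minimalPeriod_eq_minimalPeriod_iff.mpr fun n => ?_
  change (α.subtypePerm hq ^ n) z = z ↔ (α ^ n) (z : Ω) = z
  rw [subtypePerm_pow, Subtype.ext_iff, subtypePerm_apply]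

/-- `{z | α.SameCycle x z}` unfolds to `Set.range fun t : ℤ => (α ^ t) x`, so this is the `a ℓ`
of the theorem. -/
noncomputable def orbitCount (α : Perm Ω) (ℓ : ℕ) : ℕ :=
  Nat.card {s : Set Ω // (∃ x, s = {z | α.SameCycle x z}) ∧ Nat.card s = ℓ}

theorem card_minimalPeriod_eq_mul_orbitCount [Finite Ω] (α : Perm Ω) (ℓ : ℕ) :
    Nat.card {x // minimalPeriod α x = ℓ} = ℓ * orbitCount α ℓ := by
  let Orb := {s : Set Ω // (∃ x, s = {z | α.SameCycle x z}) ∧ Nat.card s = ℓ}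
  let orb : {x // minimalPeriod α x = ℓ} → Orb := fun x =>
    ⟨{z | α.SameCycle x z}, ⟨x, rfl⟩, (card_setOf_sameCycle α x).trans x.2⟩
  have hfiber (s : Orb) : Nat.card {x // orb x = s} = ℓ := by
    obtain ⟨s, ⟨w, rfl⟩, hs⟩ := s
    refine (Nat.card_congr ?_).trans hs
    exact
      { toFun x := ⟨x.1.1, (Set.ext_iff.mp (congrArg Subtype.val x.2) x.1.1).mp .rfl⟩
        invFun z := ⟨⟨z, (SameCycle.minimalPeriod_eq z.2).trans
            ((card_setOf_sameCycle α w).symm.trans hs)⟩, Subtype.ext (setOf_sameCycle_eq z.2)⟩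
        left_inv _ := rfl
        right_inv _ := rfl }
  have : Fintype Orb := Fintype.ofFinite Orb
  rw [Nat.card_congr (Equiv.sigmaFiberEquiv orb).symm, Nat.card_sigma,
    Finset.sum_congr rfl fun s _ => hfiber s, Finset.sum_const, smul_eq_mul,
    Finset.card_univ, ← Nat.card_eq_fintype_card, mul_comm]
  rfl

theorem mul_orbitCount_subtypePerm [Finite Ω] {q : Ω → Prop} (hq : ∀ z, q (α z) ↔ q z)
    (ℓ : ℕ) :
    ℓ * orbitCount (α.subtypePerm hq) ℓ = Nat.card {x // q x ∧ minimalPeriod α x = ℓ} := by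
  rw [← card_minimalPeriod_eq_mul_orbitCount]
  simp_rw [minimalPeriod_subtypePerm]
  exact Nat.card_congr (Equiv.subtypeSubtypeEquivSubtypeInter q (minimalPeriod α · = ℓ))

abbrev restrictCompl (α : Perm Ω) {S : Set Ω} (hS : ∀ z, α z ∈ S ↔ z ∈ S) :
    Perm {z // z ∉ S} :=
  α.subtypePerm fun z => (hS z).not

theorem mul_orbitCount_restrictCompl_add [Finite Ω] {S : Set Ω} (hS : ∀ z, α z ∈ S ↔ z ∈ S)
    {p : ℕ} (hSp : ∀ z ∈ S, minimalPeriod α z = p) (ℓ : ℕ) :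
    ℓ * orbitCount (α.restrictCompl hS) ℓ + (if ℓ = p then Nat.card S else 0) =
      ℓ * orbitCount α ℓ := by
  have hinter : {x | minimalPeriod α x = ℓ} ∩ S = if ℓ = p then S else ∅ := by
    split_ifs with h
    · exact inter_eq_right.mpr fun z hz => (hSp z hz).trans h.symm
    · exact eq_empty_of_forall_notMem fun z hz => h (hz.1.symm.trans (hSp z hz.2))
  have hdiff : Nat.card {x // x ∉ S ∧ minimalPeriod α x = ℓ} =
      ({x | minimalPeriod α x = ℓ} \ S).ncard := by
    rw [← Nat.card_coe_set_eq]
    exact Nat.card_congr (Equiv.subtypeEquivRight fun _ => and_comm)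
  have hcap : (if ℓ = p then Nat.card S else 0) = ({x | minimalPeriod α x = ℓ} ∩ S).ncard := by
    rw [hinter]
    split_ifs <;> simp [Nat.card_coe_set_eq]
  rw [mul_orbitCount_subtypePerm, ← card_minimalPeriod_eq_mul_orbitCount, hdiff, hcap, add_comm,
    ncard_inter_add_ncard_sdiff_eq_ncard]
  exact (Nat.card_coe_set_eq _).symm


section Glue

variable {S : Set Ω} {f : Ω → Ω}

lemma bijOn_of_apply_apply_eq (hS : ∀ z, α z ∈ S ↔ z ∈ S) (hf : MapsTo f S S)
    (hff : ∀ z ∈ S, f (f z) = α z) : BijOn f S S := by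
  refine ⟨hf, fun a ha b hb hab => α.injective ?_, fun z hz => ?_⟩
  · rw [← hff a ha, ← hff b hb, hab]
  · have hw : α.symm z ∈ S := (hS _).mp (by rwa [apply_symm_apply])
    exact ⟨f (α.symm z), hf hw, by rw [hff _ hw, apply_symm_apply]⟩

lemma mapsTo_compl_of_eqOn (hS : ∀ z, α z ∈ S ↔ z ∈ S) (hf : MapsTo f S S)
    (hτ : τ * τ = α) (hτf : EqOn τ f S) (z : Ω) : τ z ∉ S ↔ z ∉ S := by
  refine not_congr ⟨fun h => (hS z).mp ?_, fun h => hτf h ▸ hf h⟩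
  rw [← hτ, mul_apply, hτf h]
  exact hf h

open scoped Classical in
noncomputable def glueSqrt (hS : ∀ z, α z ∈ S ↔ z ∈ S) (hf : MapsTo f S S)
    (hff : ∀ z ∈ S, f (f z) = α z) (σ : Perm {z // z ∉ S}) : Perm Ω :=
  ((bijOn_of_apply_apply_eq hS hf hff).equiv f).subtypeCongr σ

variable (hS : ∀ z, α z ∈ S ↔ z ∈ S) (hf : MapsTo f S S) (hff : ∀ z ∈ S, f (f z) = α z)
  (σ : Perm {z // z ∉ S})

lemma glueSqrt_apply_of_mem {z : Ω} (hz : z ∈ S) : glueSqrt hS hf hff σ z = f z := by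
  classical
  exact Perm.subtypeCongr.left_apply _ σ hz

lemma glueSqrt_apply_of_notMem {z : Ω} (hz : z ∉ S) : glueSqrt hS hf hff σ z = σ ⟨z, hz⟩ := by
  classical
  exact Perm.subtypeCongr.right_apply _ σ hz

lemma glueSqrt_mul_self (hσ : σ * σ = α.restrictCompl hS) :
    glueSqrt hS hf hff σ * glueSqrt hS hf hff σ = α := by
  ext z
  by_cases hz : z ∈ S
  · rw [mul_apply, glueSqrt_apply_of_mem hS hf hff σ hz,
      glueSqrt_apply_of_mem hS hf hff σ (hf hz), hff z hz]
  · rw [mul_apply, glueSqrt_apply_of_notMem hS hf hff σ hz,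
      glueSqrt_apply_of_notMem hS hf hff σ (σ ⟨z, hz⟩).2, ← mul_apply, hσ]
    rfl

noncomputable def sqrtEqOnEquiv :
    {τ : Perm Ω // τ * τ = α ∧ EqOn τ f S} ≃
      {σ : Perm {z // z ∉ S} // σ * σ = α.restrictCompl hS} where
  toFun τ := ⟨τ.1.subtypePerm (mapsTo_compl_of_eqOn hS hf τ.2.1 τ.2.2), by
    rw [subtypePerm_mul]
    simp_rw [τ.2.1]⟩
  invFun σ := ⟨glueSqrt hS hf hff σ.1, glueSqrt_mul_self hS hf hff σ.1 σ.2,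
    fun _ hz => glueSqrt_apply_of_mem hS hf hff σ.1 hz⟩
  left_inv τ := by
    refine Subtype.ext (Equiv.ext fun z => ?_)
    by_cases hz : z ∈ S
    · exact (glueSqrt_apply_of_mem hS hf hff _ hz).trans (τ.2.2 hz).symm
    · exact glueSqrt_apply_of_notMem hS hf hff _ hz
  right_inv σ := Subtype.ext (Equiv.ext fun z =>
    Subtype.ext (glueSqrt_apply_of_notMem hS hf hff σ.1 z.2))

end Glue

section Fibers

variable {f : Ω → Ω}

lemma eqOn_setOf_sameCycle_iff (hτ : τ * τ = α)
    (hf : ∀ k : ℤ, f ((α ^ k) x) = (α ^ k) (f x)) :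
    EqOn τ f {z | α.SameCycle x z} ↔ τ x = f x := by
  refine ⟨fun h => h (SameCycle.refl α x), ?_⟩
  rintro h _ ⟨k, rfl⟩
  rw [hf, ← h, apply_zpow_apply_of_commute (commute_of_mul_self_eq hτ)]

lemma apply_mem_setOf_sameCycle_iff {z : Ω} :
    α z ∈ {w | α.SameCycle x w} ↔ z ∈ {w | α.SameCycle x w} :=
  sameCycle_apply_right

lemma card_eq_sum_card_apply_eq [Fintype Ω] (P : Perm Ω → Prop) (x : Ω) :
    Nat.card {τ // P τ} = ∑ y, Nat.card {τ // P τ ∧ τ x = y} := by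
  rw [Nat.card_congr (Equiv.sigmaFiberEquiv fun τ : {τ // P τ} => τ.1 x).symm, Nat.card_sigma]
  exact Finset.sum_congr rfl fun y _ =>
    Nat.card_congr (Equiv.subtypeSubtypeEquivSubtypeInter P (· x = y))

end Fibers

section SingleOrbit

lemma odd_minimalPeriod_and_eq_of_sameCycle (hτ : τ * τ = α) (hx : α.SameCycle x (τ x)) :
    Odd (minimalPeriod α x) ∧ τ x = (α ^ ((minimalPeriod α x + 1) / 2)) x := by
  obtain ⟨k, hk⟩ := hx
  have hkk : (α ^ (k + k)) x = (α ^ (1 : ℤ)) x := by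
    rw [zpow_add, mul_apply, hk, ← apply_zpow_apply_of_commute (commute_of_mul_self_eq hτ), hk,
      zpow_one, ← hτ, mul_apply]
  obtain ⟨c, hc⟩ := (zpow_apply_eq_zpow_apply_iff α x _ _).mp hkk
  obtain ⟨hpZ, d, rfl⟩ := Int.odd_mul.mp (⟨k - 1, by rw [← hc]; ring⟩ : Odd _)
  have hp : Odd (minimalPeriod α x) := by exact_mod_cast hpZ
  refine ⟨hp, ?_⟩
  have hhalf : 2 * ((minimalPeriod α x + 1) / 2 : ℕ) = (minimalPeriod α x : ℤ) + 1 := by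
    have := Nat.odd_iff.mp hp
    omega
  rw [← hk, ← zpow_natCast, zpow_apply_eq_zpow_apply_iff]
  refine ⟨d, mul_left_cancel₀ two_ne_zero ?_⟩
  linear_combination hc - hhalf

lemma pow_half_apply_pow_half_apply (hp : Odd (minimalPeriod α x)) {z : Ω}
    (hz : α.SameCycle x z) :
    (α ^ ((minimalPeriod α x + 1) / 2)) ((α ^ ((minimalPeriod α x + 1) / 2)) z) = α z := by
  have := Nat.odd_iff.mp hp
  rw [← mul_apply, ← pow_add, show (minimalPeriod α x + 1) / 2 + (minimalPeriod α x + 1) / 2 =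
    minimalPeriod α x + 1 by omega, pow_succ', mul_apply, ← hz.minimalPeriod_eq]
  exact congrArg α (iterate_minimalPeriod (f := α))

theorem card_sqrt_apply_eq_of_sameCycle [DecidableEq Ω] (hy : α.SameCycle x y) :
    Nat.card {τ // τ * τ = α ∧ τ x = y} =
      if Odd (minimalPeriod α x) ∧ y = (α ^ ((minimalPeriod α x + 1) / 2)) x then
        Nat.card {σ // σ * σ = α.restrictCompl fun _ => apply_mem_setOf_sameCycle_iff (x := x)}
      else 0 := by
  split_ifs with h
  · obtain ⟨hp, rfl⟩ := h
    rw [← Nat.card_congr (sqrtEqOnEquiv (S := {z | α.SameCycle x z}) _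
      (fun _ hz => sameCycle_pow_right.mpr hz) fun _ hz => pow_half_apply_pow_half_apply hp hz)]
    exact Nat.card_congr (Equiv.subtypeEquivRight fun τ => and_congr_right fun hτ =>
      (eqOn_setOf_sameCycle_iff hτ fun k =>
        apply_zpow_apply_of_commute ((Commute.refl α).pow_left _) k x).symm)
  · have : IsEmpty {τ // τ * τ = α ∧ τ x = y} :=
      ⟨fun ⟨τ, hτ, hτx⟩ => h (hτx ▸ odd_minimalPeriod_and_eq_of_sameCycle hτ (hτx ▸ hy))⟩
    exact Nat.card_of_isEmpty

end SingleOrbit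

section TwoOrbits

open scoped Classical in
/-- The `α`-equivariant map from the orbit of `x` onto the orbit of `y` with `x ↦ y`, extended by
the identity; the choice of exponent is immaterial only when `x` and `y` have the same period. -/
noncomputable def orbitTransport (α : Perm Ω) (x y z : Ω) : Ω :=
  if h : α.SameCycle x z then (α ^ h.choose) y else z

lemma orbitTransport_zpow_apply (hper : minimalPeriod α y = minimalPeriod α x) (k : ℤ) :
    orbitTransport α x y ((α ^ k) x) = (α ^ k) y := by
  have h : α.SameCycle x ((α ^ k) x) := ⟨k, rfl⟩
  rw [orbitTransport, dif_pos h, zpow_apply_eq_zpow_apply_iff, hper,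
    ← zpow_apply_eq_zpow_apply_iff]
  exact h.choose_spec

open scoped Classical in
/-- On the union of the orbits of `x` and `y`, the square root of `α` with `x ↦ y`. -/
noncomputable def pairSqrt (α : Perm Ω) (x y z : Ω) : Ω :=
  if α.SameCycle x z then orbitTransport α x y z else α (orbitTransport α y x z)

lemma pairSqrt_zpow_apply_left (hper : minimalPeriod α y = minimalPeriod α x) (k : ℤ) :
    pairSqrt α x y ((α ^ k) x) = (α ^ k) y := by
  rw [pairSqrt, if_pos ⟨k, rfl⟩, orbitTransport_zpow_apply hper]

lemma pairSqrt_zpow_apply_right (hxy : ¬α.SameCycle x y)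
    (hper : minimalPeriod α y = minimalPeriod α x) (k : ℤ) :
    pairSqrt α x y ((α ^ k) y) = (α ^ k) (α x) := by
  rw [pairSqrt, if_neg (sameCycle_zpow_right.not.mpr hxy), orbitTransport_zpow_apply hper.symm,
    apply_zpow_apply_of_commute (Commute.refl α)]

lemma apply_mem_union_setOf_sameCycle_iff {z : Ω} :
    α z ∈ {w | α.SameCycle x w} ∪ {w | α.SameCycle y w} ↔
      z ∈ {w | α.SameCycle x w} ∪ {w | α.SameCycle y w} :=
  or_congr sameCycle_apply_right sameCycle_apply_right

theorem card_sqrt_apply_eq_of_not_sameCycle (hxy : ¬α.SameCycle x y)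
    (hper : minimalPeriod α y = minimalPeriod α x) :
    Nat.card {τ // τ * τ = α ∧ τ x = y} =
      Nat.card {σ // σ * σ = α.restrictCompl fun _ =>
        apply_mem_union_setOf_sameCycle_iff (x := x) (y := y)} := by
  have hleft := pairSqrt_zpow_apply_left hper
  have hright := pairSqrt_zpow_apply_right hxy hper
  have hmaps : MapsTo (pairSqrt α x y) ({z | α.SameCycle x z} ∪ {z | α.SameCycle y z})
      ({z | α.SameCycle x z} ∪ {z | α.SameCycle y z}) := by
    rintro _ (⟨k, rfl⟩ | ⟨k, rfl⟩)
    · exact Or.inr (hleft k ▸ ⟨k, rfl⟩)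
    · exact Or.inl (hright k ▸ sameCycle_zpow_right.mpr (sameCycle_apply_right.mpr .rfl))
  have hsq : ∀ z ∈ {z | α.SameCycle x z} ∪ {z | α.SameCycle y z},
      pairSqrt α x y (pairSqrt α x y z) = α z := by
    rintro _ (⟨k, rfl⟩ | ⟨k, rfl⟩)
    · rw [hleft, hright, apply_zpow_apply_of_commute (Commute.refl α)]
    · rw [hright, ← mul_apply, ← zpow_add_one, hleft, zpow_add_one, mul_apply,
        apply_zpow_apply_of_commute (Commute.refl α)]
  rw [← Nat.card_congr (sqrtEqOnEquiv _ hmaps hsq)]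
  refine Nat.card_congr (Equiv.subtypeEquivRight fun τ => and_congr_right fun hτ => ?_)
  have hx : pairSqrt α x y x = y := by simpa using hleft 0
  have hy : pairSqrt α x y y = α x := by simpa using hright 0
  rw [eqOn_union, eqOn_setOf_sameCycle_iff hτ (by simpa [hx] using hleft),
    eqOn_setOf_sameCycle_iff hτ (by simpa [hy] using hright), hx, hy]
  exact ⟨fun h => ⟨h, by rw [← h, ← hτ, mul_apply]⟩, fun h => h.1⟩

lemma card_sqrt_apply_eq_zero_of_minimalPeriod_ne (h : minimalPeriod α y ≠ minimalPeriod α x) :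
    Nat.card {τ // τ * τ = α ∧ τ x = y} = 0 :=
  have : IsEmpty {τ // τ * τ = α ∧ τ x = y} := ⟨fun ⟨_, hτ, hτx⟩ =>
    h (hτx ▸ minimalPeriod_apply_of_commute (commute_of_mul_self_eq hτ) x)⟩
  Nat.card_of_isEmpty

theorem card_sqrt_eq_add_sum [Fintype Ω] [DecidableEq Ω] (α : Perm Ω) (x : Ω) :
    Nat.card {τ // τ * τ = α} =
      (if Odd (minimalPeriod α x) then
        Nat.card {σ // σ * σ = α.restrictCompl fun _ => apply_mem_setOf_sameCycle_iff (x := x)}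
      else 0) +
      ∑ y with ¬α.SameCycle x y ∧ minimalPeriod α y = minimalPeriod α x,
        Nat.card {σ // σ * σ = α.restrictCompl fun _ =>
          apply_mem_union_setOf_sameCycle_iff (x := x) (y := y)} := by
  rw [card_eq_sum_card_apply_eq _ x, ← Finset.sum_filter_add_sum_filter_not _ (α.SameCycle x)]
  congr 1
  · rw [Finset.sum_congr rfl fun y hy =>
      card_sqrt_apply_eq_of_sameCycle (Finset.mem_filter.mp hy).2]
    split_ifs with hp
    · simp only [hp, true_and]
      rw [Finset.sum_ite_eq', if_pos (Finset.mem_filter.mpr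
        ⟨Finset.mem_univ _, sameCycle_pow_right.mpr .rfl⟩)]
    · simp [hp]
  · rw [← Finset.filter_filter, Finset.sum_filter (minimalPeriod α · = minimalPeriod α x)]
    refine Finset.sum_congr rfl fun y hy => ?_
    split_ifs with hper
    · exact card_sqrt_apply_eq_of_not_sameCycle (Finset.mem_filter.mp hy).2 hper
    · exact card_sqrt_apply_eq_zero_of_minimalPeriod_ne hper

end TwoOrbits

section Evaluation

theorem orbitCount_restrictCompl [Finite Ω] {S : Set Ω} (hS : ∀ z, α z ∈ S ↔ z ∈ S)
    {p k : ℕ} (hSp : ∀ z ∈ S, minimalPeriod α z = p) (hcard : Nat.card S = k * p) {ℓ : ℕ}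
    (hℓ : 0 < ℓ) :
    orbitCount (α.restrictCompl hS) ℓ = orbitCount α ℓ - if ℓ = p then k else 0 := by
  have h := mul_orbitCount_restrictCompl_add hS hSp ℓ
  split_ifs at h ⊢ with hℓp
  · subst hℓp
    have : orbitCount (α.restrictCompl hS) ℓ + k = orbitCount α ℓ :=
      Nat.eq_of_mul_eq_mul_left hℓ (by rw [mul_add, ← h, hcard, mul_comm k])
    omega
  · exact Nat.eq_of_mul_eq_mul_left hℓ h

theorem prod_sr_orbitCount_restrictCompl [Finite Ω] {S : Set Ω} (hS : ∀ z, α z ∈ S ↔ z ∈ S)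
    {p k N : ℕ} (hSp : ∀ z ∈ S, minimalPeriod α z = p) (hcard : Nat.card S = k * p)
    (hp : p ∈ Finset.Icc 1 N) :
    ∏ ℓ ∈ Finset.Icc 1 N, sr ℓ (orbitCount (α.restrictCompl hS) ℓ) =
      sr p (orbitCount α p - k) * ∏ ℓ ∈ (Finset.Icc 1 N).erase p, sr ℓ (orbitCount α ℓ) := by
  rw [← Finset.mul_prod_erase _ _ hp,
    orbitCount_restrictCompl hS hSp hcard (Finset.mem_Icc.mp hp).1, if_pos rfl]
  congr 1
  refine Finset.prod_congr rfl fun ℓ hℓ => ?_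
  rw [orbitCount_restrictCompl hS hSp hcard (Finset.mem_Icc.mp (Finset.mem_of_mem_erase hℓ)).1,
    if_neg (Finset.ne_of_mem_erase hℓ), Nat.sub_zero]

lemma minimalPeriod_mem_Icc [Finite Ω] (α : Perm Ω) (x : Ω) :
    minimalPeriod α x ∈ Finset.Icc 1 (Nat.card Ω) := by
  rw [Finset.mem_Icc, ← card_setOf_sameCycle]
  exact ⟨Nat.card_pos_iff.mpr ⟨⟨x, .rfl⟩, inferInstance⟩, Finite.card_subtype_le _⟩

lemma card_union_setOf_sameCycle [Finite Ω] (hxy : ¬α.SameCycle x y)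
    (hper : minimalPeriod α y = minimalPeriod α x) :
    Nat.card ↥({z | α.SameCycle x z} ∪ {z | α.SameCycle y z}) = 2 * minimalPeriod α x := by
  rw [Nat.card_coe_set_eq,
    ncard_union_eq (disjoint_left.mpr fun _ hx hy => hxy (hx.trans hy.symm)),
    ← Nat.card_coe_set_eq, ← Nat.card_coe_set_eq, card_setOf_sameCycle, card_setOf_sameCycle,
    hper, two_mul]

lemma one_le_orbitCount_minimalPeriod [Finite Ω] (α : Perm Ω) (x : Ω) :
    1 ≤ orbitCount α (minimalPeriod α x) := by
  have hpos : 0 < Nat.card {y // minimalPeriod α y = minimalPeriod α x} :=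
    Nat.card_pos_iff.mpr ⟨⟨⟨x, rfl⟩⟩, inferInstance⟩
  rw [card_minimalPeriod_eq_mul_orbitCount] at hpos
  exact Nat.pos_of_mul_pos_left hpos

lemma card_filter_not_sameCycle_minimalPeriod_eq [Fintype Ω] [DecidableEq Ω] (α : Perm Ω)
    (x : Ω) :
    (Finset.univ.filter fun y => ¬α.SameCycle x y ∧ minimalPeriod α y = minimalPeriod α x).card =
      minimalPeriod α x * (orbitCount α (minimalPeriod α x) - 1) := by
  have h := mul_orbitCount_subtypePerm (q := (· ∉ {w | α.SameCycle x w}))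
    (fun _ => apply_mem_setOf_sameCycle_iff.not) (minimalPeriod α x)
  rw [orbitCount_restrictCompl (fun _ => apply_mem_setOf_sameCycle_iff)
    (fun _ => SameCycle.minimalPeriod_eq) (k := 1) (by rw [card_setOf_sameCycle, one_mul])
    (Finset.mem_Icc.mp (minimalPeriod_mem_Icc α x)).1, if_pos rfl] at h
  rw [h, ← Fintype.card_subtype, Nat.card_eq_fintype_card]
  rfl

lemma orbitCount_of_isEmpty [IsEmpty Ω] (α : Perm Ω) (ℓ : ℕ) : orbitCount α ℓ = 0 :=
  have : IsEmpty {s : Set Ω // (∃ x, s = {z | α.SameCycle x z}) ∧ Nat.card s = ℓ} :=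
    ⟨fun ⟨_, ⟨x, _⟩, _⟩ => isEmptyElim x⟩
  Nat.card_of_isEmpty

theorem card_sqrt_eq_prod_sr [Finite Ω] (α : Perm Ω) {N : ℕ} (hN : Nat.card Ω ≤ N) :
    Nat.card {τ : Perm Ω // τ * τ = α} = ∏ ℓ ∈ Finset.Icc 1 N, sr ℓ (orbitCount α ℓ) := by
  induction h : Nat.card Ω using Nat.strong_induction_on generalizing Ω with
  | _ n ih =>
  rcases isEmpty_or_nonempty Ω with hΩ | ⟨⟨x⟩⟩
  · have : Unique {τ : Perm Ω // τ * τ = α} :=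
      ⟨⟨⟨1, Subsingleton.elim _ _⟩⟩, fun _ => Subtype.ext (Subsingleton.elim _ _)⟩
    simp [orbitCount_of_isEmpty, sr_zero_right]
  classical
  have := Fintype.ofFinite Ω
  set p := minimalPeriod α x
  have hp : p ∈ Finset.Icc 1 N := Finset.Icc_subset_Icc_right hN (minimalPeriod_mem_Icc α x)
  have hroots {S : Set Ω} (hS : ∀ z, α z ∈ S ↔ z ∈ S) (k : ℕ) (hxS : x ∈ S)
      (hSp : ∀ z ∈ S, minimalPeriod α z = p) (hcard : Nat.card S = k * p) :
      Nat.card {σ // σ * σ = α.restrictCompl hS} =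
        sr p (orbitCount α p - k) * ∏ ℓ ∈ (Finset.Icc 1 N).erase p, sr ℓ (orbitCount α ℓ) := by
    rw [ih _ (h ▸ Finite.card_subtype_lt (not_not_intro hxS)) _
      ((Finite.card_subtype_le _).trans hN) rfl]
    exact prod_sr_orbitCount_restrictCompl hS hSp hcard hp
  rw [card_sqrt_eq_add_sum α x,
    hroots (S := {z | α.SameCycle x z}) _ 1 (SameCycle.refl α x)
      (fun _ => SameCycle.minimalPeriod_eq) (by rw [card_setOf_sameCycle, one_mul]),
    Finset.sum_congr rfl fun y hy =>
      have hy := (Finset.mem_filter.mp hy).2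
      hroots (S := {z | α.SameCycle x z} ∪ {z | α.SameCycle y z}) _ 2
        (Or.inl (SameCycle.refl α x))
        (fun _ hz => hz.elim SameCycle.minimalPeriod_eq
          fun h => (SameCycle.minimalPeriod_eq h).trans hy.2)
        (card_union_setOf_sameCycle hy.1 hy.2),
    Finset.sum_const, smul_eq_mul, card_filter_not_sameCycle_minimalPeriod_eq,
    ← Finset.mul_prod_erase _ _ hp]
  obtain ⟨m, hm⟩ : ∃ m, orbitCount α p = m + 1 :=
    ⟨_, (Nat.sub_add_cancel (one_le_orbitCount_minimalPeriod α x)).symm⟩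
  rw [hm, sr_succ, Nat.add_sub_cancel, show m + 1 - 2 = m - 1 by omega]
  split_ifs <;> ring

end Evaluation

end Equiv.Perm

theorem stmt_0_general {Ω : Type*} [Fintype Ω]
    (α : Equiv.Perm Ω) (a : ℕ → ℕ)
    (ha : ∀ ℓ : ℕ, a ℓ =
      Nat.card {s : Set Ω // (∃ x : Ω, s = Set.range fun t : ℤ => (α ^ t) x) ∧
        Nat.card s = ℓ}) :
    Nat.card {τ : Equiv.Perm Ω // τ * τ = α} =
      ∏ ℓ ∈ Finset.Icc 1 (Fintype.card Ω), sr ℓ (a ℓ) := by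
  rw [Equiv.Perm.card_sqrt_eq_prod_sr α Nat.card_eq_fintype_card.le]
  exact Finset.prod_congr rfl fun ℓ _ => by rw [ha ℓ]; rfl

/-- Let `α` be a permutation of a finite nonempty set `Ω`, and for each `ℓ` let `a ℓ`
be the number of orbits of size `ℓ` of the cyclic group generated by `α` acting on `Ω`.
Then the number of permutations `τ` with `τ² = α` is `∏_{ℓ=1}^{|Ω|} sr ℓ (a ℓ)`. -/
theorem stmt_0 {Ω : Type*} [Fintype Ω] [DecidableEq Ω] [Nonempty Ω]
    (α : Equiv.Perm Ω) (a : ℕ → ℕ)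
    (ha : ∀ ℓ : ℕ, a ℓ =
      Nat.card {s : Set Ω // (∃ x : Ω, s = Set.range fun t : ℤ => (α ^ t) x) ∧
        Nat.card s = ℓ}) :
    Nat.card {τ : Equiv.Perm Ω // τ * τ = α} =
      ∏ ℓ ∈ Finset.Icc 1 (Fintype.card Ω), sr ℓ (a ℓ) :=
  stmt_0_general α a ha
end

section
/- Let n be a positive integer and let ℝ_n = ℝ/nℤ denote the additive circle of real numbers modulo n. Define permutations of ℝ_n × ℝ_n by S₀(a, b) = (a + 1, b), S₁(a, b) = (a, b + 1), R₀(a, b) = (−a, b), R₁(a, b) = (a, −b), and X(a, b) = (b, a). Then every element of the subgroup Γ of the symmetric group of ℝ_n × ℝ_n generated by S₀, S₁, R₀, R₁, X can be written uniquely as S₀^h ∘ S₁^k ∘ R₀^p ∘ R₁^q ∘ X^s with h, k ∈ {0, 1, …, n − 1} and p, q, s ∈ {0, 1}; consequently Γ has exactly 8n² elements. -/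
set_option maxHeartbeats 2000000

namespace Stmt2Aux

noncomputable def cc (n : ℕ) : AddCircle (n : ℝ) := ((1 : ℝ) : AddCircle (n : ℝ))

lemma nsmul_cc (n m : ℕ) : m • cc n = ((m : ℝ) : AddCircle (n : ℝ)) := by
  unfold cc
  have h : ((1:ℝ) : AddCircle (n:ℝ))
      = (QuotientAddGroup.mk' (AddSubgroup.zmultiples ((n:ℕ):ℝ))) 1 := rfl
  rw [h, ← map_nsmul]
  simp

lemma n_smul_cc (n : ℕ) : n • cc n = 0 := by
  rw [nsmul_cc]
  exact AddCircle.coe_period (n : ℝ)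

lemma smul_cc_mod (n m : ℕ) : (m % n) • cc n = m • cc n := by
  conv_rhs => rw [← Nat.div_add_mod m n]
  rw [add_smul, mul_comm, mul_smul, n_smul_cc, smul_zero, zero_add]

lemma no_small (n : ℕ) (hn : 1 ≤ n) (r : ℝ) (h0 : 0 < r) (h1 : r < 1) :
    (r : AddCircle (n : ℝ)) ≠ 0 := by
  intro h
  rw [AddCircle.coe_eq_zero_iff] at h
  obtain ⟨m, hm⟩ := h
  rw [zsmul_eq_mul] at hm
  have hn' : (1:ℝ) ≤ (n:ℝ) := by exact_mod_cast hn
  rcases le_or_gt m 0 with h'|h'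
  · nlinarith [(Int.cast_nonpos.mpr h' : (m:ℝ) ≤ 0)]
  · have hm1 : (1:ℝ) ≤ (m:ℝ) := by exact_mod_cast h'
    nlinarith

lemma cc_inj (n : ℕ) (hn : 1 ≤ n) (x y : Fin n) (h : x.val • cc n = y.val • cc n) : x = y := by
  wlog hle : x.val ≤ y.val generalizing x y
  · exact (this y x h.symm (le_of_not_ge hle)).symm
  have hd : (y.val - x.val) • cc n = 0 := by
    have h2 : (y.val - x.val) • cc n + x.val • cc n = y.val • cc n := by
      rw [← add_smul, Nat.sub_add_cancel hle]
    rw [h] at h2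
    exact add_eq_right.mp h2
  rw [nsmul_cc, AddCircle.coe_eq_zero_iff] at hd
  obtain ⟨m, hm⟩ := hd
  rw [zsmul_eq_mul] at hm
  have hlt : ((y.val - x.val : ℕ) : ℝ) < n := by
    have := y.isLt
    have h3 : y.val - x.val < n := by omega
    exact_mod_cast h3
  have hge : (0:ℝ) ≤ ((y.val - x.val : ℕ) : ℝ) := by positivity
  have hn' : (1:ℝ) ≤ (n:ℝ) := by exact_mod_cast hn
  have hm0 : m = 0 := by
    rcases lt_trichotomy m 0 with h'|h'|h'
    · exfalso
      have hm1 : (m:ℝ) ≤ -1 := by exact_mod_cast Int.le_sub_one_of_lt h'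
      nlinarith
    · exact h'
    · exfalso
      have hm1 : (1:ℝ) ≤ (m:ℝ) := by exact_mod_cast h'
      nlinarith
  rw [hm0] at hm
  simp at hm
  have : y.val - x.val = 0 := by exact_mod_cast hm.symm
  exact Fin.ext (by omega)

def sel {α : Type*} (s : Fin 2) (a b : α) : α := if s = 0 then a else b
def sgn {α : Type*} [Neg α] (p : Fin 2) (a : α) : α := if p = 0 then a else -a

lemma smul_val_add {n : ℕ} [NeZero n] (x y : Fin n) :
    (((x + y : Fin n) : ℕ)) • cc n = (x : ℕ) • cc n + (y : ℕ) • cc n := by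
  rw [Fin.add_def]
  show ((x.val + y.val) % n) • cc n = _
  rw [smul_cc_mod, add_smul]

lemma smul_val_neg {n : ℕ} [NeZero n] (x : Fin n) :
    (((-x : Fin n) : ℕ)) • cc n = -((x : ℕ) • cc n) := by
  have h := smul_val_add (-x) x
  rw [neg_add_cancel] at h
  simp only [Fin.val_zero, zero_smul] at h
  exact eq_neg_of_add_eq_zero_left h.symm

variable {n : ℕ}
variable {S₀ S₁ R₀ R₁ X : Equiv.Perm (AddCircle (n : ℝ) × AddCircle (n : ℝ))}

lemma S₀_pow (hS₀ : ∀ a b : AddCircle (n : ℝ), S₀ (a, b) = (a + cc n, b)) :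
    ∀ (m : ℕ) (a b : AddCircle (n : ℝ)), (S₀ ^ m) (a, b) = (a + m • cc n, b) := by
  intro m
  induction m with
  | zero => intro a b; simp
  | succ m ih =>
    intro a b
    rw [pow_succ, Equiv.Perm.mul_apply, hS₀, ih]
    simp [Prod.ext_iff, succ_nsmul]
    abel

lemma S₁_pow (hS₁ : ∀ a b : AddCircle (n : ℝ), S₁ (a, b) = (a, b + cc n)) :
    ∀ (m : ℕ) (a b : AddCircle (n : ℝ)), (S₁ ^ m) (a, b) = (a, b + m • cc n) := by
  intro m
  induction m with
  | zero => intro a b; simp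
  | succ m ih =>
    intro a b
    rw [pow_succ, Equiv.Perm.mul_apply, hS₁, ih]
    simp [Prod.ext_iff, succ_nsmul]
    abel

lemma master
    (hS₀ : ∀ a b : AddCircle (n : ℝ), S₀ (a, b) = (a + cc n, b))
    (hS₁ : ∀ a b : AddCircle (n : ℝ), S₁ (a, b) = (a, b + cc n))
    (hR₀ : ∀ a b : AddCircle (n : ℝ), R₀ (a, b) = (-a, b))
    (hR₁ : ∀ a b : AddCircle (n : ℝ), R₁ (a, b) = (a, -b))
    (hX : ∀ a b : AddCircle (n : ℝ), X (a, b) = (b, a))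
    (h k : Fin n) (p q s : Fin 2) (a b : AddCircle (n : ℝ)) :
    (S₀ ^ (h : ℕ) * S₁ ^ (k : ℕ) * R₀ ^ (p : ℕ) * R₁ ^ (q : ℕ) * X ^ (s : ℕ)) (a, b)
      = (sgn p (sel s a b) + (h : ℕ) • cc n, sgn q (sel s b a) + (k : ℕ) • cc n) := by
  fin_cases p <;> fin_cases q <;> fin_cases s <;>
    simp [Equiv.Perm.mul_apply, S₀_pow hS₀, S₁_pow hS₁, hR₀, hR₁, hX, sel, sgn]

def F (S₀ S₁ R₀ R₁ X : Equiv.Perm (AddCircle (n : ℝ) × AddCircle (n : ℝ)))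
    (t : Fin n × Fin n × Fin 2 × Fin 2 × Fin 2) :
    Equiv.Perm (AddCircle (n : ℝ) × AddCircle (n : ℝ)) :=
  S₀ ^ (t.1 : ℕ) * S₁ ^ (t.2.1 : ℕ) * R₀ ^ (t.2.2.1 : ℕ) *
    R₁ ^ (t.2.2.2.1 : ℕ) * X ^ (t.2.2.2.2 : ℕ)

def comp [NeZero n] (t t' : Fin n × Fin n × Fin 2 × Fin 2 × Fin 2) :
    Fin n × Fin n × Fin 2 × Fin 2 × Fin 2 :=
  ⟨t.1 + sgn t.2.2.1 (sel t.2.2.2.2 t'.1 t'.2.1),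
   t.2.1 + sgn t.2.2.2.1 (sel t.2.2.2.2 t'.2.1 t'.1),
   t.2.2.1 + sel t.2.2.2.2 t'.2.2.1 t'.2.2.2.1,
   t.2.2.2.1 + sel t.2.2.2.2 t'.2.2.2.1 t'.2.2.1,
   t.2.2.2.2 + t'.2.2.2.2⟩

lemma comp_spec [NeZero n]
    (hS₀ : ∀ a b : AddCircle (n : ℝ), S₀ (a, b) = (a + cc n, b))
    (hS₁ : ∀ a b : AddCircle (n : ℝ), S₁ (a, b) = (a, b + cc n))
    (hR₀ : ∀ a b : AddCircle (n : ℝ), R₀ (a, b) = (-a, b))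
    (hR₁ : ∀ a b : AddCircle (n : ℝ), R₁ (a, b) = (a, -b))
    (hX : ∀ a b : AddCircle (n : ℝ), X (a, b) = (b, a))
    (t t' : Fin n × Fin n × Fin 2 × Fin 2 × Fin 2) :
    F S₀ S₁ R₀ R₁ X t * F S₀ S₁ R₀ R₁ X t' = F S₀ S₁ R₀ R₁ X (comp t t') := by
  obtain ⟨h, k, p, q, s⟩ := t
  obtain ⟨h', k', p', q', s'⟩ := t'
  apply Equiv.ext
  rintro ⟨a, b⟩
  rw [Equiv.Perm.mul_apply]
  show _ = F S₀ S₁ R₀ R₁ X _ (a, b)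
  unfold F comp
  rw [master hS₀ hS₁ hR₀ hR₁ hX, master hS₀ hS₁ hR₀ hR₁ hX, master hS₀ hS₁ hR₀ hR₁ hX]
  fin_cases p <;> fin_cases q <;> fin_cases s <;> fin_cases p' <;> fin_cases q' <;> fin_cases s' <;>
    simp [sel, sgn, smul_val_add, smul_val_neg, Prod.ext_iff] <;>
    constructor <;> abel

lemma F_inj [NeZero n] (hn : 1 ≤ n)
    (hS₀ : ∀ a b : AddCircle (n : ℝ), S₀ (a, b) = (a + cc n, b))
    (hS₁ : ∀ a b : AddCircle (n : ℝ), S₁ (a, b) = (a, b + cc n))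
    (hR₀ : ∀ a b : AddCircle (n : ℝ), R₀ (a, b) = (-a, b))
    (hR₁ : ∀ a b : AddCircle (n : ℝ), R₁ (a, b) = (a, -b))
    (hX : ∀ a b : AddCircle (n : ℝ), X (a, b) = (b, a)) :
    Function.Injective (F S₀ S₁ R₀ R₁ X) := by
  rintro ⟨h, k, p, q, s⟩ ⟨h', k', p', q', s'⟩ hFt
  set x : AddCircle (n : ℝ) := ((1/4 : ℝ) : AddCircle (n : ℝ)) with hxdef
  have hx0 : x ≠ 0 := no_small n hn _ (by norm_num) (by norm_num)
  have hs2 : x + x ≠ 0 := by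
    have h12 : ((1/2 : ℝ) : AddCircle (n : ℝ)) ≠ 0 := no_small n hn _ (by norm_num) (by norm_num)
    have : x + x = ((1/2 : ℝ) : AddCircle (n : ℝ)) := by
      rw [hxdef]
      norm_num
      rw [← QuotientAddGroup.mk_add]
      norm_num
    rw [this]
    exact h12
  have hxnx : x ≠ -x := fun hc => hs2 (by rw [eq_neg_iff_add_eq_zero] at hc; exact hc)
  have hnxx : -x ≠ x := fun hc => hxnx hc.symm
  have hnx0 : -x ≠ 0 := fun hc => hx0 (neg_eq_zero.mp hc)
  have h0x : (0 : AddCircle (n : ℝ)) ≠ x := hx0.symm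
  have h0nx : (0 : AddCircle (n : ℝ)) ≠ -x := hnx0.symm
  have e00 := DFunLike.congr_fun hFt ((0 : AddCircle (n : ℝ)), (0 : AddCircle (n : ℝ)))
  have ex0 := DFunLike.congr_fun hFt (x, (0 : AddCircle (n : ℝ)))
  have e0x := DFunLike.congr_fun hFt ((0 : AddCircle (n : ℝ)), x)
  simp only [F] at e00 ex0 e0x
  rw [master hS₀ hS₁ hR₀ hR₁ hX, master hS₀ hS₁ hR₀ hR₁ hX] at e00 ex0 e0x
  rw [Prod.mk.injEq] at e00 ex0 e0x
  obtain ⟨e1, e2⟩ := e00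
  simp only [sel, sgn, ite_self, neg_zero, zero_add] at e1 e2
  obtain rfl : h = h' := cc_inj n hn _ _ e1
  obtain rfl : k = k' := cc_inj n hn _ _ e2
  obtain ⟨f1, f2⟩ := ex0
  obtain ⟨g1, g2⟩ := e0x
  rw [add_left_inj] at f1 f2 g1 g2
  fin_cases p <;> fin_cases q <;> fin_cases s <;> fin_cases p' <;> fin_cases q' <;> fin_cases s' <;>
    simp_all [sel, sgn]

lemma S₀_order (hS₀ : ∀ a b : AddCircle (n : ℝ), S₀ (a, b) = (a + cc n, b)) : S₀ ^ n = 1 := by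
  apply Equiv.ext
  rintro ⟨a, b⟩
  rw [S₀_pow hS₀, n_smul_cc]
  simp

lemma S₁_order (hS₁ : ∀ a b : AddCircle (n : ℝ), S₁ (a, b) = (a, b + cc n)) : S₁ ^ n = 1 := by
  apply Equiv.ext
  rintro ⟨a, b⟩
  rw [S₁_pow hS₁, n_smul_cc]
  simp

lemma F_one [NeZero n] : F S₀ S₁ R₀ R₁ X (0, 0, 0, 0, 0) = 1 := by
  unfold F
  simp

lemma F_S₀ [NeZero n] (hS₀ : ∀ a b : AddCircle (n : ℝ), S₀ (a, b) = (a + cc n, b)) :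
    F S₀ S₁ R₀ R₁ X (1, 0, 0, 0, 0) = S₀ := by
  unfold F
  simp only [Fin.val_zero, pow_zero, mul_one, Fin.val_one']
  rw [← pow_eq_pow_mod 1 (S₀_order hS₀), pow_one]

lemma F_S₁ [NeZero n] (hS₁ : ∀ a b : AddCircle (n : ℝ), S₁ (a, b) = (a, b + cc n)) :
    F S₀ S₁ R₀ R₁ X (0, 1, 0, 0, 0) = S₁ := by
  unfold F
  simp only [Fin.val_zero, pow_zero, mul_one, one_mul, Fin.val_one']
  rw [← pow_eq_pow_mod 1 (S₁_order hS₁), pow_one]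

lemma F_R₀ [NeZero n] : F S₀ S₁ R₀ R₁ X (0, 0, 1, 0, 0) = R₀ := by
  unfold F; simp

lemma F_R₁ [NeZero n] : F S₀ S₁ R₀ R₁ X (0, 0, 0, 1, 0) = R₁ := by
  unfold F; simp

lemma F_X [NeZero n] : F S₀ S₁ R₀ R₁ X (0, 0, 0, 0, 1) = X := by
  unfold F; simp

lemma comp_inv [NeZero n] (t : Fin n × Fin n × Fin 2 × Fin 2 × Fin 2) :
    ∃ t', comp t t' = (0, 0, 0, 0, 0) := by
  obtain ⟨h, k, p, q, s⟩ := t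
  fin_cases s
  · exact ⟨(sgn p (-h), sgn q (-k), p, q, 0), by
      fin_cases p <;> fin_cases q <;> simp [comp, sel, sgn]⟩
  · exact ⟨(sgn q (-k), sgn p (-h), q, p, 1), by
      fin_cases p <;> fin_cases q <;> simp [comp, sel, sgn]⟩

variable [NeZero n]

lemma closure_eq
    (hS₀ : ∀ a b : AddCircle (n : ℝ), S₀ (a, b) = (a + cc n, b))
    (hS₁ : ∀ a b : AddCircle (n : ℝ), S₁ (a, b) = (a, b + cc n))
    (hR₀ : ∀ a b : AddCircle (n : ℝ), R₀ (a, b) = (-a, b))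
    (hR₁ : ∀ a b : AddCircle (n : ℝ), R₁ (a, b) = (a, -b))
    (hX : ∀ a b : AddCircle (n : ℝ), X (a, b) = (b, a)) :
    (Subgroup.closure {S₀, S₁, R₀, R₁, X} : Set (Equiv.Perm (AddCircle (n : ℝ) × AddCircle (n : ℝ))))
      = Set.range (F S₀ S₁ R₀ R₁ X) := by
  apply Set.Subset.antisymm
  · intro γ hγ
    have hex : ∃ t, γ = F S₀ S₁ R₀ R₁ X t := by
      refine Subgroup.closure_induction (p := fun g _ => ∃ t, g = F S₀ S₁ R₀ R₁ X t)
        ?_ ?_ ?_ ?_ hγ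
      · intro g hg
        rcases hg with rfl | rfl | rfl | rfl | rfl
        · exact ⟨_, (F_S₀ hS₀).symm⟩
        · exact ⟨_, (F_S₁ hS₁).symm⟩
        · exact ⟨_, F_R₀.symm⟩
        · exact ⟨_, F_R₁.symm⟩
        · exact ⟨_, F_X.symm⟩
      · exact ⟨_, F_one.symm⟩
      · rintro g g' _ _ ⟨t, rfl⟩ ⟨t', rfl⟩
        exact ⟨comp t t', comp_spec hS₀ hS₁ hR₀ hR₁ hX t t'⟩
      · rintro g _ ⟨t, rfl⟩
        obtain ⟨t', ht'⟩ := comp_inv t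
        refine ⟨t', ?_⟩
        have h1 : F S₀ S₁ R₀ R₁ X t * F S₀ S₁ R₀ R₁ X t' = 1 := by
          rw [comp_spec hS₀ hS₁ hR₀ hR₁ hX, ht', F_one]
        exact (inv_eq_of_mul_eq_one_right h1)
    obtain ⟨t, ht⟩ := hex
    exact ⟨t, ht.symm⟩
  · rintro γ ⟨t, rfl⟩
    have m₀ : S₀ ∈ Subgroup.closure {S₀, S₁, R₀, R₁, X} := Subgroup.subset_closure (by simp)
    have m₁ : S₁ ∈ Subgroup.closure {S₀, S₁, R₀, R₁, X} := Subgroup.subset_closure (by simp)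
    have m₂ : R₀ ∈ Subgroup.closure {S₀, S₁, R₀, R₁, X} := Subgroup.subset_closure (by simp)
    have m₃ : R₁ ∈ Subgroup.closure {S₀, S₁, R₀, R₁, X} := Subgroup.subset_closure (by simp)
    have m₄ : X ∈ Subgroup.closure {S₀, S₁, R₀, R₁, X} := Subgroup.subset_closure (by simp)
    exact mul_mem (mul_mem (mul_mem (mul_mem (pow_mem m₀ _) (pow_mem m₁ _)) (pow_mem m₂ _))
      (pow_mem m₃ _)) (pow_mem m₄ _)

end Stmt2Aux

/-- Let `n ≥ 1` and let `ℝ_n = ℝ/nℤ` (the additive circle).  With the permutations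
`S₀(a,b) = (a+1,b)`, `S₁(a,b) = (a,b+1)`, `R₀(a,b) = (-a,b)`, `R₁(a,b) = (a,-b)`,
`X(a,b) = (b,a)` of `ℝ_n × ℝ_n`, every element of the group they generate can be written
uniquely as `S₀^h S₁^k R₀^p R₁^q X^s` with `h, k ∈ {0,…,n-1}` and `p, q, s ∈ {0,1}`;
consequently the group has exactly `8n²` elements. -/
theorem stmt_2 (n : ℕ) (hn : 1 ≤ n)
    (S₀ S₁ R₀ R₁ X : Equiv.Perm (AddCircle (n : ℝ) × AddCircle (n : ℝ)))
    (hS₀ : ∀ a b : AddCircle (n : ℝ), S₀ (a, b) = (a + ((1 : ℝ) : AddCircle (n : ℝ)), b))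
    (hS₁ : ∀ a b : AddCircle (n : ℝ), S₁ (a, b) = (a, b + ((1 : ℝ) : AddCircle (n : ℝ))))
    (hR₀ : ∀ a b : AddCircle (n : ℝ), R₀ (a, b) = (-a, b))
    (hR₁ : ∀ a b : AddCircle (n : ℝ), R₁ (a, b) = (a, -b))
    (hX : ∀ a b : AddCircle (n : ℝ), X (a, b) = (b, a)) :
    (∀ γ ∈ Subgroup.closure {S₀, S₁, R₀, R₁, X},
      ∃! t : Fin n × Fin n × Fin 2 × Fin 2 × Fin 2,
        γ = S₀ ^ (t.1 : ℕ) * S₁ ^ (t.2.1 : ℕ) * R₀ ^ (t.2.2.1 : ℕ) *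
            R₁ ^ (t.2.2.2.1 : ℕ) * X ^ (t.2.2.2.2 : ℕ)) ∧
    Nat.card (Subgroup.closure {S₀, S₁, R₀, R₁, X}) = 8 * n ^ 2 := by
  haveI : NeZero n := ⟨by omega⟩
  have hS₀' : ∀ a b : AddCircle (n : ℝ), S₀ (a, b) = (a + Stmt2Aux.cc n, b) := hS₀
  have hS₁' : ∀ a b : AddCircle (n : ℝ), S₁ (a, b) = (a, b + Stmt2Aux.cc n) := hS₁
  have hcl := Stmt2Aux.closure_eq hS₀' hS₁' hR₀ hR₁ hX
  have hinj := Stmt2Aux.F_inj hn hS₀' hS₁' hR₀ hR₁ hX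
  constructor
  · intro γ hγ
    have hγ' : γ ∈ (Subgroup.closure {S₀, S₁, R₀, R₁, X} :
        Set (Equiv.Perm (AddCircle (n : ℝ) × AddCircle (n : ℝ)))) := hγ
    rw [hcl] at hγ'
    obtain ⟨t, rfl⟩ := hγ'
    refine ⟨t, rfl, ?_⟩
    intro t' ht'
    exact hinj ht'.symm
  · have e1 : Nat.card (Subgroup.closure {S₀, S₁, R₀, R₁, X}) =
        Nat.card (Set.range (Stmt2Aux.F S₀ S₁ R₀ R₁ X)) :=
      Nat.card_congr (Equiv.setCongr hcl)
    rw [e1, ← Nat.card_congr (Equiv.ofInjective _ hinj)]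
    simp [Nat.card_eq_fintype_card]
    ring
end

section
/- Let n ≥ 1 and let h, k ∈ {0, 1, …, n − 1} satisfy gcd(h, n) = gcd(k, n) = g, and set d = n/g. Then the number of permutations π of ℤ/nℤ with σ^k ∘ π = π ∘ σ^h equals g!·d^g. -/
lemma aux_coord (n g d a : ℕ) [NeZero n] [NeZero g] [NeZero d] (hgd : g * d = n)
    (hga : g ∣ a) (hord : addOrderOf ((a : ℕ) : ZMod n) = d) :
    ∃ F : ZMod g × ZMod d ≃ ZMod n, ∀ r s, F (r, s + 1) = F (r, s) + (a : ZMod n) := by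
  have hgn : g ∣ n := ⟨d, hgd.symm⟩
  set A : ZMod n := (a : ZMod n) with hA
  have hsmul : ∀ x y : ℕ, x ≡ y [MOD d] → x • A = y • A := by
    intro x y hxy
    rw [nsmul_eq_nsmul_iff_modEq, hord]
    exact hxy
  set f : ZMod g × ZMod d → ZMod n := fun p => (p.1.val : ZMod n) + p.2.val • A with hf
  have hmodeq : ∀ s : ZMod d, (s + 1).val ≡ s.val + 1 [MOD d] := by
    intro s
    rw [← ZMod.natCast_eq_natCast_iff]
    push_cast
    rw [ZMod.natCast_zmod_val, ZMod.natCast_zmod_val]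
  have hstep : ∀ r s, f (r, s + 1) = f (r, s) + A := by
    intro r s
    simp only [hf]
    rw [hsmul _ _ (hmodeq s), add_nsmul, one_nsmul, add_assoc]
  have hinj : Function.Injective f := by
    intro p q hpq
    simp only [hf] at hpq
    have h1 : p.1 = q.1 := by
      have := congrArg (ZMod.castHom hgn (ZMod g)) hpq
      have hA0 : (ZMod.castHom hgn (ZMod g)) A = 0 := by
        rw [hA, map_natCast, ZMod.natCast_eq_zero_iff]
        exact hga
      simp only [map_add, map_nsmul, hA0, smul_zero, add_zero, map_natCast,
        ZMod.natCast_zmod_val] at this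
      exact this
    rw [h1] at hpq
    have h2 : p.2.val • A = q.2.val • A := by
      exact add_left_cancel hpq
    have h3 : p.2.val ≡ q.2.val [MOD d] := by
      rw [nsmul_eq_nsmul_iff_modEq, hord] at h2
      exact h2
    have h4 : p.2 = q.2 := by
      rw [← ZMod.natCast_zmod_val p.2, ← ZMod.natCast_zmod_val q.2,
        ZMod.natCast_eq_natCast_iff]
      exact h3
    exact Prod.ext h1 h4
  have hbij : Function.Bijective f := by
    rw [Fintype.bijective_iff_injective_and_card]
    refine ⟨hinj, ?_⟩
    simp [ZMod.card, hgd]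
  exact ⟨Equiv.ofBijective f hbij, fun r s => hstep r s⟩

lemma aux_count (g d : ℕ) [NeZero g] [NeZero d] :
    Nat.card {ρ : Equiv.Perm (ZMod g × ZMod d) //
      ∀ p : ZMod g × ZMod d, ρ (p.1, p.2 + 1) = ((ρ p).1, (ρ p).2 + 1)} =
    g.factorial * d ^ g := by
  have key : ∀ (ρ : Equiv.Perm (ZMod g × ZMod d)),
      (∀ p : ZMod g × ZMod d, ρ (p.1, p.2 + 1) = ((ρ p).1, (ρ p).2 + 1)) →
      ∀ r s, ρ (r, s) = ((ρ (r, 0)).1, (ρ (r, 0)).2 + s) := by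
    intro ρ hρ r s
    have hnat : ∀ m : ℕ, ρ (r, (m : ZMod d)) = ((ρ (r, 0)).1, (ρ (r, 0)).2 + m) := by
      intro m
      induction m with
      | zero => simp
      | succ m ih =>
        push_cast
        rw [show ((m : ZMod d) + 1) = ((r, (m : ZMod d)).2 + 1) from rfl, hρ (r, (m : ZMod d)),
          ih, add_assoc]
    have := hnat s.val
    rwa [ZMod.natCast_zmod_val] at this
  -- build the equivalence with Perm (ZMod g) × (ZMod g → ZMod d)
  have E : {ρ : Equiv.Perm (ZMod g × ZMod d) //
      ∀ p : ZMod g × ZMod d, ρ (p.1, p.2 + 1) = ((ρ p).1, (ρ p).2 + 1)} ≃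
      Equiv.Perm (ZMod g) × (ZMod g → ZMod d) := by
    refine
      { toFun := fun ρ =>
          (Equiv.ofBijective (fun r => ((ρ : Equiv.Perm (ZMod g × ZMod d)) (r, 0)).1) ?_,
            fun r => ((ρ : Equiv.Perm (ZMod g × ZMod d)) (r, 0)).2)
        invFun := fun τc =>
          ⟨{ toFun := fun p => (τc.1 p.1, τc.2 p.1 + p.2)
             invFun := fun p => (τc.1.symm p.1, p.2 - τc.2 (τc.1.symm p.1))
             left_inv := by intro p; simp
             right_inv := by intro p; simp },
            by intro p; simp [add_assoc]⟩
        left_inv := ?_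
        right_inv := ?_ }
    · -- bijectivity of τ
      obtain ⟨ρ, hρ⟩ := ρ
      rw [← Finite.injective_iff_bijective]
      intro r r' hrr'
      simp only at hrr'
      have h1 : ρ (r, (ρ (r', 0)).2 - (ρ (r, 0)).2) = ρ (r', 0) := by
        rw [key ρ hρ r, hrr', add_sub_cancel]
      have := ρ.injective h1
      exact (Prod.ext_iff.mp this).1
    · rintro ⟨ρ, hρ⟩
      apply Subtype.ext
      apply Equiv.ext
      intro p
      simp only [Equiv.coe_fn_mk, Equiv.ofBijective_apply]
      rw [key ρ hρ p.1 p.2]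
    · rintro ⟨τ, c⟩
      apply Prod.ext
      · apply Equiv.ext
        intro r
        simp
      · funext r
        simp
  rw [Nat.card_congr E]
  simp [Nat.card_eq_fintype_card, Fintype.card_perm, ZMod.card]

/-- Let `n ≥ 1` and `h, k ∈ {0,…,n-1}` with `gcd h n = gcd k n = g`, and set `d = n/g`.
Then the number of permutations `π` of `ℤ/nℤ` with `σ^k ∘ π = π ∘ σ^h`, where
`σ : i ↦ i + 1`, equals `g! · d^g`. -/
theorem stmt_6 (n : ℕ) (hn : 1 ≤ n) (h k g : ℕ) (hh : h < n) (hk : k < n)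
    (hg : Nat.gcd h n = g) (hg' : Nat.gcd k n = g)
    (σ : Equiv.Perm (ZMod n)) (hσ : ∀ i, σ i = i + 1) :
    Nat.card {π : Equiv.Perm (ZMod n) // σ ^ k * π = π * σ ^ h} =
      g.factorial * (n / g) ^ g := by
  have hn0 : n ≠ 0 := Nat.one_le_iff_ne_zero.mp hn
  haveI : NeZero n := ⟨hn0⟩
  set d := n / g with hd
  have hgdvd : g ∣ n := hg ▸ Nat.gcd_dvd_right h n
  have hg0 : g ≠ 0 := by
    rintro rfl
    exact hn0 (Nat.eq_zero_of_zero_dvd hgdvd)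
  haveI : NeZero g := ⟨hg0⟩
  have hgd : g * d = n := Nat.mul_div_cancel' hgdvd
  have hd0 : d ≠ 0 := by
    rintro hd0
    rw [hd0, mul_zero] at hgd
    exact hn0 hgd.symm
  haveI : NeZero d := ⟨hd0⟩
  -- σ ^ m adds m
  have hpow : ∀ (m : ℕ) (x : ZMod n), (σ ^ m) x = x + (m : ZMod n) := by
    intro m
    induction m with
    | zero => simp
    | succ m ih =>
      intro x
      rw [pow_succ, Equiv.Perm.mul_apply, hσ, ih, Nat.cast_add, Nat.cast_one, add_assoc,
        add_comm (1 : ZMod n), ← add_assoc]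
  -- coordinates
  obtain ⟨Fd, hFd⟩ := aux_coord n g d h hgd (hg ▸ Nat.gcd_dvd_left h n)
    (by rw [ZMod.addOrderOf_coe h hn0, Nat.gcd_comm, hg])
  obtain ⟨Fc, hFc⟩ := aux_coord n g d k hgd (hg' ▸ Nat.gcd_dvd_left k n)
    (by rw [ZMod.addOrderOf_coe k hn0, Nat.gcd_comm, hg'])
  have E1 : {π : Equiv.Perm (ZMod n) // σ ^ k * π = π * σ ^ h} ≃
      {ρ : Equiv.Perm (ZMod g × ZMod d) //
        ∀ p : ZMod g × ZMod d, ρ (p.1, p.2 + 1) = ((ρ p).1, (ρ p).2 + 1)} := by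
    refine Equiv.subtypeEquiv
      { toFun := fun π => Fd.trans (π.trans Fc.symm)
        invFun := fun ρ => Fd.symm.trans (ρ.trans Fc)
        left_inv := fun π => Equiv.ext fun x => by
          simp [Equiv.trans_apply]
        right_inv := fun ρ => Equiv.ext fun x => by
          simp [Equiv.trans_apply] } ?_
    intro π
    simp only [Equiv.coe_fn_mk]
    constructor
    · intro hcond p
      have hcx : ∀ x : ZMod n, π (x + (h : ZMod n)) = π x + (k : ZMod n) := by
        intro x
        have := congrFun (congrArg (fun (e : Equiv.Perm (ZMod n)) => (e : ZMod n → ZMod n))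
          hcond) x
        simpa [Equiv.Perm.mul_apply, hpow] using this.symm
      show Fc.symm (π (Fd (p.1, p.2 + 1))) = _
      rw [Equiv.symm_apply_eq]
      have hq : Fc ((Fc.symm (π (Fd p))).1, (Fc.symm (π (Fd p))).2 + 1)
          = π (Fd p) + (k : ZMod n) := by
        rw [hFc, Prod.mk.eta, Equiv.apply_symm_apply]
      show π (Fd (p.1, p.2 + 1)) =
        Fc ((Fc.symm (π (Fd (p.1, p.2)))).1, (Fc.symm (π (Fd (p.1, p.2)))).2 + 1)
      rw [hFd, ← Prod.mk.eta (p := p), hq]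
      rw [Prod.mk.eta, hcx]
    · intro hcond
      ext x
      have hx : ∀ p : ZMod g × ZMod d, π (Fd (p.1, p.2 + 1)) = π (Fd p) + (k : ZMod n) := by
        intro p
        have h2 := congrArg Fc (hcond p)
        simp only [Equiv.trans_apply, Equiv.apply_symm_apply, hFc, Prod.mk.eta] at h2
        exact h2
      have hstep : ∀ x : ZMod n, π (x + (h : ZMod n)) = π x + (k : ZMod n) := by
        intro x
        have h3 := hx (Fd.symm x)
        rwa [hFd, Prod.mk.eta, Equiv.apply_symm_apply] at h3
      simp only [Equiv.Perm.mul_apply, hpow]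
      rw [hstep]
  rw [Nat.card_congr E1, aux_count g d]
end

section
/- Let n ≥ 1. Then Σ_{h=0}^{n−1} Σ_{k=0}^{n−1} |{π a permutation of ℤ/nℤ : σ^k ∘ π = π ∘ σ^h}| = Σ_{d | n} φ(d)²·(n/d)!·d^{n/d}, the sum on the right being over all positive divisors d of n. -/
open Equiv Finset

private lemma sigma_pow_apply {n : ℕ} (σ : Equiv.Perm (ZMod n)) (hσ : ∀ i, σ i = i + 1)
    (t : ℕ) (x : ZMod n) : (σ ^ t) x = x + (t : ZMod n) := by
  induction t with
  | zero => simp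
  | succ t ih =>
    rw [pow_succ', Equiv.Perm.mul_apply, ih, hσ]
    push_cast
    ring

private lemma sigma_orderOf {n : ℕ} [NeZero n] (σ : Equiv.Perm (ZMod n))
    (hσ : ∀ i, σ i = i + 1) : orderOf σ = n := by
  have hpow : ∀ t : ℕ, σ ^ t = 1 ↔ n ∣ t := by
    intro t
    constructor
    · intro ht
      have := congrArg (fun p : Equiv.Perm (ZMod n) => p 0) ht
      simp only [sigma_pow_apply σ hσ, Equiv.Perm.one_apply, zero_add] at this
      exact (ZMod.natCast_eq_zero_iff t n).mp this
    · intro ht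
      ext x
      simp [sigma_pow_apply σ hσ, (ZMod.natCast_eq_zero_iff t n).mpr ht]
  exact Nat.dvd_antisymm (orderOf_dvd_of_pow_eq_one ((hpow n).mpr dvd_rfl))
    ((hpow _).mp (pow_orderOf_eq_one σ))

/-- The "shift the second coordinate" permutation. -/
private def Tpm (g m : ℕ) : Equiv.Perm (ZMod g × ZMod m) :=
  Equiv.prodCongr (Equiv.refl (ZMod g)) (Equiv.addRight (1 : ZMod m))

private lemma Tpm_apply (g m : ℕ) (p : ZMod g × ZMod m) : Tpm g m p = (p.1, p.2 + 1) := rfl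

private lemma card_comm_T (g m : ℕ) [NeZero g] [NeZero m] :
    Nat.card {P : Equiv.Perm (ZMod g × ZMod m) // Tpm g m * P = P * Tpm g m} =
      g.factorial * m ^ g := by
  classical
  let Φ : Equiv.Perm (ZMod g) × (ZMod g → ZMod m) →
      {P : Equiv.Perm (ZMod g × ZMod m) // Tpm g m * P = P * Tpm g m} := fun fc =>
    ⟨⟨fun p => (fc.1 p.1, fc.2 p.1 + p.2),
      fun q => (fc.1.symm q.1, q.2 - fc.2 (fc.1.symm q.1)),
      fun p => by simp, fun q => by simp⟩, by
        ext p : 1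
        simp [Equiv.Perm.mul_apply, Tpm_apply, add_assoc]⟩
  have hΦval : ∀ fc p, ((Φ fc : Equiv.Perm (ZMod g × ZMod m)) p) = (fc.1 p.1, fc.2 p.1 + p.2) :=
    fun fc p => rfl
  have hΦbij : Function.Bijective Φ := by
    constructor
    · rintro ⟨f1, c1⟩ ⟨f2, c2⟩ hfc
      have hv : ∀ p : ZMod g × ZMod m, (f1 p.1, c1 p.1 + p.2) = ((f2 p.1 : ZMod g), c2 p.1 + p.2) := by
        intro p
        rw [← hΦval ⟨f1, c1⟩ p, ← hΦval ⟨f2, c2⟩ p, hfc]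
      have h0 : ∀ r : ZMod g, (f1 r, c1 r) = ((f2 r : ZMod g), c2 r) := by
        intro r
        simpa using hv (r, 0)
      ext r
      · exact congrArg Prod.fst (h0 r)
      · exact congrArg Prod.snd (h0 r)
    · rintro ⟨P, hP⟩
      have hcomm : ∀ p : ZMod g × ZMod m, P (p.1, p.2 + 1) = ((P p).1, (P p).2 + 1) := by
        intro p
        have := DFunLike.congr_fun hP p
        simp only [Equiv.Perm.mul_apply, Tpm_apply] at this
        exact this.symm
      have key : ∀ (r : ZMod g) (t : ZMod m),
          P (r, t) = ((P (r, 0)).1, (P (r, 0)).2 + t) := by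
        have keyN : ∀ (r : ZMod g) (j : ℕ),
            P (r, (j : ZMod m)) = ((P (r, 0)).1, (P (r, 0)).2 + (j : ZMod m)) := by
          intro r j
          induction j with
          | zero => simp
          | succ j ih =>
            have : ((j + 1 : ℕ) : ZMod m) = (j : ZMod m) + 1 := by push_cast; ring
            rw [this, hcomm (r, (j : ZMod m)), ih, add_assoc]
        intro r t
        have := keyN r t.val
        rwa [ZMod.natCast_zmod_val t] at this
      set f : ZMod g → ZMod g := fun r => (P (r, 0)).1 with hf
      have hfinj : Function.Injective f := by
        intro r1 r2 hr
        have hr' : (P (r1, 0)).1 = (P (r2, 0)).1 := hr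
        have : P (r1, (P (r2, 0)).2 - (P (r1, 0)).2) = P (r2, 0) := by
          rw [key r1, key r2, hr']
          simp
        have := P.injective this
        exact congrArg Prod.fst this
      have hfbij : Function.Bijective f := (Finite.injective_iff_bijective).mp hfinj
      refine ⟨⟨Equiv.ofBijective f hfbij, fun r => (P (r, 0)).2⟩, ?_⟩
      apply Subtype.ext
      ext p : 1
      rw [hΦval]
      rw [key p.1 p.2]
      rfl
  rw [← Nat.card_eq_of_bijective Φ hΦbij, Nat.card_eq_fintype_card, Fintype.card_prod,
    Fintype.card_perm, Fintype.card_fun, ZMod.card, ZMod.card]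

private lemma eFun_spec (n a g m : ℕ) [NeZero n] (hg0 : Nat.gcd n a = g) (hm0 : n / g = m) :
    ∃ e : ZMod g × ZMod m ≃ ZMod n,
      ∀ p, e (Tpm g m p) = e p + (a : ZMod n) := by
  subst hm0
  subst hg0
  have hn0 : 0 < n := Nat.pos_of_ne_zero (NeZero.ne n)
  set g := Nat.gcd n a with hg
  set m := n / g with hm
  have hgpos : 0 < g := Nat.gcd_pos_of_pos_left a hn0
  have hgdvd : g ∣ n := Nat.gcd_dvd_left n a
  have hga : g ∣ a := Nat.gcd_dvd_right n a
  have hmpos : 0 < m := Nat.div_pos (Nat.le_of_dvd hn0 hgdvd) hgpos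
  haveI : NeZero g := ⟨hgpos.ne'⟩
  haveI : NeZero m := ⟨hmpos.ne'⟩
  have hgm : g * m = n := Nat.mul_div_cancel' hgdvd
  -- a key congruence principle
  have hmul : ∀ x y : ℕ, x ≡ y [MOD m] → (a : ZMod n) * (x : ZMod n) = a * y := by
    intro x y hxy
    have h2 : a * x ≡ a * y [MOD a * m] := hxy.mul_left' a
    have h3 : n ∣ a * m := by
      rw [← hgm]
      exact Nat.mul_dvd_mul_right hga m
    have h4 : a * x ≡ a * y [MOD n] := h2.of_dvd h3
    have := (ZMod.natCast_eq_natCast_iff _ _ _).mpr h4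
    push_cast at this
    exact this
  let F : ZMod g × ZMod m → ZMod n := fun p =>
    ((p.1.val : ZMod n)) + (a : ZMod n) * (p.2.val : ZMod n)
  have hFinj : Function.Injective F := by
    rintro ⟨r1, t1⟩ ⟨r2, t2⟩ hF
    simp only [F] at hF
    have hcast : ((r1.val + a * t1.val : ℕ) : ZMod n) = ((r2.val + a * t2.val : ℕ) : ZMod n) := by
      push_cast
      exact hF
    have H : r1.val + a * t1.val ≡ r2.val + a * t2.val [MOD n] :=
      (ZMod.natCast_eq_natCast_iff _ _ _).mp hcast
    have h10 : a * t1.val ≡ 0 [MOD g] := Nat.modEq_zero_iff_dvd.mpr (hga.mul_right _)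
    have h20 : a * t2.val ≡ 0 [MOD g] := Nat.modEq_zero_iff_dvd.mpr (hga.mul_right _)
    have hr : r1.val ≡ r2.val [MOD g] := by
      calc r1.val ≡ r1.val + a * t1.val [MOD g] := by
            simpa using ((Nat.ModEq.refl r1.val).add h10.symm)
        _ ≡ r2.val + a * t2.val [MOD g] := H.of_dvd hgdvd
        _ ≡ r2.val [MOD g] := by simpa using ((Nat.ModEq.refl r2.val).add h20)
    have hrval : r1.val = r2.val := hr.eq_of_lt_of_lt (ZMod.val_lt r1) (ZMod.val_lt r2)
    have hreq : r1 = r2 := ZMod.val_injective g hrval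
    subst hreq
    have H' : a * t1.val ≡ a * t2.val [MOD n] := H.add_left_cancel' _
    have ht : t1.val ≡ t2.val [MOD n / Nat.gcd n a] := Nat.ModEq.cancel_left_div_gcd hn0 H'
    have htval : t1.val = t2.val := by
      refine Nat.ModEq.eq_of_lt_of_lt ?_ (ZMod.val_lt t1) (ZMod.val_lt t2)
      exact ht
    exact Prod.ext rfl (ZMod.val_injective m htval)
  have hcard : Fintype.card (ZMod g × ZMod m) = Fintype.card (ZMod n) := by
    rw [Fintype.card_prod, ZMod.card, ZMod.card, ZMod.card, hgm]
  have hFbij : Function.Bijective F :=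
    (Fintype.bijective_iff_injective_and_card F).mpr ⟨hFinj, hcard⟩
  refine ⟨Equiv.ofBijective F hFbij, ?_⟩
  rintro ⟨r, t⟩
  simp only [Equiv.ofBijective_apply, Tpm_apply, F]
  have hmod : (t + 1).val ≡ t.val + 1 [MOD m] := by
    calc (t + 1).val = (t.val + (1 : ZMod m).val) % m := ZMod.val_add t 1
      _ ≡ t.val + (1 : ZMod m).val [MOD m] := Nat.mod_modEq _ m
      _ ≡ t.val + 1 [MOD m] := by
          rw [ZMod.val_one_eq_one_mod]
          exact (Nat.ModEq.refl t.val).add (Nat.mod_modEq 1 m)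
  have := hmul _ _ hmod
  rw [this]
  push_cast
  ring

private lemma count_eq_of_gcd_eq (n : ℕ) [NeZero n] (σ : Equiv.Perm (ZMod n))
    (hσ : ∀ i, σ i = i + 1) (h k : ℕ) (hgcd : Nat.gcd n h = Nat.gcd n k) :
    Nat.card {π : Equiv.Perm (ZMod n) // σ ^ k * π = π * σ ^ h} =
      (Nat.gcd n h).factorial * (n / Nat.gcd n h) ^ (Nat.gcd n h) := by
  classical
  have hn0 : 0 < n := Nat.pos_of_ne_zero (NeZero.ne n)
  set g := Nat.gcd n h with hg
  set m := n / g with hm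
  obtain ⟨eh, heh⟩ := eFun_spec n h g m hg.symm hm.symm
  obtain ⟨ek, hek⟩ := eFun_spec n k g m hgcd.symm hm.symm
  have hgpos : 0 < g := Nat.gcd_pos_of_pos_left h hn0
  have hgdvd : g ∣ n := Nat.gcd_dvd_left n h
  have hmpos : 0 < m := Nat.div_pos (Nat.le_of_dvd hn0 hgdvd) hgpos
  haveI : NeZero g := ⟨hgpos.ne'⟩
  haveI : NeZero m := ⟨hmpos.ne'⟩
  -- σ^h ∘ eh = eh ∘ T  and  σ^k ∘ ek = ek ∘ T
  have hσh : ∀ p, (σ ^ h) (eh p) = eh (Tpm g m p) := by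
    intro p
    rw [sigma_pow_apply σ hσ, heh p]
  have hσk : ∀ p, (σ ^ k) (ek p) = ek (Tpm g m p) := by
    intro p
    rw [sigma_pow_apply σ hσ, hek p]
  -- conjugation equivalence
  let C : Equiv.Perm (ZMod g × ZMod m) ≃ Equiv.Perm (ZMod n) :=
    { toFun := fun P => (eh.symm.trans P).trans ek
      invFun := fun π => (eh.trans π).trans ek.symm
      left_inv := fun P => by apply Equiv.ext; intro p; simp
      right_inv := fun π => by apply Equiv.ext; intro x; simp }
  have hiff : ∀ P : Equiv.Perm (ZMod g × ZMod m),
      Tpm g m * P = P * Tpm g m ↔ σ ^ k * C P = C P * σ ^ h := by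
    intro P
    constructor
    · intro hc
      apply Equiv.ext
      intro x
      have hx : ∀ q, (Tpm g m) (P q) = P ((Tpm g m) q) := fun q => DFunLike.congr_fun hc q
      simp only [Equiv.Perm.mul_apply]
      show (σ ^ k) (ek (P (eh.symm x))) = ek (P (eh.symm ((σ ^ h) x)))
      rw [hσk (P (eh.symm x)), hx]
      refine congrArg ek (congrArg P ?_)
      have h1 := hσh (eh.symm x)
      rw [Equiv.apply_symm_apply] at h1
      rw [h1, Equiv.symm_apply_apply]
    · intro hc
      apply Equiv.ext
      intro p
      have hx : ∀ x, (σ ^ k) ((C P) x) = (C P) ((σ ^ h) x) := fun x => DFunLike.congr_fun hc x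
      simp only [Equiv.Perm.mul_apply]
      show (Tpm g m) (P p) = P ((Tpm g m) p)
      have h1 := hx (eh p)
      have h2 : (C P) (eh p) = ek (P p) := by simp [C]
      have h3 : (C P) ((σ ^ h) (eh p)) = ek (P (Tpm g m p)) := by
        rw [hσh p]
        show ek (P (eh.symm (eh (Tpm g m p)))) = ek (P (Tpm g m p))
        rw [Equiv.symm_apply_apply]
      rw [h2, hσk (P p), h3] at h1
      exact ek.injective h1
  have := Nat.card_congr (Equiv.subtypeEquiv (p := fun P => Tpm g m * P = P * Tpm g m)
    (q := fun π => σ ^ k * π = π * σ ^ h) C hiff)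
  rw [← this, card_comm_T g m]

private lemma count_eq_zero_of_gcd_ne (n : ℕ) [NeZero n] (σ : Equiv.Perm (ZMod n))
    (hσ : ∀ i, σ i = i + 1) (h k : ℕ) (hgcd : Nat.gcd n h ≠ Nat.gcd n k) :
    Nat.card {π : Equiv.Perm (ZMod n) // σ ^ k * π = π * σ ^ h} = 0 := by
  have hord : orderOf σ = n := sigma_orderOf σ hσ
  haveI : IsEmpty {π : Equiv.Perm (ZMod n) // σ ^ k * π = π * σ ^ h} := by
    refine ⟨fun x => ?_⟩
    obtain ⟨π, hπ⟩ := x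
    have hsc : SemiconjBy π (σ ^ h) (σ ^ k) := hπ.symm
    have hord2 : orderOf (σ ^ h) = orderOf (σ ^ k) := hsc.orderOf_eq π
    rw [orderOf_pow, orderOf_pow, hord] at hord2
    apply hgcd
    have hn0 : n ≠ 0 := NeZero.ne n
    have h1 : Nat.gcd n h = n / (n / Nat.gcd n h) :=
      (Nat.div_div_self (Nat.gcd_dvd_left n h) hn0).symm
    have h2 : Nat.gcd n k = n / (n / Nat.gcd n k) :=
      (Nat.div_div_self (Nat.gcd_dvd_left n k) hn0).symm
    rw [h1, h2, hord2]
  exact Nat.card_of_isEmpty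

/-- Let `n ≥ 1`.  Then
`Σ_{h=0}^{n-1} Σ_{k=0}^{n-1} |{π : σ^k ∘ π = π ∘ σ^h}| = Σ_{d ∣ n} φ(d)²·(n/d)!·d^{n/d}`,
where `σ : i ↦ i + 1` on `ℤ/nℤ` and `φ` is Euler's totient function. -/
theorem stmt_7 (n : ℕ) (hn : 1 ≤ n)
    (σ : Equiv.Perm (ZMod n)) (hσ : ∀ i, σ i = i + 1) :
    ∑ h ∈ Finset.range n, ∑ k ∈ Finset.range n,
        Nat.card {π : Equiv.Perm (ZMod n) // σ ^ k * π = π * σ ^ h} =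
      ∑ d ∈ n.divisors, d.totient ^ 2 * (n / d).factorial * d ^ (n / d) := by
  classical
  haveI : NeZero n := ⟨by omega⟩
  have hn0 : n ≠ 0 := NeZero.ne n
  -- step 1: rewrite the inner count
  have step1 : ∀ h ∈ Finset.range n, ∀ k ∈ Finset.range n,
      Nat.card {π : Equiv.Perm (ZMod n) // σ ^ k * π = π * σ ^ h} =
        if Nat.gcd n h = Nat.gcd n k then
          (Nat.gcd n h).factorial * (n / Nat.gcd n h) ^ (Nat.gcd n h) else 0 := by
    intro h _ k _
    split_ifs with hc
    · exact count_eq_of_gcd_eq n σ hσ h k hc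
    · exact count_eq_zero_of_gcd_ne n σ hσ h k hc
  rw [Finset.sum_congr rfl fun h hh => Finset.sum_congr rfl fun k hk => step1 h hh k hk]
  -- step 2: inner sum over k
  have step2 : ∀ h : ℕ, (∑ k ∈ Finset.range n,
      if Nat.gcd n h = Nat.gcd n k then
        (Nat.gcd n h).factorial * (n / Nat.gcd n h) ^ (Nat.gcd n h) else 0) =
      (n / Nat.gcd n h).totient *
        ((Nat.gcd n h).factorial * (n / Nat.gcd n h) ^ (Nat.gcd n h)) := by
    intro h
    rw [← Finset.sum_filter]
    rw [Finset.sum_const, smul_eq_mul]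
    congr 1
    rw [Nat.totient_div_of_dvd (Nat.gcd_dvd_left n h)]
    congr 1
    ext k
    simp only [Finset.mem_filter, Finset.mem_range]
    exact and_congr_right fun _ => eq_comm
  rw [Finset.sum_congr rfl fun h _ => step2 h]
  -- step 3: fiber the sum over divisors
  have hmaps : ∀ h ∈ Finset.range n, Nat.gcd n h ∈ n.divisors :=
    fun h _ => Nat.mem_divisors.mpr ⟨Nat.gcd_dvd_left n h, hn0⟩
  rw [← Finset.sum_fiberwise_of_maps_to' hmaps
    (fun d => (n / d).totient * (d.factorial * (n / d) ^ d))]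
  -- step 4: evaluate each fiber
  have step4 : ∀ d ∈ n.divisors,
      (∑ h ∈ Finset.range n with Nat.gcd n h = d,
        (n / d).totient * (d.factorial * (n / d) ^ d)) =
      (n / d).totient * ((n / d).totient * (d.factorial * (n / d) ^ d)) := by
    intro d hd
    rw [Finset.sum_const, smul_eq_mul]
    congr 1
    exact (Nat.totient_div_of_dvd (Nat.mem_divisors.mp hd).1).symm
  rw [Finset.sum_congr rfl step4]
  -- step 5: reindex the RHS by d ↦ n / d
  rw [← Nat.sum_div_divisors n (fun d => d.totient ^ 2 * (n / d).factorial * d ^ (n / d))]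
  refine Finset.sum_congr rfl fun d hd => ?_
  have hdvd : d ∣ n := (Nat.mem_divisors.mp hd).1
  rw [Nat.div_div_self hdvd hn0]
  ring
end

section
/- Let n ≥ 1. Then Σ_{h=0}^{n−1} Σ_{k=0}^{n−1} |{π a permutation of ℤ/nℤ : π = σ^k ∘ π⁻¹ ∘ σ^{−h}}| = n · Σ_{d | n} φ(d)·sr(d, n/d), the sum on the right being over all positive divisors d of n. -/
/-!
Writing `τ = π * σ ^ h`, the condition `π = σ ^ k * π⁻¹ * (σ ^ h)⁻¹` becomes `τ * τ = σ ^ (k + h)`,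
so the double sum is `n` times the total number of square roots of the translations `· + x` of
`ℤ/nℤ`. If `x` has order `d`, choosing coset representatives of `⟨x⟩` identifies `ℤ/nℤ` with
`(n / d points) × ℤ/dℤ`, on which `· + x` becomes `(r, t) ↦ (r, t + 1)`. A square root of this
commutes with it, hence is a shear `(r, t) ↦ (π r, a r + t)` with `π` an involution and
`a (π r) + a r = 1`. Each 2-cycle of `π` carries `d` such labellings and each fixed point one or
none according to the parity of `d`; as the involutions with `j` 2-cycles are counted by `ma`, the
total is `sr d (n / d)`. There are `φ d` elements of order `d`.
-/

open Finset Equiv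

namespace Equiv.Perm

variable {α : Type*} {π : Perm α}

theorem apply_apply_of_mul_self_eq_one (hπ : π * π = 1) (r : α) : π (π r) = r := by
  rw [← mul_apply, hπ, one_apply]

theorem card_support_eq_two_mul_card_filter_lt [Fintype α] [DecidableEq α] [LinearOrder α]
    (hπ : π * π = 1) : #π.support = 2 * #{r | r < π r} := by
  have hinv := apply_apply_of_mul_self_eq_one hπ
  have hswap : #{r | π r < r} = #{r | r < π r} :=
    card_nbij' π π (fun r hr => by simpa [hinv] using hr) (fun r hr => by simpa [hinv] using hr)
      (fun r _ => hinv r) (fun r _ => hinv r)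
  have hsplit : π.support = univ.filter (fun r => r < π r) ∪ univ.filter (fun r => π r < r) := by
    ext r
    simp only [mem_support, mem_union, mem_filter_univ]
    exact ne_iff_lt_or_gt.trans or_comm
  rw [hsplit, card_union_of_disjoint (disjoint_filter.mpr fun r _ h => h.asymm), hswap, two_mul]

section CycleType

variable [Fintype α] [DecidableEq α]

theorem cycleType_eq_replicate_of_mul_self_eq_one (hπ : π * π = 1) :
    π.cycleType = Multiset.replicate (#π.support / 2) 2 := by
  have htwo : ∀ n ∈ π.cycleType, n = 2 := fun n hn =>
    (Nat.le_of_dvd two_pos ((dvd_of_mem_cycleType hn).trans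
      (orderOf_dvd_of_pow_eq_one (by rwa [sq])))).antisymm (two_le_of_mem_cycleType hn)
  have hrep := Multiset.eq_replicate_card.mpr htwo
  have hsupp : #π.support = Multiset.card π.cycleType * 2 := by
    rw [← sum_cycleType]
    conv_lhs => rw [hrep]
    rw [Multiset.sum_replicate, smul_eq_mul]
  rw [hsupp, Nat.mul_div_cancel _ two_pos]
  exact hrep

theorem two_mul_card_support_div_two (hπ : π * π = 1) : 2 * (#π.support / 2) = #π.support := by
  have h := sum_cycleType π
  rw [cycleType_eq_replicate_of_mul_self_eq_one hπ, Multiset.sum_replicate, smul_eq_mul] at h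
  omega

theorem mul_self_eq_one_and_card_support_iff {j : ℕ} :
    π * π = 1 ∧ #π.support = 2 * j ↔ π.cycleType = Multiset.replicate j 2 := by
  constructor
  · rintro ⟨hπ, hsupp⟩
    rw [cycleType_eq_replicate_of_mul_self_eq_one hπ, hsupp, Nat.mul_div_cancel_left _ two_pos]
  · intro h
    refine ⟨?_, by rw [← sum_cycleType, h, Multiset.sum_replicate, smul_eq_mul, mul_comm]⟩
    rw [← sq, ← orderOf_dvd_iff_pow_eq_one, ← lcm_cycleType, h, Multiset.lcm_dvd]
    intro b hb
    rw [Multiset.eq_of_mem_replicate hb]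

theorem card_filter_mul_self_eq_one_card_support {j : ℕ} (hj : 2 * j ≤ Fintype.card α) :
    #{π : Perm α | π * π = 1 ∧ #π.support = 2 * j} = ma (Fintype.card α) j := by
  simp_rw [mul_self_eq_one_and_card_support_iff, card_of_cycleType, Multiset.sum_replicate,
    Multiset.prod_replicate, smul_eq_mul, mul_comm j 2]
  rw [if_pos ⟨hj, fun a ha => (Multiset.eq_of_mem_replicate ha).ge⟩, ma]
  congr 2
  rcases j.eq_zero_or_pos with rfl | hj0
  · simp
  · rw [Multiset.toFinset_replicate, if_neg hj0.ne', prod_singleton, Multiset.count_replicate_self]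

theorem sum_filter_mul_self_eq_one {M : Type*} [AddCommMonoid M] (f : ℕ → M) :
    ∑ π : Perm α with π * π = 1, f #π.support =
      ∑ j ∈ range (Fintype.card α / 2 + 1), ma (Fintype.card α) j • f (2 * j) := by
  have hmaps : ∀ π ∈ ({π | π * π = 1} : Finset (Perm α)),
      #π.support / 2 ∈ range (Fintype.card α / 2 + 1) := fun π _ =>
    mem_range_succ_iff.mpr (Nat.div_le_div_right (card_le_univ _))
  rw [← sum_fiberwise_of_maps_to hmaps]
  refine sum_congr rfl fun j hj => ?_
  have hfiber : ({π : Perm α | π * π = 1} : Finset _).filter (fun π => #π.support / 2 = j) =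
      ({π : Perm α | π * π = 1 ∧ #π.support = 2 * j} : Finset _) := by
    ext π
    simp only [mem_filter, mem_univ, true_and]
    exact and_congr_right fun hπ => by rw [← two_mul_card_support_div_two hπ]; omega
  rw [hfiber, sum_congr rfl (g := fun _ => f (2 * j)) fun π hπ => congrArg f (mem_filter.mp hπ).2.2,
    sum_const,
    card_filter_mul_self_eq_one_card_support (by have := mem_range_succ_iff.mp hj; omega)]

end CycleType

section Labels

variable [LinearOrder α] (hπ : π * π = 1) {M : Type*} [AddCommGroup M] (u : M)
  (f : {r // π r = r} → {y : M // y + y = u}) (g : {r // r < π r} → M)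

def labelsExtend (r : α) : M :=
  if hfix : π r = r then f ⟨r, hfix⟩
  else if hlt : r < π r then g ⟨r, hlt⟩
  else u - g ⟨π r, by
    rw [apply_apply_of_mul_self_eq_one hπ]; exact (lt_or_gt_of_ne hfix).resolve_right hlt⟩

variable {r : α}

theorem labelsExtend_of_eq (hfix : π r = r) : labelsExtend hπ u f g r = f ⟨r, hfix⟩ :=
  dif_pos hfix

theorem labelsExtend_of_lt (hlt : r < π r) : labelsExtend hπ u f g r = g ⟨r, hlt⟩ := by
  rw [labelsExtend, dif_neg hlt.ne', dif_pos hlt]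

theorem labelsExtend_of_gt (hgt : π r < r) :
    labelsExtend hπ u f g r =
      u - g ⟨π r, by rwa [apply_apply_of_mul_self_eq_one hπ]⟩ := by
  rw [labelsExtend, dif_neg hgt.ne, dif_neg hgt.not_gt]

theorem labelsExtend_apply_add (r : α) :
    labelsExtend hπ u f g (π r) + labelsExtend hπ u f g r = u := by
  have hinv := apply_apply_of_mul_self_eq_one hπ
  rcases lt_trichotomy r (π r) with hlt | hfix | hgt
  · rw [labelsExtend_of_gt hπ u f g (by rwa [hinv]), labelsExtend_of_lt hπ u f g hlt]
    simp only [hinv, sub_add_cancel]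
  · rw [← hfix, labelsExtend_of_eq hπ u f g hfix.symm]
    exact (f _).2
  · rw [labelsExtend_of_lt hπ u f g (by rwa [hinv]), labelsExtend_of_gt hπ u f g hgt]
    exact add_sub_cancel _ _

def labelsEquiv :
    {a : α → M // ∀ r, a (π r) + a r = u} ≃
      ({r // π r = r} → {y : M // y + y = u}) × ({r // r < π r} → M) where
  toFun a := (fun r => ⟨a.1 r, by simpa [r.2] using a.2 r⟩, fun r => a.1 r)
  invFun fg := ⟨labelsExtend hπ u fg.1 fg.2, labelsExtend_apply_add hπ u fg.1 fg.2⟩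
  left_inv a := by
    ext r
    rcases lt_trichotomy r (π r) with hlt | hfix | hgt
    · exact labelsExtend_of_lt hπ u _ _ hlt
    · exact labelsExtend_of_eq hπ u _ _ hfix.symm
    · exact (labelsExtend_of_gt hπ u _ _ hgt).trans (eq_sub_of_add_eq' (a.2 r)).symm
  right_inv fg := by
    ext r
    · exact labelsExtend_of_eq hπ u fg.1 fg.2 r.2
    · exact labelsExtend_of_lt hπ u fg.1 fg.2 r.2

end Labels

theorem card_labels [Fintype α] [DecidableEq α] {M : Type*} [AddCommGroup M] (hπ : π * π = 1)
    (u : M) :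
    Nat.card {a : α → M // ∀ r, a (π r) + a r = u} =
      Nat.card {y : M // y + y = u} ^ (Fintype.card α - #π.support) *
        Nat.card M ^ (#π.support / 2) := by
  -- any linear order serves to pick one point of each 2-cycle
  let _ : LinearOrder α := LinearOrder.lift' (Fintype.equivFin α) (Fintype.equivFin α).injective
  have hfix : Nat.card {r // π r = r} = Fintype.card α - #π.support := by
    rw [← sum_cycleType, ← card_fixedPoints, ← Nat.card_eq_fintype_card]
    rfl
  have hlt : Nat.card {r // r < π r} = #π.support / 2 := by
    rw [card_support_eq_two_mul_card_filter_lt hπ, Nat.mul_div_cancel_left _ two_pos,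
      Nat.card_eq_fintype_card, Fintype.card_subtype]
  rw [Nat.card_congr (labelsEquiv hπ u), Nat.card_prod, Nat.card_fun, Nat.card_fun, hfix, hlt]

end Equiv.Perm

theorem sr_eq_sum (l m : ℕ) :
    sr l m = ∑ j ∈ range (m / 2 + 1),
      ma m j * ((if l % 2 = 1 then 1 else 0) ^ (m - 2 * j) * l ^ j) := by
  rcases Nat.mod_two_eq_zero_or_one l with hl | hl
  · rw [sr, if_pos hl, if_neg (show ¬ l % 2 = 1 by omega)]
    rcases Nat.mod_two_eq_zero_or_one m with hm | hm
    · rw [if_neg (by omega), sum_eq_single (m / 2)]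
      · rw [show m - 2 * (m / 2) = 0 by omega, pow_zero, one_mul]
      · intro j hj hjm
        rw [zero_pow (by have := mem_range.mp hj; omega), zero_mul, mul_zero]
      · simp
    · rw [if_pos hm]
      refine (sum_eq_zero fun j hj => ?_).symm
      rw [zero_pow (by have := mem_range.mp hj; omega), zero_mul, mul_zero]
  · rw [sr, if_neg (by omega), if_pos hl]
    simp

theorem ZMod.card_add_self_eq_one (l : ℕ) :
    Nat.card {y : ZMod l // y + y = 1} = if l % 2 = 1 then 1 else 0 := by
  split_ifs with hl
  · have hunit : IsUnit (2 : ZMod l) := by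
      rw [← Nat.cast_ofNat, ZMod.isUnit_iff_coprime]
      exact Nat.coprime_two_left.mpr (Nat.odd_iff.mpr hl)
    refine Nat.card_eq_one_iff_unique.mpr ⟨⟨fun y z => Subtype.ext ?_⟩, ⟨⟨2⁻¹, ?_⟩⟩⟩
    · exact hunit.mul_left_cancel (by rw [two_mul, two_mul, y.2, z.2])
    · rw [← two_mul, ZMod.mul_inv_of_unit _ hunit]
  · have hdvd : 2 ∣ l := by omega
    have : IsEmpty {y : ZMod l // y + y = 1} := ⟨fun y => by
      have h := congrArg (ZMod.castHom hdvd (ZMod 2)) y.2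
      rw [map_add, map_one] at h
      revert h
      generalize ZMod.castHom hdvd (ZMod 2) y = z
      decide +revert⟩
    exact Nat.card_of_isEmpty

namespace Equiv.Perm

variable {α : Type*} {l : ℕ}

theorem apply_eq_of_commute_prodCongr_addRight_one [NeZero l] {τ : Perm (α × ZMod l)}
    (hτ : Commute τ (prodCongr (Equiv.refl α) (Equiv.addRight 1))) (r : α) (t : ZMod l) :
    τ (r, t) = ((τ (r, 0)).1, (τ (r, 0)).2 + t) := by
  obtain ⟨k, rfl⟩ := ZMod.natCast_zmod_surjective t
  induction k with
  | zero => simp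
  | succ k ih =>
    have hshift := congrArg (· (r, (k : ZMod l))) hτ.eq
    simp only [mul_apply, prodCongr_apply, Prod.map, refl_apply, coe_addRight, ih] at hshift
    push_cast
    rw [← add_assoc, ← hshift]

theorem mul_self_prodShear_addLeft {M : Type*} [AddGroup M] (π : Perm α) (a : α → M) :
    prodShear π (fun r => Equiv.addLeft (a r)) * prodShear π (fun r => Equiv.addLeft (a r)) =
      prodShear (π * π) (fun r => Equiv.addLeft (a (π r) + a r)) := by
  ext ⟨r, t⟩ <;> simp

noncomputable def decoratedInvolutionEquivMulSelfEq [NeZero l] :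
    {p : Perm α × (α → ZMod l) // p.1 * p.1 = 1 ∧ ∀ r, p.2 (p.1 r) + p.2 r = 1} ≃
      {τ : Perm (α × ZMod l) // τ * τ = prodCongr (Equiv.refl α) (Equiv.addRight 1)} := by
  refine Equiv.ofBijective
    (fun p => ⟨prodShear p.1.1 (fun r => Equiv.addLeft (p.1.2 r)), ?_⟩) ⟨?_, ?_⟩
  · rw [mul_self_prodShear_addLeft, p.2.1]
    ext ⟨r, t⟩ <;> simp [p.2.2, add_comm]
  · intro p q hpq
    have hval (r : α) := congrArg (fun τ : Perm (α × ZMod l) => τ (r, 0)) (congrArg Subtype.val hpq)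
    simp only [prodShear_apply, coe_addLeft, add_zero, Prod.mk.injEq] at hval
    exact Subtype.ext (Prod.ext (Equiv.ext fun r => (hval r).1) (funext fun r => (hval r).2))
  · rintro ⟨τ, hτ⟩
    have hcomm : Commute τ (prodCongr (Equiv.refl α) (Equiv.addRight 1)) :=
      hτ ▸ (Commute.refl τ).mul_right (Commute.refl τ)
    have hsq (r : α) :
        ((τ ((τ (r, 0)).1, 0)).1, (τ ((τ (r, 0)).1, 0)).2 + (τ (r, 0)).2) = (r, 1) := by
      have h : τ (τ (r, 0)) = (r, 1) := by rw [← mul_apply, hτ]; simp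
      rwa [← Prod.mk.eta (p := τ (r, 0)), apply_eq_of_commute_prodCongr_addRight_one hcomm] at h
    have hinv : Function.Involutive fun r => (τ (r, 0)).1 := fun r => congrArg Prod.fst (hsq r)
    refine ⟨⟨(hinv.toPerm, fun r => (τ (r, 0)).2), ⟨Equiv.ext hinv, fun r => ?_⟩⟩, ?_⟩
    · exact congrArg Prod.snd (hsq r)
    · ext ⟨r, t⟩ <;> simp [apply_eq_of_commute_prodCongr_addRight_one hcomm r t, add_comm]

theorem card_mul_self_eq_prodCongr_addRight_one [Fintype α] [DecidableEq α] [NeZero l] :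
    Nat.card {τ : Perm (α × ZMod l) // τ * τ = prodCongr (Equiv.refl α) (Equiv.addRight 1)} =
      sr l (Fintype.card α) := by
  set c := if l % 2 = 1 then 1 else 0
  calc _ = ∑ π : Perm α, Nat.card {a : α → ZMod l // π * π = 1 ∧ ∀ r, a (π r) + a r = 1} := by
        rw [← Nat.card_congr decoratedInvolutionEquivMulSelfEq]
        exact (Nat.card_congr (subtypeProdEquivSigmaSubtype fun (π : Perm α) (a : α → ZMod l) =>
          π * π = 1 ∧ ∀ r, a (π r) + a r = 1)).trans Nat.card_sigma
    _ = ∑ π : Perm α with π * π = 1,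
          c ^ (Fintype.card α - #π.support) * l ^ (#π.support / 2) := by
        rw [sum_filter]
        refine sum_congr rfl fun π _ => ?_
        split_ifs with hπ
        · simp only [hπ, true_and]
          rw [card_labels hπ, ZMod.card_add_self_eq_one, Nat.card_zmod]
        · simp [hπ]
    _ = sr l (Fintype.card α) := by
        rw [sum_filter_mul_self_eq_one (fun s => c ^ (Fintype.card α - s) * l ^ (s / 2)), sr_eq_sum]
        refine sum_congr rfl fun j _ => ?_
        rw [smul_eq_mul, Nat.mul_div_cancel_left _ two_pos]

end Equiv.Perm

theorem MulEquiv.card_mul_self_eq {G H : Type*} [Mul G] [Mul H] (φ : G ≃* H) (g : G) :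
    Nat.card {a : G // a * a = g} = Nat.card {b : H // b * b = φ g} :=
  Nat.card_congr <| φ.toEquiv.subtypeEquiv fun a => by simp [← map_mul, φ.injective.eq_iff]

namespace AddSubgroup

variable {G : Type*} [AddGroup G] [Finite G] (x : G)

instance : NeZero (addOrderOf x) := ⟨(addOrderOf_pos x).ne'⟩

noncomputable def quotientZMultiplesProdZModEquiv :
    (G ⧸ zmultiples x) × ZMod (addOrderOf x) ≃ G := by
  refine Equiv.ofBijective (fun p => p.1.out + p.2.val • x)
    ((Nat.bijective_iff_injective_and_card _).mpr ⟨?_, ?_⟩)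
  · rintro ⟨q, t⟩ ⟨q', t'⟩ h
    have hq (q : G ⧸ zmultiples x) (t : ZMod (addOrderOf x)) :
        ((q.out + t.val • x : G) : G ⧸ zmultiples x) = q := by
      rw [QuotientAddGroup.mk_add_of_mem _ (nsmul_mem_zmultiples x _), QuotientAddGroup.out_eq']
    obtain rfl : q = q' := (hq q t).symm.trans ((congrArg _ h).trans (hq q' t'))
    have ht := add_left_cancel h
    rw [nsmul_inj_mod, Nat.mod_eq_of_lt (ZMod.val_lt t), Nat.mod_eq_of_lt (ZMod.val_lt t')] at ht
    exact Prod.ext rfl (ZMod.val_injective _ ht)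
  · rw [Nat.card_prod, Nat.card_zmod, card_eq_card_quotient_mul_card_addSubgroup (zmultiples x),
      Nat.card_zmultiples]

theorem quotientZMultiplesProdZModEquiv_add_one (q : G ⧸ zmultiples x)
    (t : ZMod (addOrderOf x)) :
    quotientZMultiplesProdZModEquiv x (q, t + 1) =
      quotientZMultiplesProdZModEquiv x (q, t) + x := by
  change q.out + (t + 1).val • x = q.out + t.val • x + x
  rw [add_assoc, ← succ_nsmul, add_right_inj, nsmul_inj_mod, ZMod.val_add,
    ZMod.val_one_eq_one_mod, Nat.mod_mod, Nat.add_mod_mod]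

theorem permCongr_prodCongr_addRight_one :
    (quotientZMultiplesProdZModEquiv x).permCongr
      (prodCongr (Equiv.refl _) (Equiv.addRight 1)) = Equiv.addRight x := by
  ext g
  obtain ⟨⟨q, t⟩, rfl⟩ := (quotientZMultiplesProdZModEquiv x).surjective g
  simp [permCongr_apply, quotientZMultiplesProdZModEquiv_add_one]

theorem card_mul_self_eq_addRight :
    Nat.card {τ : Perm G // τ * τ = Equiv.addRight x} =
      sr (addOrderOf x) (Nat.card G / addOrderOf x) := by
  classical
  have := Fintype.ofFinite (G ⧸ zmultiples x)
  have hcard : Nat.card G / addOrderOf x = Fintype.card (G ⧸ zmultiples x) := by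
    rw [card_eq_card_quotient_mul_card_addSubgroup (zmultiples x), Nat.card_zmultiples,
      Nat.mul_div_cancel _ (addOrderOf_pos x), Nat.card_eq_fintype_card]
  rw [hcard, ← Perm.card_mul_self_eq_prodCongr_addRight_one, ← permCongr_prodCongr_addRight_one]
  exact (MulEquiv.card_mul_self_eq (quotientZMultiplesProdZModEquiv x).permCongrHom _).symm

end AddSubgroup

theorem card_eq_mul_inv_mul_inv {P : Type*} [Group P] (a b : P) :
    Nat.card {π : P // π = a * π⁻¹ * b⁻¹} = Nat.card {τ : P // τ * τ = a * b} :=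
  Nat.card_congr <| (Equiv.mulRight b).subtypeEquiv fun π => by
    rw [eq_mul_inv_iff_mul_eq, eq_mul_inv_iff_mul_eq, ← mul_left_inj b]
    simp only [coe_mulRight, mul_assoc]

theorem ZMod.sum_range_natCast_add {n : ℕ} [NeZero n] {M : Type*} [AddCommMonoid M]
    (F : ZMod n → M) (c : ZMod n) : ∑ k ∈ range n, F (k + c) = ∑ x, F x := by
  rw [← Equiv.sum_comp (Equiv.addRight c) F]
  exact sum_nbij' (↑) ZMod.val (by simp) (fun x _ => mem_range.mpr x.val_lt)
    (fun k hk => ZMod.val_cast_of_lt (mem_range.mp hk)) (fun x _ => ZMod.natCast_zmod_val x)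
    (fun _ _ => rfl)

theorem ZMod.sum_addOrderOf {n : ℕ} [NeZero n] {M : Type*} [AddCommMonoid M] (F : ℕ → M) :
    ∑ x : ZMod n, F (addOrderOf x) = ∑ d ∈ n.divisors, d.totient • F d := by
  have hmaps : ∀ x ∈ (univ : Finset (ZMod n)), addOrderOf x ∈ n.divisors := fun x _ =>
    Nat.mem_divisors.mpr ⟨by simpa using addOrderOf_dvd_card (x := x), NeZero.ne n⟩
  rw [← sum_fiberwise_of_maps_to hmaps]
  refine sum_congr rfl fun d hd => ?_
  rw [sum_congr rfl fun x hx => congrArg F (mem_filter.mp hx).2, sum_const,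
    IsAddCyclic.card_addOrderOf_eq_totient (by rw [ZMod.card]; exact Nat.dvd_of_mem_divisors hd)]

/-- Let `n ≥ 1`.  Then
`Σ_{h=0}^{n-1} Σ_{k=0}^{n-1} |{π : π = σ^k ∘ π⁻¹ ∘ σ^{-h}}| = n · Σ_{d ∣ n} φ(d)·sr(d, n/d)`,
where `σ : i ↦ i + 1` on `ℤ/nℤ` and `φ` is Euler's totient function. -/
theorem stmt_8 (n : ℕ) (hn : 1 ≤ n)
    (σ : Equiv.Perm (ZMod n)) (hσ : ∀ i, σ i = i + 1) :
    ∑ h ∈ Finset.range n, ∑ k ∈ Finset.range n,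
        Nat.card {π : Equiv.Perm (ZMod n) // π = σ ^ k * π⁻¹ * (σ ^ h)⁻¹} =
      n * ∑ d ∈ n.divisors, d.totient * sr d (n / d) := by
  have : NeZero n := ⟨by omega⟩
  obtain rfl : σ = Equiv.addRight 1 := Equiv.ext hσ
  set F : ZMod n → ℕ := fun x => sr (addOrderOf x) (n / addOrderOf x)
  have hsummand (h k : ℕ) :
      Nat.card {π : Perm (ZMod n) // π = Equiv.addRight 1 ^ k * π⁻¹ * (Equiv.addRight 1 ^ h)⁻¹} =
        F (k + h) := by
    rw [card_eq_mul_inv_mul_inv, nsmul_addRight, nsmul_addRight, ← addRight_add,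
      AddSubgroup.card_mul_self_eq_addRight, Nat.card_zmod, nsmul_one, nsmul_one, add_comm]
  simp_rw [hsummand, ZMod.sum_range_natCast_add F, sum_const, card_range, smul_eq_mul,
    F, ZMod.sum_addOrderOf (fun d => sr d (n / d)), smul_eq_mul]
end

section
/- Let n ≥ 2 be even. Then Σ_{h ∈ ℤ/nℤ} Σ_{k ∈ ℤ/nℤ} |{π a permutation of ℤ/nℤ : π(i) + π(h − i) = k for all i}| = (n²/4) · 2^{n/2} · ((n/2)! + (n/2 − 1)!). -/
open Equiv

def notE : Bool ≃ Bool := ⟨not, not, Bool.not_not, Bool.not_not⟩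

def rho (F Q : Type) : F ⊕ Q × Bool → F ⊕ Q × Bool :=
  Sum.map id (fun x => (x.1, !x.2))

lemma rho_inl {F Q : Type} (f : F) : rho F Q (Sum.inl f) = Sum.inl f := rfl
lemma rho_inr {F Q : Type} (q : Q) (b : Bool) :
    rho F Q (Sum.inr (q, b)) = Sum.inr (q, !b) := rfl

variable {F Q : Type} [Fintype F] [DecidableEq F] [Fintype Q] [DecidableEq Q]

def Phi (p : Perm F × Perm Q × (Q → Bool)) : Perm (F ⊕ Q × Bool) :=
  Equiv.sumCongr p.1 (Equiv.prodShear p.2.1 (fun q => if p.2.2 q then Equiv.refl Bool else notE))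

omit [Fintype F] [DecidableEq F] [Fintype Q] [DecidableEq Q]

lemma Phi_apply_inl (p : Perm F × Perm Q × (Q → Bool)) (f : F) :
    Phi p (Sum.inl f) = Sum.inl (p.1 f) := rfl

lemma Phi_apply_inr (p : Perm F × Perm Q × (Q → Bool)) (q : Q) (b : Bool) :
    Phi p (Sum.inr (q, b)) = Sum.inr (p.2.1 q, cond b (p.2.2 q) (!(p.2.2 q))) := by
  simp only [Phi, Equiv.sumCongr_apply, Sum.map_inr, Equiv.prodShear_apply]
  cases hb : p.2.2 q <;> cases b <;> simp [notE, hb]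

lemma Phi_comm (p : Perm F × Perm Q × (Q → Bool)) (x : F ⊕ Q × Bool) :
    Phi p (rho F Q x) = rho F Q (Phi p x) := by
  rcases x with f | ⟨q, b⟩
  · rfl
  · rw [rho_inr, Phi_apply_inr, Phi_apply_inr, rho_inr]
    cases b <;> simp

omit [Fintype F] [DecidableEq F] [Fintype Q] [DecidableEq Q] in
lemma Phi_surj_aux (π : Perm (F ⊕ Q × Bool)) (hπ : ∀ x, π (rho F Q x) = rho F Q (π x)) :
    (∀ f : F, ∃ f', π (Sum.inl f) = Sum.inl f') ∧
    (∀ x : Q × Bool, ∃ y : Q × Bool, π (Sum.inr x) = Sum.inr y) := by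
  constructor
  · intro f
    have h1 : π (Sum.inl f) = rho F Q (π (Sum.inl f)) := by
      have := hπ (Sum.inl f); rw [rho_inl] at this; exact this
    rcases hx : π (Sum.inl f) with f' | ⟨q, b⟩
    · exact ⟨f', rfl⟩
    · rw [hx, rho_inr] at h1
      simp at h1
  · rintro ⟨q, b⟩
    rcases hx : π (Sum.inr (q, b)) with f' | y
    · exfalso
      have h1 := hπ (Sum.inr (q, b))
      rw [rho_inr, hx, rho_inl] at h1
      have h2 : Sum.inr (α := F) (q, !b) = Sum.inr (q, b) := π.injective (h1.trans hx.symm)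
      simp at h2
    · exact ⟨y, rfl⟩

section
variable [Fintype F] [DecidableEq F] [Fintype Q] [DecidableEq Q]

lemma model_card :
    Nat.card {π : Perm (F ⊕ Q × Bool) // ∀ x, π (rho F Q x) = rho F Q (π x)}
      = (Fintype.card F).factorial * ((Fintype.card Q).factorial * 2 ^ (Fintype.card Q)) := by
  have hbij : Function.Bijective
      (fun p : Perm F × Perm Q × (Q → Bool) =>
        (⟨Phi p, Phi_comm p⟩ : {π : Perm (F ⊕ Q × Bool) // ∀ x, π (rho F Q x) = rho F Q (π x)})) := by
    constructor
    · intro p p' h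
      have h' : ∀ x, Phi p x = Phi p' x := fun x =>
        congrFun (congrArg _ (congrArg Subtype.val h)) x
      have h1 : p.1 = p'.1 := by
        ext f
        have := h' (Sum.inl f)
        rw [Phi_apply_inl, Phi_apply_inl] at this
        exact Sum.inl.inj this
      have hqt : ∀ q, (p.2.1 q, p.2.2 q) = (p'.2.1 q, p'.2.2 q) := by
        intro q
        have := h' (Sum.inr (q, true))
        rw [Phi_apply_inr, Phi_apply_inr] at this
        simpa using Sum.inr.inj this
      have h2 : p.2.1 = p'.2.1 := by
        ext q; exact congrArg Prod.fst (hqt q)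
      have h3 : p.2.2 = p'.2.2 := by
        funext q; exact congrArg Prod.snd (hqt q)
      exact Prod.ext h1 (Prod.ext h2 h3)
    · rintro ⟨π, hπ⟩
      obtain ⟨hL, hR⟩ := Phi_surj_aux π hπ
      choose u hu using hL
      choose y hy using hR
      have hfg : ∀ q : Q, π (Sum.inr (q, true)) = Sum.inr ((y (q, true)).1, (y (q, true)).2) := by
        intro q; rw [hy]
      have hfalse : ∀ q : Q, π (Sum.inr (q, false)) = Sum.inr ((y (q, true)).1, !(y (q, true)).2) := by
        intro q
        have h1 := hπ (Sum.inr (q, true))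
        rw [rho_inr, hfg q, rho_inr] at h1
        simpa using h1
      have hu_inj : Function.Injective u := by
        intro f f' hff
        have : π (Sum.inl f) = π (Sum.inl f') := by rw [hu, hu, hff]
        simpa using π.injective this
      have hfq_inj : Function.Injective (fun q => (y (q, true)).1) := by
        intro q q' hqq
        simp only at hqq
        by_cases hg' : (y (q, true)).2 = (y (q', true)).2
        · have : π (Sum.inr (q, true)) = π (Sum.inr (q', true)) := by
            rw [hfg, hfg, hqq, hg']
          simpa using π.injective this
        · have hg'' : (y (q', true)).2 = !((y (q, true)).2) := by
            cases hb : (y (q, true)).2 <;> cases hb' : (y (q', true)).2 <;>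
              simp only [hb, hb'] at hg' ⊢ <;> first | exact absurd trivial hg' | decide
          have : π (Sum.inr (q, true)) = π (Sum.inr (q', false)) := by
            rw [hfg, hfalse, hqq, hg'', Bool.not_not]
          have := π.injective this
          simp at this
      refine ⟨⟨Equiv.ofBijective u (Finite.injective_iff_bijective.mp hu_inj),
        Equiv.ofBijective _ (Finite.injective_iff_bijective.mp hfq_inj),
        fun q => (y (q, true)).2⟩, ?_⟩
      apply Subtype.ext
      apply Equiv.ext
      intro x
      rcases x with f | ⟨q, b⟩
      · rw [Phi_apply_inl, hu]; rfl
      · cases b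
        · rw [Phi_apply_inr, hfalse]; rfl
        · rw [Phi_apply_inr, hfg]; rfl
  rw [← Nat.card_congr (Equiv.ofBijective _ hbij)]
  simp [Nat.card_eq_fintype_card, Fintype.card_perm, Fintype.card_fun]
end

lemma card_intertwine {α β : Type} (e : α ≃ β) (σ τ : α → α) (σ' τ' : β → β)
    (hσ : ∀ a, e (σ a) = σ' (e a)) (hτ : ∀ a, e (τ a) = τ' (e a)) :
    Nat.card {π : Perm α // ∀ i, π (σ i) = τ (π i)}
      = Nat.card {π : Perm β // ∀ i, π (σ' i) = τ' (π i)} := by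
  apply Nat.card_congr
  refine Equiv.subtypeEquiv e.permCongr (fun π => ?_)
  constructor
  · intro h j
    have h1 : e.symm (σ' j) = σ (e.symm j) := by
      apply e.injective; rw [hσ, e.apply_symm_apply, e.apply_symm_apply]
    simp only [Equiv.permCongr_apply, h1, h, hτ]
  · intro h i
    have := h (e i)
    simp only [Equiv.permCongr_apply, e.symm_apply_apply] at this
    rw [← hσ, e.symm_apply_apply] at this
    rw [← hτ] at this
    exact e.injective this

lemma card_translate {n : ℕ} (h k a c : ZMod n) :
    Nat.card {π : Perm (ZMod n) // ∀ i, π i + π ((h + 2*a) - i) = k + 2*c}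
      = Nat.card {π : Perm (ZMod n) // ∀ i, π i + π (h - i) = k} := by
  apply Nat.card_congr
  refine ⟨fun π => ⟨((Equiv.addRight a).trans π.1).trans (Equiv.addRight (-c)), ?_⟩,
    fun π => ⟨((Equiv.addRight (-a)).trans π.1).trans (Equiv.addRight c), ?_⟩, ?_, ?_⟩
  · obtain ⟨π, hπ⟩ := π
    intro i
    simp only [Equiv.trans_apply, Equiv.coe_addRight]
    have h2 : h - i + a = (h + 2*a) - (i + a) := by ring
    rw [h2]
    have := hπ (i + a)
    linear_combination this
  · obtain ⟨π, hπ⟩ := π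
    intro i
    simp only [Equiv.trans_apply, Equiv.coe_addRight]
    have h2 : (h + 2*a) - i + -a = h - (i + -a) := by ring
    rw [h2]
    have := hπ (i + -a)
    linear_combination this
  · intro π
    apply Subtype.ext
    apply Equiv.ext
    intro i
    simp [Equiv.addRight]
  · intro π
    apply Subtype.ext
    apply Equiv.ext
    intro i
    simp [Equiv.addRight]

lemma base01 (n : ℕ) (hd : 2 ∣ n) :
    Nat.card {π : Perm (ZMod n) // ∀ i, π i + π (0 - i) = 1} = 0 := by
  have : IsEmpty {π : Perm (ZMod n) // ∀ i, π i + π (0 - i) = 1} := by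
    constructor
    rintro ⟨π, hπ⟩
    have h0 := hπ 0
    rw [sub_self] at h0
    have h1 := congrArg (ZMod.castHom hd (ZMod 2)) h0
    rw [map_add, map_one] at h1
    have h2 : ∀ x : ZMod 2, x + x = 0 := by decide
    rw [h2] at h1
    exact absurd h1 (by decide)
  exact Nat.card_of_isEmpty

lemma base10 (n : ℕ) (hd : 2 ∣ n) :
    Nat.card {π : Perm (ZMod n) // ∀ i, π i + π (1 - i) = 0} = 0 := by
  have : IsEmpty {π : Perm (ZMod n) // ∀ i, π i + π (1 - i) = 0} := by
    constructor
    rintro ⟨π, hπ⟩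
    have h0 := hπ (π.symm 0)
    rw [Equiv.apply_symm_apply] at h0
    have h3 : π (1 - π.symm 0) = π (π.symm 0) := by
      rw [Equiv.apply_symm_apply]
      linear_combination h0
    have h4 : 1 - π.symm 0 = π.symm 0 := π.injective h3
    have h5 : (1 : ZMod n) = π.symm 0 + π.symm 0 := by linear_combination h4
    have h1 := congrArg (ZMod.castHom hd (ZMod 2)) h5
    rw [map_add, map_one] at h1
    have h2 : ∀ x : ZMod 2, x + x = 0 := by decide
    rw [h2] at h1
    exact absurd h1 (by decide)
  exact Nat.card_of_isEmpty

section E0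
variable (n m' : ℕ)

def v0 : Bool ⊕ Fin m' × Bool → ℕ :=
  Sum.elim (fun b => cond b (m' + 1) 0)
    (fun x => cond x.2 (x.1.val + 1) (n - (x.1.val + 1)))

def E0 : Bool ⊕ Fin m' × Bool → ZMod n := fun x => ((v0 n m' x : ℕ) : ZMod n)

lemma v0_lt (hn : n = 2 * m' + 2) : ∀ x, v0 n m' x < n := by
  rintro (b | ⟨a, c⟩)
  · cases b <;> simp only [v0, Sum.elim_inl, Bool.cond_false, Bool.cond_true] <;> omega
  · have := a.isLt
    cases c <;> simp only [v0, Sum.elim_inr, Bool.cond_false, Bool.cond_true] <;> omega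

lemma v0_inj (hn : n = 2 * m' + 2) : Function.Injective (v0 n m') := by
  rintro (b | ⟨a, c⟩) (b' | ⟨a', c'⟩) hxy
  · cases b <;> cases b' <;>
      simp only [v0, Sum.elim_inl, Bool.cond_false, Bool.cond_true] at hxy <;>
      first | rfl | omega
  · exfalso
    have := a'.isLt
    cases b <;> cases c' <;>
      simp only [v0, Sum.elim_inl, Sum.elim_inr, Bool.cond_false, Bool.cond_true] at hxy <;> omega
  · exfalso
    have := a.isLt
    cases b' <;> cases c <;>
      simp only [v0, Sum.elim_inl, Sum.elim_inr, Bool.cond_false, Bool.cond_true] at hxy <;> omega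
  · have h1 := a.isLt
    have h2 := a'.isLt
    cases c <;> cases c' <;>
      simp only [v0, Sum.elim_inr, Bool.cond_false, Bool.cond_true] at hxy
    · have : a = a' := Fin.ext (by omega)
      rw [this]
    · exfalso; omega
    · exfalso; omega
    · have : a = a' := Fin.ext (by omega)
      rw [this]

lemma E0_bij (hn : n = 2 * m' + 2) : Function.Bijective (E0 n m') := by
  have : NeZero n := ⟨by omega⟩
  rw [Fintype.bijective_iff_injective_and_card]
  constructor
  · intro x y hxy
    apply v0_inj n m' hn
    have h1 := (ZMod.natCast_eq_natCast_iff _ _ _).mp hxy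
    rwa [Nat.ModEq, Nat.mod_eq_of_lt (v0_lt n m' hn x), Nat.mod_eq_of_lt (v0_lt n m' hn y)] at h1
  · simp only [Fintype.card_sum, Fintype.card_prod, Fintype.card_bool, Fintype.card_fin, ZMod.card]
    omega

lemma key0 (n : ℕ) (s t : ℕ) (hst : s + t = n) : ((s : ℕ) : ZMod n) = 0 - ((t : ℕ) : ZMod n) := by
  rw [zero_sub, eq_neg_iff_add_eq_zero, ← Nat.cast_add, hst, ZMod.natCast_self]

lemma E0_comm (hn : n = 2 * m' + 2) :
    ∀ x, E0 n m' (rho Bool (Fin m') x) = 0 - E0 n m' x := by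
  rintro (b | ⟨a, c⟩)
  · rw [rho_inl]
    cases b
    · simp [E0, v0]
    · simp only [E0, v0, Sum.elim_inl, Bool.cond_true]
      exact key0 n _ _ (by omega)
  · rw [rho_inr]
    have := a.isLt
    cases c
    · simp only [E0, v0, Sum.elim_inr, Bool.cond_true, Bool.cond_false, Bool.not_false]
      exact key0 n _ _ (by omega)
    · simp only [E0, v0, Sum.elim_inr, Bool.cond_true, Bool.cond_false, Bool.not_true]
      exact key0 n _ _ (by omega)

lemma base00 (hn : n = 2 * m' + 2) :
    Nat.card {π : Perm (ZMod n) // ∀ i, π i + π (0 - i) = 0}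
      = 2 * (m'.factorial * 2 ^ m') := by
  have step1 : Nat.card {π : Perm (ZMod n) // ∀ i, π i + π (0 - i) = 0}
      = Nat.card {π : Perm (ZMod n) // ∀ i, π ((fun j : ZMod n => 0 - j) i)
          = (fun j : ZMod n => 0 - j) (π i)} := by
    apply Nat.card_congr
    apply Equiv.subtypeEquivRight
    intro π
    constructor
    · intro H i
      simp only [eq_sub_iff_add_eq, add_comm]
      exact H i
    · intro H i
      have := H i
      simp only [eq_sub_iff_add_eq] at this
      linear_combination this
  have hcomm : ∀ x, (Equiv.ofBijective _ (E0_bij n m' hn)) (rho Bool (Fin m') x)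
      = (fun j : ZMod n => 0 - j) ((Equiv.ofBijective _ (E0_bij n m' hn)) x) :=
    E0_comm n m' hn
  have step2 := card_intertwine (Equiv.ofBijective _ (E0_bij n m' hn))
    (rho Bool (Fin m')) (rho Bool (Fin m'))
    (fun j : ZMod n => 0 - j) (fun j : ZMod n => 0 - j) hcomm hcomm
  rw [step1, ← step2, model_card]
  simp [Nat.factorial]

end E0

section E1
variable (n m' : ℕ)

def v1 : Empty ⊕ Fin (m' + 1) × Bool → ℕ :=
  Sum.elim Empty.elim
    (fun x => cond x.2 (x.1.val + 1) (if x.1.val = 0 then 0 else n - x.1.val))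

def E1 : Empty ⊕ Fin (m' + 1) × Bool → ZMod n := fun x => ((v1 n m' x : ℕ) : ZMod n)

lemma v1_lt (hn : n = 2 * m' + 2) : ∀ x, v1 n m' x < n := by
  rintro (e | ⟨a, c⟩)
  · exact e.elim
  · have := a.isLt
    cases c <;> simp only [v1, Sum.elim_inr, Bool.cond_false, Bool.cond_true]
    · split <;> omega
    · omega

lemma v1_inj (hn : n = 2 * m' + 2) : Function.Injective (v1 n m') := by
  rintro (e | ⟨a, c⟩) (e' | ⟨a', c'⟩) hxy
  · exact e.elim
  · exact e.elim
  · exact e'.elim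
  · have h1 := a.isLt
    have h2 := a'.isLt
    cases c <;> cases c' <;>
      simp only [v1, Sum.elim_inr, Bool.cond_false, Bool.cond_true] at hxy
    · have : a = a' := by
        apply Fin.ext
        split at hxy <;> split at hxy <;> omega
      rw [this]
    · exfalso; split at hxy <;> omega
    · exfalso; split at hxy <;> omega
    · have : a = a' := Fin.ext (by omega)
      rw [this]

lemma E1_bij (hn : n = 2 * m' + 2) : Function.Bijective (E1 n m') := by
  have : NeZero n := ⟨by omega⟩
  rw [Fintype.bijective_iff_injective_and_card]
  constructor
  · intro x y hxy
    apply v1_inj n m' hn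
    have h1 := (ZMod.natCast_eq_natCast_iff _ _ _).mp hxy
    rwa [Nat.ModEq, Nat.mod_eq_of_lt (v1_lt n m' hn x), Nat.mod_eq_of_lt (v1_lt n m' hn y)] at h1
  · simp only [Fintype.card_sum, Fintype.card_prod, Fintype.card_bool, Fintype.card_fin,
      Fintype.card_empty, ZMod.card]
    omega

lemma key1 (n : ℕ) (s t : ℕ) (hst : s + t = n + 1) :
    ((s : ℕ) : ZMod n) = 1 - ((t : ℕ) : ZMod n) := by
  rw [eq_sub_iff_add_eq, ← Nat.cast_add, hst]
  push_cast [ZMod.natCast_self]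
  ring

lemma E1_comm (hn : n = 2 * m' + 2) :
    ∀ x, E1 n m' (rho Empty (Fin (m' + 1)) x) = 1 - E1 n m' x := by
  rintro (e | ⟨a, c⟩)
  · exact e.elim
  · rw [rho_inr]
    have := a.isLt
    cases c
    · by_cases h0 : a.val = 0
      · simp only [E1, v1, Sum.elim_inr, Bool.cond_false, Bool.cond_true, Bool.not_false,
          h0, if_pos]
        norm_num
      · simp only [E1, v1, Sum.elim_inr, Bool.cond_false, Bool.cond_true, Bool.not_false,
          if_neg h0]
        exact key1 n _ _ (by omega)
    · by_cases h0 : a.val = 0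
      · simp only [E1, v1, Sum.elim_inr, Bool.cond_false, Bool.cond_true, Bool.not_true,
          h0, if_pos]
        norm_num
      · simp only [E1, v1, Sum.elim_inr, Bool.cond_false, Bool.cond_true, Bool.not_true,
          if_neg h0]
        exact key1 n _ _ (by omega)

lemma base11 (hn : n = 2 * m' + 2) :
    Nat.card {π : Perm (ZMod n) // ∀ i, π i + π (1 - i) = 1}
      = (m' + 1).factorial * 2 ^ (m' + 1) := by
  have step1 : Nat.card {π : Perm (ZMod n) // ∀ i, π i + π (1 - i) = 1}
      = Nat.card {π : Perm (ZMod n) // ∀ i, π ((fun j : ZMod n => 1 - j) i)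
          = (fun j : ZMod n => 1 - j) (π i)} := by
    apply Nat.card_congr
    apply Equiv.subtypeEquivRight
    intro π
    constructor
    · intro H i
      simp only [eq_sub_iff_add_eq, add_comm]
      exact H i
    · intro H i
      have := H i
      simp only [eq_sub_iff_add_eq] at this
      linear_combination this
  have hcomm : ∀ x, (Equiv.ofBijective _ (E1_bij n m' hn)) (rho Empty (Fin (m' + 1)) x)
      = (fun j : ZMod n => 1 - j) ((Equiv.ofBijective _ (E1_bij n m' hn)) x) :=
    E1_comm n m' hn
  have step2 := card_intertwine (Equiv.ofBijective _ (E1_bij n m' hn))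
    (rho Empty (Fin (m' + 1))) (rho Empty (Fin (m' + 1)))
    (fun j : ZMod n => 1 - j) (fun j : ZMod n => 1 - j) hcomm hcomm
  rw [step1, ← step2, model_card]
  simp

end E1

/-- Let `n ≥ 2` be even.  Then
`Σ_{h ∈ ℤ/nℤ} Σ_{k ∈ ℤ/nℤ} |{π : ∀ i, π(i) + π(h - i) = k}|
  = (n²/4) · 2^{n/2} · ((n/2)! + (n/2 - 1)!)`. -/
theorem stmt_10 (n : ℕ) (hn : 2 ≤ n) (he : Even n) :
    haveI : NeZero n := ⟨by omega⟩
    ∑ h : ZMod n, ∑ k : ZMod n,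
        Nat.card {π : Equiv.Perm (ZMod n) // ∀ i, π i + π (h - i) = k} =
      n ^ 2 / 4 * 2 ^ (n / 2) * ((n / 2).factorial + (n / 2 - 1).factorial) := by
  haveI : NeZero n := ⟨by omega⟩
  obtain ⟨m, hm⟩ := he
  obtain ⟨m', rfl⟩ : ∃ m'', m = m'' + 1 := ⟨m - 1, by omega⟩
  have hn2 : n = 2 * m' + 2 := by omega
  subst hn2
  set n := 2 * m' + 2 with hndef
  -- reindexing bijection
  set Emap : Fin (m' + 1) × Bool → ZMod n :=
    fun x => ((2 * x.1.val + cond x.2 1 0 : ℕ) : ZMod n) with hEmap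
  have hvlt : ∀ x : Fin (m' + 1) × Bool, 2 * x.1.val + cond x.2 1 0 < n := by
    rintro ⟨j, b⟩
    have := j.isLt
    cases b <;> simp <;> omega
  have hbij : Function.Bijective Emap := by
    rw [Fintype.bijective_iff_injective_and_card]
    constructor
    · rintro ⟨j, b⟩ ⟨j', b'⟩ hxy
      have h1 := (ZMod.natCast_eq_natCast_iff _ _ _).mp hxy
      rw [Nat.ModEq, Nat.mod_eq_of_lt (hvlt ⟨j, b⟩), Nat.mod_eq_of_lt (hvlt ⟨j', b'⟩)] at h1
      have hj := j.isLt
      have hj' := j'.isLt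
      cases b <;> cases b' <;> simp only [Bool.cond_false, Bool.cond_true] at h1
      · have : j = j' := Fin.ext (by omega)
        rw [this]
      · exfalso; omega
      · exfalso; omega
      · have : j = j' := Fin.ext (by omega)
        rw [this]
    · simp only [Fintype.card_prod, Fintype.card_bool, Fintype.card_fin, ZMod.card]
      omega
  have hre : ∀ f : ZMod n → ℕ,
      ∑ h : ZMod n, f h = ∑ x : Fin (m' + 1) × Bool, f (Emap x) :=
    fun f => (Fintype.sum_bijective Emap hbij (fun x => f (Emap x)) f (fun x => rfl)).symm
  have step : ∑ h : ZMod n, ∑ k : ZMod n,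
        Nat.card {π : Equiv.Perm (ZMod n) // ∀ i, π i + π (h - i) = k}
      = ∑ x : Fin (m' + 1) × Bool, ∑ y : Fin (m' + 1) × Bool,
        Nat.card {π : Equiv.Perm (ZMod n) // ∀ i, π i + π (Emap x - i) = Emap y} := by
    rw [hre]
    apply Finset.sum_congr rfl
    intro x _
    exact hre (fun k => Nat.card {π : Equiv.Perm (ZMod n) // ∀ i, π i + π (Emap x - i) = k})
  rw [step]
  have hval : ∀ x y : Fin (m' + 1) × Bool,
      Nat.card {π : Equiv.Perm (ZMod n) // ∀ i, π i + π (Emap x - i) = Emap y}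
        = cond x.2 (cond y.2 ((m' + 1).factorial * 2 ^ (m' + 1)) 0)
            (cond y.2 0 (2 * (m'.factorial * 2 ^ m'))) := by
    rintro ⟨j, b⟩ ⟨j', b'⟩
    have hf : ∀ jj : Fin (m' + 1), Emap (jj, false) = 0 + 2 * ((jj.val : ℕ) : ZMod n) := by
      intro jj; simp only [hEmap, Bool.cond_false]; push_cast; ring
    have ht : ∀ jj : Fin (m' + 1), Emap (jj, true) = 1 + 2 * ((jj.val : ℕ) : ZMod n) := by
      intro jj; simp only [hEmap, Bool.cond_true]; push_cast; ring
    have hd : 2 ∣ n := ⟨m' + 1, by omega⟩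
    cases b <;> cases b' <;>
      simp only [Bool.cond_false, Bool.cond_true]
    · rw [hf j, show Emap (j', false) = 0 + 2 * ((j'.val : ℕ) : ZMod n) from hf j',
        card_translate, base00 n m' rfl]
    · rw [hf j, show Emap (j', true) = 1 + 2 * ((j'.val : ℕ) : ZMod n) from ht j',
        card_translate, base01 n hd]
    · rw [ht j, show Emap (j', false) = 0 + 2 * ((j'.val : ℕ) : ZMod n) from hf j',
        card_translate, base10 n hd]
    · rw [ht j, show Emap (j', true) = 1 + 2 * ((j'.val : ℕ) : ZMod n) from ht j',
        card_translate, base11 n m' rfl]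
  simp only [hval]
  simp only [Fintype.sum_prod_type, Fintype.sum_bool, Finset.sum_const, Finset.card_univ,
    Fintype.card_fin, smul_eq_mul, Bool.cond_true, Bool.cond_false]
  have h1 : n / 2 = m' + 1 := by omega
  have h2 : n ^ 2 / 4 = (m' + 1) * (m' + 1) := by
    have h3 : n ^ 2 = 4 * ((m' + 1) * (m' + 1)) := by rw [hndef]; ring
    rw [h3, Nat.mul_div_cancel_left _ (by norm_num)]
  rw [h1, h2]
  have h4 : m' + 1 - 1 = m' := by omega
  rw [h4]
  ring
end

section
/- Let n ≥ 1 and let ℓ ∈ {0, 1, …, n − 1}. Define the permutation α of ℤ/nℤ by α(i) = ℓ − i. Then the number of permutations τ of ℤ/nℤ with τ² = α equals: ma((n−1)/2, (n−1)/4)·2^{(n−1)/4} if n ≡ 1 (mod 4); 0 if n ≡ 3 (mod 4); if n is even and ℓ is odd, it equals ma(n/2, n/4)·2^{n/4} when n ≡ 0 (mod 4) and 0 when n ≡ 2 (mod 4); if n is even and ℓ is even, it equals 0 when n ≡ 0 (mod 4) and 2·ma((n−2)/2, (n−2)/4)·2^{(n−2)/4} when n ≡ 2 (mod 4). -/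
open Equiv

def sqf : ℕ → ℕ
  | 0 => 1
  | 1 => 0
  | 2 => 0
  | 3 => 0
  | (m+4) => (m+2) * sqf m

lemma sqf_add_four (m : ℕ) : sqf (m+4) = (m+2) * sqf m := rfl

lemma sqf_two_mod_four (q : ℕ) : sqf (4*q+2) = 0 := by
  induction q with
  | zero => rfl
  | succ q ih =>
    have h : 4*(q+1)+2 = (4*q+2)+4 := by ring
    rw [h, sqf_add_four, ih, mul_zero]

lemma two_pow_fac_dvd (q : ℕ) : 2^q * q.factorial ∣ (2*q).factorial := by
  induction q with
  | zero => simp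
  | succ q ih =>
    have h1 : 2*(q+1) = (2*q)+1+1 := by ring
    rw [h1, pow_succ, Nat.factorial_succ, Nat.factorial_succ, Nat.factorial_succ]
    calc 2^q*2*((q+1)*q.factorial) = (2*(q+1)) * (2^q * q.factorial) := by ring
      _ ∣ (2*(q+1)) * (2*q).factorial := mul_dvd_mul_left _ ih
      _ ∣ (2*q+1+1)*((2*q+1)*(2*q).factorial) := ⟨2*q+1, by ring⟩


lemma sqf_mul_fac (q : ℕ) : sqf (4*q) * q.factorial = (2*q).factorial := by
  induction q with
  | zero => simp [sqf]
  | succ q ih =>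
    have h4 : 4*(q+1) = 4*q+4 := by ring
    have h2 : 2*(q+1) = 2*q+1+1 := by ring
    rw [h4, sqf_add_four, Nat.factorial_succ, h2, Nat.factorial_succ, Nat.factorial_succ]
    calc (4*q+2) * sqf (4*q) * ((q+1) * q.factorial)
        = ((4*q+2)*(q+1)) * (sqf (4*q) * q.factorial) := by ring
      _ = ((4*q+2)*(q+1)) * (2*q).factorial := by rw [ih]
      _ = (2*q+1+1)*((2*q+1)*(2*q).factorial) := by ring

lemma sqf_eq_ma (q : ℕ) : sqf (4*q) = ma (2*q) q * 2^q := by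
  have hd := two_pow_fac_dvd q
  have hma : ma (2*q) q = (2*q).factorial / (2^q * q.factorial) := by
    simp [ma, Nat.sub_self]
  apply Nat.eq_of_mul_eq_mul_right (Nat.factorial_pos q)
  rw [sqf_mul_fac, hma, mul_assoc, Nat.div_mul_cancel hd]


lemma sq_apply {X : Type*} (β τ : Equiv.Perm X) (h : τ * τ = β) (x : X) : τ (τ x) = β x := by
  rw [← Equiv.Perm.mul_apply, h]

lemma sq_comm {X : Type*} (β τ : Equiv.Perm X) (h : τ * τ = β) (x : X) : τ (β x) = β (τ x) := by
  have h1 : τ * β = β * τ := by rw [← h]; group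
  have := congrArg (fun σ : Equiv.Perm X => σ x) h1
  simpa [Equiv.Perm.mul_apply] using this

lemma fix_iff_of_sq {X : Type*} (β τ : Equiv.Perm X) (hτ : τ * τ = β) (x : X) :
    β x = x ↔ β (τ x) = τ x := by
  constructor
  · intro h; rw [← sq_comm β τ hτ, h]
  · intro h; apply τ.injective; rw [sq_comm β τ hτ, h]

lemma stab_compl {X : Type*} (β : Equiv.Perm X) :
    ∀ x : X, ¬ β x = x ↔ ¬ β (β x) = β x := by
  intro x
  exact not_congr ⟨fun h => congrArg β h, fun h => β.injective h⟩

lemma card_sqrt_split {X : Type*} [Fintype X] [DecidableEq X] (β : Equiv.Perm X)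
    (h2 : β * β = 1) :
    Nat.card {τ : Equiv.Perm X // τ * τ = β} =
      Nat.card {σ : Equiv.Perm {x : X // β x = x} // σ * σ = 1} *
      Nat.card {τ' : Equiv.Perm {x : X // ¬ β x = x} // τ' * τ' = β.subtypePerm (fun x => (stab_compl β x).symm)} := by
  rw [← Nat.card_prod]
  apply Nat.card_congr
  refine ⟨fun τ => ⟨⟨τ.1.subtypePerm (fun x => (fix_iff_of_sq β τ.1 τ.2 x).symm), ?_⟩,
            ⟨τ.1.subtypePerm (fun x => (not_congr (fix_iff_of_sq β τ.1 τ.2 x)).symm), ?_⟩⟩,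
          fun σ => ⟨Equiv.Perm.subtypeCongr σ.1.1 σ.2.1, ?_⟩, ?_, ?_⟩
  · ext x
    show τ.1 (τ.1 (x : X)) = ((1 : Equiv.Perm {x : X // β x = x}) x : X)
    rw [sq_apply β τ.1 τ.2]; exact x.2
  · ext x
    show τ.1 (τ.1 (x : X)) = β (x : X)
    exact sq_apply β τ.1 τ.2 x
  · have hL : ∀ (y : X) (hy : β y = y),
        Equiv.Perm.subtypeCongr σ.1.1 σ.2.1 y = ((σ.1.1 ⟨y, hy⟩ : {x : X // β x = x}) : X) :=
      fun y hy => Equiv.Perm.subtypeCongr.left_apply σ.1.1 σ.2.1 hy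
    have hR : ∀ (y : X) (hy : ¬ β y = y),
        Equiv.Perm.subtypeCongr σ.1.1 σ.2.1 y = ((σ.2.1 ⟨y, hy⟩ : {x : X // ¬ β x = x}) : X) :=
      fun y hy => Equiv.Perm.subtypeCongr.right_apply σ.1.1 σ.2.1 hy
    ext x
    rw [Equiv.Perm.mul_apply]
    by_cases hx : β x = x
    · rw [hL x hx, hL _ (σ.1.1 ⟨x, hx⟩).2, Subtype.coe_eta]
      have h1 : σ.1.1 (σ.1.1 ⟨x, hx⟩) = ⟨x, hx⟩ := by
        rw [← Equiv.Perm.mul_apply, σ.1.2]; rfl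
      rw [h1]; exact hx.symm
    · rw [hR x hx, hR _ (σ.2.1 ⟨x, hx⟩).2, Subtype.coe_eta]
      have h1 : σ.2.1 (σ.2.1 ⟨x, hx⟩) = ⟨β x, (stab_compl β x).mp hx⟩ := by
        rw [← Equiv.Perm.mul_apply, σ.2.2]; rfl
      rw [h1]
  · intro τ
    apply Subtype.ext
    show Equiv.Perm.subtypeCongr (τ.1.subtypePerm (fun x => (fix_iff_of_sq β τ.1 τ.2 x).symm))
      (τ.1.subtypePerm (fun x => (not_congr (fix_iff_of_sq β τ.1 τ.2 x)).symm)) = τ.1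
    ext x
    rw [Equiv.Perm.subtypeCongr.apply]
    by_cases hx : β x = x
    · rw [dif_pos hx]; rfl
    · rw [dif_neg hx]; rfl
  · intro σ
    refine Prod.ext (Subtype.ext ?_) (Subtype.ext ?_)
    · ext x
      show Equiv.Perm.subtypeCongr σ.1.1 σ.2.1 (x : X) = ((σ.1.1 x : {x : X // β x = x}) : X)
      rw [Equiv.Perm.subtypeCongr.apply, dif_pos x.2, Subtype.coe_eta]
    · ext x
      show Equiv.Perm.subtypeCongr σ.1.1 σ.2.1 (x : X) = ((σ.2.1 x : {x : X // ¬ β x = x}) : X)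
      rw [Equiv.Perm.subtypeCongr.apply, dif_neg x.2, Subtype.coe_eta]

lemma card_sqrt_free : ∀ (m : ℕ) (X : Type) [Fintype X] [DecidableEq X] (β : Equiv.Perm X),
    Fintype.card X = m → β * β = 1 → (∀ x, β x ≠ x) →
    Nat.card {τ : Equiv.Perm X // τ * τ = β} = sqf m := by
  intro m
  induction m using Nat.strong_induction_on with
  | _ m IH =>
  intro X _ _ β hcard h2 hfree
  have hββ : ∀ x : X, β (β x) = x := fun x => sq_apply 1 β h2 x
  rcases Nat.eq_zero_or_pos m with hm | hm
  · subst hm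
    haveI : IsEmpty X := Fintype.card_eq_zero_iff.mp hcard
    rw [show sqf 0 = 1 from rfl, Nat.card_eq_one_iff_unique]
    refine ⟨⟨fun a b => Subtype.ext (by ext x; exact isEmptyElim x)⟩,
      ⟨⟨1, by ext x; exact isEmptyElim x⟩⟩⟩
  obtain ⟨y₀⟩ : Nonempty X := Fintype.card_pos_iff.mp (hcard ▸ hm)
  have hby : β y₀ ≠ y₀ := hfree y₀
  have hbad1 : ∀ (τ : Equiv.Perm X), τ * τ = β → τ y₀ ≠ y₀ := by
    intro τ hτ h
    exact hfree y₀ (by rw [← sq_apply β τ hτ y₀, h, h])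
  have hbad2 : ∀ (τ : Equiv.Perm X), τ * τ = β → τ y₀ ≠ β y₀ := by
    intro τ hτ h
    have h2' : τ (β y₀) = β y₀ := by rw [← h, sq_apply β τ hτ]; exact h.symm
    have h3 : β (β y₀) = β y₀ := by rw [← sq_apply β τ hτ (β y₀), h2', h2']
    exact hfree y₀ (h3.symm.trans (hββ y₀))
  by_cases hex : ∃ z : X, z ≠ y₀ ∧ z ≠ β y₀
  case neg =>
    push_neg at hex
    have hm2 : m = 2 := by
      rw [← hcard, ← Finset.card_univ,
        show (Finset.univ : Finset X) = {y₀, β y₀} by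
          ext x
          simp only [Finset.mem_univ, Finset.mem_insert, Finset.mem_singleton, true_iff]
          by_cases h : x = y₀
          · exact Or.inl h
          · exact Or.inr (hex x h),
        Finset.card_insert_of_notMem (Finset.notMem_singleton.mpr (Ne.symm hby)),
        Finset.card_singleton]
    haveI : IsEmpty {τ : Equiv.Perm X // τ * τ = β} := by
      constructor; rintro ⟨τ, hτ⟩
      by_cases h : τ y₀ = y₀
      · exact hbad1 τ hτ h
      · exact hbad2 τ hτ (hex _ h)
    rw [Nat.card_of_isEmpty, hm2]
    rfl
  case pos =>
  obtain ⟨z, hzy, hzb⟩ := hex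
  -- generic distinctness facts
  have hdist : ∀ w : X, w ≠ y₀ → w ≠ β y₀ →
      β w ≠ w ∧ β w ≠ y₀ ∧ β w ≠ β y₀ := by
    intro w hw1 hw2
    refine ⟨hfree w, fun h => hw2 ?_, fun h => hw1 (β.injective h)⟩
    rw [← hββ w, h]
  have hcard4 : ∀ w : X, w ≠ y₀ → w ≠ β y₀ →
      ({y₀, β y₀, w, β w} : Finset X).card = 4 := by
    intro w hw1 hw2
    obtain ⟨hbw_w, hbw_y, hbw_by⟩ := hdist w hw1 hw2
    rw [Finset.card_insert_of_notMem (by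
        simp only [Finset.mem_insert, Finset.mem_singleton, not_or]
        exact ⟨Ne.symm hby, Ne.symm hw1, Ne.symm hbw_y⟩),
      Finset.card_insert_of_notMem (by
        simp only [Finset.mem_insert, Finset.mem_singleton, not_or]
        exact ⟨Ne.symm hw2, Ne.symm hbw_by⟩),
      Finset.card_insert_of_notMem (Finset.notMem_singleton.mpr (Ne.symm hbw_w)),
      Finset.card_singleton]
  have hm4 : 4 ≤ m := by
    rw [← hcard, ← Finset.card_univ]
    calc 4 = ({y₀, β y₀, z, β z} : Finset X).card := (hcard4 z hzy hzb).symm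
      _ ≤ (Finset.univ : Finset X).card := Finset.card_le_univ _
  -- the sigma decomposition
  have E1 : {τ : Equiv.Perm X // τ * τ = β} ≃
      Σ w : X, {τ : Equiv.Perm X // τ * τ = β ∧ τ y₀ = w} := by
    refine ⟨fun τ => ⟨τ.1 y₀, τ.1, τ.2, rfl⟩, fun s => ⟨s.2.1, s.2.2.1⟩, fun τ => rfl, ?_⟩
    rintro ⟨w, τ, h1, h2⟩
    subst h2
    rfl
  have hcards : Nat.card {τ : Equiv.Perm X // τ * τ = β} =
      ∑ w : X, Nat.card {τ : Equiv.Perm X // τ * τ = β ∧ τ y₀ = w} := by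
    rw [Nat.card_eq_fintype_card, Fintype.card_congr E1, Fintype.card_sigma]
    simp [Nat.card_eq_fintype_card]
  -- good fibers
  have hfib_good : ∀ w : X, w ≠ y₀ → w ≠ β y₀ →
      Nat.card {τ : Equiv.Perm X // τ * τ = β ∧ τ y₀ = w} = sqf (m - 4) := by
    intro w hw1 hw2
    obtain ⟨hbw_w, hbw_y, hbw_by⟩ := hdist w hw1 hw2
    set Sp : X → Prop := fun x => x = y₀ ∨ x = β y₀ ∨ x = w ∨ x = β w with hSp
    have hSpβ : ∀ x : X, Sp x ↔ Sp (β x) := by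
      intro x
      constructor
      · rintro (rfl | rfl | rfl | rfl)
        · exact Or.inr (Or.inl rfl)
        · exact Or.inl (hββ y₀)
        · exact Or.inr (Or.inr (Or.inr rfl))
        · exact Or.inr (Or.inr (Or.inl (hββ w)))
      · rintro (h | h | h | h)
        · exact Or.inr (Or.inl (β.injective (h.trans (hββ y₀).symm)))
        · exact Or.inl (β.injective h)
        · exact Or.inr (Or.inr (Or.inr (β.injective (h.trans (hββ w).symm))))
        · exact Or.inr (Or.inr (Or.inl (β.injective h)))
    have hQβ : ∀ x : X, ¬ Sp x ↔ ¬ Sp (β x) := fun x => not_congr (hSpβ x)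
    set β' : Equiv.Perm {x : X // ¬ Sp x} := β.subtypePerm (fun x => (hQβ x).symm) with hβ'
    have hβ'2 : β' * β' = 1 := by
      ext x
      show β (β (x : X)) = (x : X)
      exact hββ x.1
    have hβ'free : ∀ x, β' x ≠ x := by
      intro x h
      exact hfree x.1 (congrArg Subtype.val h)
    have hcardQ : Fintype.card {x : X // ¬ Sp x} = m - 4 := by
      rw [Fintype.card_subtype_compl, hcard]
      congr 1
      rw [Fintype.card_subtype]
      rw [show Finset.filter Sp Finset.univ = ({y₀, β y₀, w, β w} : Finset X) by
        ext x
        simp only [Finset.mem_filter, Finset.mem_univ, true_and, Finset.mem_insert,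
          Finset.mem_singleton, hSp]]
      exact hcard4 w hw1 hw2
    have hIH := IH (m - 4) (by omega) {x : X // ¬ Sp x} β' hcardQ hβ'2 hβ'free
    rw [← hIH]
    apply Nat.card_congr
    -- the 4-cycle c₀ on X
    set c₀ : Equiv.Perm X :=
      (Equiv.swap y₀ (β w)) * (Equiv.swap y₀ (β y₀)) * (Equiv.swap y₀ w) with hc₀def
    have hc1 : c₀ y₀ = w := by
      simp only [hc₀def, Equiv.Perm.mul_apply]
      rw [Equiv.swap_apply_left, Equiv.swap_apply_of_ne_of_ne hw1 hw2,
        Equiv.swap_apply_of_ne_of_ne hw1 (Ne.symm hbw_w)]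
    have hc2 : c₀ w = β y₀ := by
      simp only [hc₀def, Equiv.Perm.mul_apply]
      rw [Equiv.swap_apply_right, Equiv.swap_apply_left,
        Equiv.swap_apply_of_ne_of_ne hby (Ne.symm hbw_by)]
    have hc3 : c₀ (β y₀) = β w := by
      simp only [hc₀def, Equiv.Perm.mul_apply]
      rw [Equiv.swap_apply_of_ne_of_ne hby (Ne.symm hw2), Equiv.swap_apply_right,
        Equiv.swap_apply_left]
    have hc4 : c₀ (β w) = y₀ := by
      simp only [hc₀def, Equiv.Perm.mul_apply]
      rw [Equiv.swap_apply_of_ne_of_ne hbw_y hbw_w, Equiv.swap_apply_of_ne_of_ne hbw_y hbw_by,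
        Equiv.swap_apply_right]
    have hcother : ∀ x : X, ¬ Sp x → c₀ x = x := by
      intro x hx
      simp only [hSp, not_or] at hx
      obtain ⟨h1, h2', h3, h4⟩ := hx
      simp only [hc₀def, Equiv.Perm.mul_apply]
      rw [Equiv.swap_apply_of_ne_of_ne h1 h3, Equiv.swap_apply_of_ne_of_ne h1 h2',
        Equiv.swap_apply_of_ne_of_ne h1 h4]
    have hcS : ∀ x : X, Sp x ↔ Sp (c₀ x) := by
      intro x
      constructor
      · rintro (rfl | rfl | rfl | rfl)
        · rw [hc1]; exact Or.inr (Or.inr (Or.inl rfl))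
        · rw [hc3]; exact Or.inr (Or.inr (Or.inr rfl))
        · rw [hc2]; exact Or.inr (Or.inl rfl)
        · rw [hc4]; exact Or.inl rfl
      · intro h
        by_cases hx : Sp x
        · exact hx
        · rw [hcother x hx] at h; exact h
    set c : Equiv.Perm {x : X // Sp x} := c₀.subtypePerm (fun x => (hcS x).symm) with hc
    -- the equivalence between the fiber and square roots downstairs
    refine ⟨?_, ?_, ?_, ?_⟩
    · -- toFun : restrict
      rintro ⟨τ, hτ, hτy⟩
      have himg1 : τ w = β y₀ := by rw [← hτy, sq_apply β τ hτ]
      have himg2 : τ (β y₀) = β w := by rw [sq_comm β τ hτ, hτy]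
      have himg3 : τ (β w) = y₀ := by rw [sq_comm β τ hτ, himg1, hββ]
      have hSτ : ∀ x : X, Sp x ↔ Sp (τ x) := by
        intro x
        constructor
        · rintro (rfl | rfl | rfl | rfl)
          · rw [hτy]; exact Or.inr (Or.inr (Or.inl rfl))
          · rw [himg2]; exact Or.inr (Or.inr (Or.inr rfl))
          · rw [himg1]; exact Or.inr (Or.inl rfl)
          · rw [himg3]; exact Or.inl rfl
        · rintro (h | h | h | h)
          · exact Or.inr (Or.inr (Or.inr (τ.injective (h.trans himg3.symm))))
          · exact Or.inr (Or.inr (Or.inl (τ.injective (h.trans himg1.symm))))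
          · exact Or.inl (τ.injective (h.trans hτy.symm))
          · exact Or.inr (Or.inl (τ.injective (h.trans himg2.symm)))
      refine ⟨τ.subtypePerm (fun x => (not_congr (hSτ x)).symm), ?_⟩
      ext x
      show τ (τ (x : X)) = β (x : X)
      exact sq_apply β τ hτ x.1
    · -- invFun : extend by the 4-cycle
      rintro ⟨τ', hτ'⟩
      refine ⟨Equiv.Perm.subtypeCongr c τ', ?_, ?_⟩
      · have hL : ∀ (y : X) (hy : Sp y),
            Equiv.Perm.subtypeCongr c τ' y = ((c ⟨y, hy⟩ : {x : X // Sp x}) : X) :=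
          fun y hy => Equiv.Perm.subtypeCongr.left_apply c τ' hy
        have hR : ∀ (y : X) (hy : ¬ Sp y),
            Equiv.Perm.subtypeCongr c τ' y = ((τ' ⟨y, hy⟩ : {x : X // ¬ Sp x}) : X) :=
          fun y hy => Equiv.Perm.subtypeCongr.right_apply c τ' hy
        ext x
        rw [Equiv.Perm.mul_apply]
        by_cases hx : Sp x
        · rw [hL x hx, hL _ (c ⟨x, hx⟩).2, Subtype.coe_eta]
          have hcc : ∀ (y : X) (hy : Sp y), ((c (c ⟨y, hy⟩) : {x : X // Sp x}) : X) = c₀ (c₀ y) := by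
            intro y hy; rfl
          rw [hcc x hx]
          rcases hx with rfl | rfl | rfl | rfl
          · rw [hc1, hc2]
          · rw [hc3, hc4, hββ]
          · rw [hc2, hc3]
          · rw [hc4, hc1, hββ]
        · rw [hR x hx, hR _ (τ' ⟨x, hx⟩).2, Subtype.coe_eta]
          have h1 : τ' (τ' ⟨x, hx⟩) = ⟨β x, (hQβ x).mp hx⟩ := by
            rw [← Equiv.Perm.mul_apply, hτ']; rfl
          rw [h1]
      · have : Sp y₀ := Or.inl rfl
        rw [Equiv.Perm.subtypeCongr.left_apply c τ' this]
        exact hc1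
    · -- left inverse
      rintro ⟨τ, hτ, hτy⟩
      have himg1 : τ w = β y₀ := by rw [← hτy, sq_apply β τ hτ]
      have himg2 : τ (β y₀) = β w := by rw [sq_comm β τ hτ, hτy]
      have himg3 : τ (β w) = y₀ := by rw [sq_comm β τ hτ, himg1, hββ]
      apply Subtype.ext
      show Equiv.Perm.subtypeCongr c _ = τ
      ext x
      rw [Equiv.Perm.subtypeCongr.apply]
      by_cases hx : Sp x
      · rw [dif_pos hx]
        show c₀ x = τ x
        rcases hx with rfl | rfl | rfl | rfl
        · rw [hc1, hτy]
        · rw [hc3, himg2]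
        · rw [hc2, himg1]
        · rw [hc4, himg3]
      · rw [dif_neg hx]; rfl
    · -- right inverse
      rintro ⟨τ', hτ'⟩
      apply Subtype.ext
      ext x
      show Equiv.Perm.subtypeCongr c τ' (x : X) = ((τ' x : {x : X // ¬ Sp x}) : X)
      rw [Equiv.Perm.subtypeCongr.right_apply c τ' x.2, Subtype.coe_eta]
  -- bad fibers
  have hfib : ∀ w : X, Nat.card {τ : Equiv.Perm X // τ * τ = β ∧ τ y₀ = w} =
      if w = y₀ ∨ w = β y₀ then 0 else sqf (m - 4) := by
    intro w
    split_ifs with h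
    · have : IsEmpty {τ : Equiv.Perm X // τ * τ = β ∧ τ y₀ = w} := by
        constructor; rintro ⟨τ, hτ, hτy⟩
        rcases h with rfl | rfl
        · exact hbad1 τ hτ hτy
        · exact hbad2 τ hτ hτy
      exact Nat.card_of_isEmpty
    · push_neg at h
      exact hfib_good w h.1 h.2
  rw [hcards, Finset.sum_congr rfl (fun w _ => hfib w), Finset.sum_ite,
    Finset.sum_const_zero, zero_add, Finset.sum_const, smul_eq_mul]
  have hfiltcard : (Finset.univ.filter fun w : X => ¬(w = y₀ ∨ w = β y₀)).card = m - 2 := by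
    rw [Finset.filter_not, Finset.card_sdiff_of_subset (Finset.filter_subset _ _), Finset.card_univ, hcard]
    congr 1
    rw [show Finset.filter (fun w : X => w = y₀ ∨ w = β y₀) Finset.univ = {y₀, β y₀} by
      ext x
      simp only [Finset.mem_filter, Finset.mem_univ, true_and, Finset.mem_insert,
        Finset.mem_singleton]]
    rw [Finset.card_insert_of_notMem (Finset.notMem_singleton.mpr (Ne.symm hby)),
      Finset.card_singleton]
  rw [hfiltcard]
  conv_rhs => rw [show m = (m - 4) + 4 from by omega]
  rw [sqf_add_four, show m - 4 + 2 = m - 2 from by omega]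


lemma zmod_torsion_odd (n : ℕ) [NeZero n] (hn : n % 2 = 1) (x : ZMod n) :
    x + x = 0 ↔ x = 0 := by
  constructor
  · intro h
    have h1 : ((x.val + x.val : ℕ) : ZMod n) = 0 := by
      push_cast
      rw [ZMod.natCast_val, ZMod.cast_id, h]
    rw [ZMod.natCast_eq_zero_iff] at h1
    have h2 : x.val < n := ZMod.val_lt x
    obtain ⟨k, hk⟩ := h1
    have hv : x.val = 0 := by
      rcases Nat.lt_or_ge k 2 with hk2 | hk2
      · interval_cases k <;> omega
      · have : 2 * n ≤ n * k := by
          calc 2 * n = n * 2 := by ring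
            _ ≤ n * k := Nat.mul_le_mul_left n hk2
        omega
    have := congrArg (fun t : ℕ => (t : ZMod n)) hv
    simpa [ZMod.natCast_val, ZMod.cast_id] using this
  · rintro rfl; simp

lemma zmod_torsion_even (n : ℕ) [NeZero n] (hn : n % 2 = 0) (x : ZMod n) :
    x + x = 0 ↔ x = 0 ∨ x = ((n / 2 : ℕ) : ZMod n) := by
  constructor
  · intro h
    have h1 : ((x.val + x.val : ℕ) : ZMod n) = 0 := by
      push_cast
      rw [ZMod.natCast_val, ZMod.cast_id, h]
    rw [ZMod.natCast_eq_zero_iff] at h1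
    have h2 : x.val < n := ZMod.val_lt x
    obtain ⟨k, hk⟩ := h1
    have hv : x.val = 0 ∨ x.val = n / 2 := by
      rcases Nat.lt_or_ge k 2 with hk2 | hk2
      · interval_cases k <;> omega
      · have : 2 * n ≤ n * k := by
          calc 2 * n = n * 2 := by ring
            _ ≤ n * k := Nat.mul_le_mul_left n hk2
        omega
    rcases hv with hv | hv
    · left
      have := congrArg (fun t : ℕ => (t : ZMod n)) hv
      simpa [ZMod.natCast_val, ZMod.cast_id] using this
    · right
      have := congrArg (fun t : ℕ => (t : ZMod n)) hv
      simpa [ZMod.natCast_val, ZMod.cast_id] using this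
  · rintro (rfl | rfl)
    · simp
    · have h1 : ((n / 2 : ℕ) : ZMod n) + ((n / 2 : ℕ) : ZMod n) = ((n / 2 + n / 2 : ℕ) : ZMod n) := by
        push_cast; ring
      rw [h1, show n / 2 + n / 2 = n from by omega, ZMod.natCast_self]

lemma zmod_half_ne_zero (n : ℕ) [NeZero n] (hn : n % 2 = 0) (hn1 : 1 ≤ n) :
    ((n / 2 : ℕ) : ZMod n) ≠ 0 := by
  rw [Ne, ZMod.natCast_eq_zero_iff]
  intro hdvd
  have := Nat.le_of_dvd (by omega) hdvd
  omega

lemma zmod_no_half_one (n : ℕ) (hn : n % 2 = 0) (hn1 : 1 ≤ n) (x : ZMod n) :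
    x + x ≠ 1 := by
  intro h
  have h2 : (2 : ℕ) ∣ n := by omega
  have h3 := congrArg (ZMod.castHom h2 (ZMod 2)) h
  rw [map_add, map_one] at h3
  have hd : ∀ a : ZMod 2, a + a ≠ 1 := by decide
  exact hd _ h3

lemma inv_count_of_subsingleton {F : Type*} [Fintype F] (h : Fintype.card F ≤ 1) :
    Nat.card {σ : Equiv.Perm F // σ * σ = 1} = 1 := by
  haveI : Subsingleton F := Fintype.card_le_one_iff_subsingleton.mp h
  have hall : ∀ σ : Equiv.Perm F, σ = 1 := fun σ => Equiv.ext fun x => Subsingleton.elim _ _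
  rw [Nat.card_eq_one_iff_unique]
  exact ⟨⟨fun a b => Subtype.ext ((hall a.1).trans (hall b.1).symm)⟩, ⟨⟨1, one_mul 1⟩⟩⟩

lemma inv_count_two {F : Type*} [Fintype F] [DecidableEq F] (h : Fintype.card F = 2) :
    Nat.card {σ : Equiv.Perm F // σ * σ = 1} = 2 := by
  have hall : ∀ σ : Equiv.Perm F, σ * σ = 1 := by
    intro σ
    have h1 : σ ^ Fintype.card (Equiv.Perm F) = 1 := pow_card_eq_one
    rw [Fintype.card_perm, h] at h1
    calc σ * σ = σ ^ (2 : ℕ) := (sq σ).symm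
      _ = 1 := h1
  rw [Nat.card_congr (Equiv.subtypeUnivEquiv hall), Nat.card_eq_fintype_card,
    Fintype.card_perm, h]
  rfl

lemma card_sqrt_conj {X : Type*} (g β : Equiv.Perm X) :
    Nat.card {τ : Equiv.Perm X // τ * τ = g * β * g⁻¹} = Nat.card {τ : Equiv.Perm X // τ * τ = β} := by
  apply Nat.card_congr
  refine ⟨fun τ => ⟨g⁻¹ * τ.1 * g, ?_⟩, fun τ => ⟨g * τ.1 * g⁻¹, ?_⟩, ?_, ?_⟩
  · have h := τ.2
    have h2 : (g⁻¹ * τ.1 * g) * (g⁻¹ * τ.1 * g) = g⁻¹ * (τ.1 * τ.1) * g := by group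
    rw [h2, h]; group
  · have h := τ.2
    have h2 : (g * τ.1 * g⁻¹) * (g * τ.1 * g⁻¹) = g * (τ.1 * τ.1) * g⁻¹ := by group
    rw [h2, h]
  · intro τ; apply Subtype.ext; show g * (g⁻¹ * τ.1 * g) * g⁻¹ = τ.1; group
  · intro τ; apply Subtype.ext; show g⁻¹ * (g * τ.1 * g⁻¹) * g = τ.1; group

lemma reduce_lemma (n : ℕ) [NeZero n] (ℓ : ℕ) (hℓ : ℓ < n) (α : Equiv.Perm (ZMod n))
    (hα : ∀ i, α i = (ℓ : ZMod n) - i) (ℓ₀ : ℕ)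
    (hpar : n % 2 = 1 ∧ ℓ₀ = 0 ∨ n % 2 = 0 ∧ ℓ₀ % 2 = ℓ % 2) :
    Nat.card {τ : Equiv.Perm (ZMod n) // τ * τ = α} =
      Nat.card {τ : Equiv.Perm (ZMod n) // τ * τ = Equiv.subLeft ((ℓ₀ : ℕ) : ZMod n)} := by
  obtain ⟨s, hs⟩ : ∃ s : ℕ, 2 * s + ℓ = ℓ₀ + n ∨ 2 * s + ℓ = ℓ₀ + 2 * n := by
    by_cases h : (ℓ₀ + n - ℓ) % 2 = 0
    · exact ⟨(ℓ₀ + n - ℓ) / 2, Or.inl (by omega)⟩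
    · exact ⟨(ℓ₀ + 2 * n - ℓ) / 2, Or.inr (by omega)⟩
  have hc : (ℓ : ZMod n) + ((s : ZMod n) + (s : ZMod n)) = ((ℓ₀ : ℕ) : ZMod n) := by
    rcases hs with hs | hs
    · have h1 := congrArg (fun t : ℕ => (t : ZMod n)) hs
      push_cast at h1
      rw [ZMod.natCast_self] at h1
      linear_combination h1
    · have h1 := congrArg (fun t : ℕ => (t : ZMod n)) hs
      push_cast at h1
      rw [ZMod.natCast_self] at h1
      linear_combination h1
  have hconj' : Equiv.subLeft ((ℓ₀ : ℕ) : ZMod n) * (Equiv.addRight (s : ZMod n)) =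
      (Equiv.addRight (s : ZMod n)) * α := by
    ext i
    rw [Equiv.Perm.mul_apply, Equiv.Perm.mul_apply, hα]
    simp only [Equiv.coe_addRight, Equiv.subLeft_apply]
    linear_combination -hc
  have hconj : Equiv.subLeft ((ℓ₀ : ℕ) : ZMod n) =
      (Equiv.addRight (s : ZMod n)) * α * (Equiv.addRight (s : ZMod n))⁻¹ := by
    rw [← hconj']; group
  have h := card_sqrt_conj (Equiv.addRight (s : ZMod n)) α
  rw [← hconj] at h
  exact h.symm

lemma card_sqrt_subLeft (n : ℕ) [NeZero n] (c : ZMod n) :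
    Nat.card {τ : Equiv.Perm (ZMod n) // τ * τ = Equiv.subLeft c} =
      Nat.card {σ : Equiv.Perm {x : ZMod n // Equiv.subLeft c x = x} // σ * σ = 1} *
      sqf (n - Fintype.card {x : ZMod n // Equiv.subLeft c x = x}) := by
  have h2 : Equiv.subLeft c * Equiv.subLeft c = 1 := by
    ext x
    show c - (c - x) = x
    ring
  rw [card_sqrt_split (Equiv.subLeft c) h2]
  congr 1
  apply card_sqrt_free
  · rw [Fintype.card_subtype_compl, ZMod.card]
  · ext x
    show Equiv.subLeft c (Equiv.subLeft c (x : ZMod n)) = (x : ZMod n)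
    show c - (c - (x : ZMod n)) = (x : ZMod n)
    ring
  · intro x h
    exact x.2 (congrArg Subtype.val h)


/-- Let `n ≥ 1`, `ℓ ∈ {0,…,n-1}`, and let `α` be the permutation `i ↦ ℓ - i` of `ℤ/nℤ`.
Let `N` be the number of permutations `τ` with `τ² = α`.  Then:
`N = ma((n-1)/2, (n-1)/4)·2^{(n-1)/4}` if `n ≡ 1 (mod 4)`; `N = 0` if `n ≡ 3 (mod 4)`;
if `n` is even and `ℓ` is odd, `N = ma(n/2, n/4)·2^{n/4}` when `n ≡ 0 (mod 4)` and
`N = 0` when `n ≡ 2 (mod 4)`; if `n` is even and `ℓ` is even, `N = 0` when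
`n ≡ 0 (mod 4)` and `N = 2·ma((n-2)/2, (n-2)/4)·2^{(n-2)/4}` when `n ≡ 2 (mod 4)`. -/
theorem stmt_12 (n : ℕ) (hn : 1 ≤ n) (ℓ : ℕ) (hℓ : ℓ < n)
    (α : Equiv.Perm (ZMod n)) (hα : ∀ i, α i = (ℓ : ZMod n) - i)
    (N : ℕ) (hN : N = Nat.card {τ : Equiv.Perm (ZMod n) // τ * τ = α}) :
    (n % 4 = 1 → N = ma ((n - 1) / 2) ((n - 1) / 4) * 2 ^ ((n - 1) / 4)) ∧
    (n % 4 = 3 → N = 0) ∧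
    (n % 2 = 0 → ℓ % 2 = 1 → n % 4 = 0 → N = ma (n / 2) (n / 4) * 2 ^ (n / 4)) ∧
    (n % 2 = 0 → ℓ % 2 = 1 → n % 4 = 2 → N = 0) ∧
    (n % 2 = 0 → ℓ % 2 = 0 → n % 4 = 0 → N = 0) ∧
    (n % 2 = 0 → ℓ % 2 = 0 → n % 4 = 2 →
      N = 2 * ma ((n - 2) / 2) ((n - 2) / 4) * 2 ^ ((n - 2) / 4)) := by
  haveI : NeZero n := ⟨by omega⟩
  subst hN
  by_cases hn2 : n % 2 = 0
  · by_cases hl2 : ℓ % 2 = 0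
    · -- n even, ℓ even : two fixed points
      have hred := reduce_lemma n ℓ hℓ α hα 0 (Or.inr ⟨hn2, by omega⟩)
      rw [hred, card_sqrt_subLeft n (((0 : ℕ) : ZMod n))]
      have hfixiff : ∀ x : ZMod n, (Equiv.subLeft ((0 : ℕ) : ZMod n) x = x) ↔
          (x = 0 ∨ x = ((n / 2 : ℕ) : ZMod n)) := by
        intro x
        rw [Equiv.subLeft_apply, Nat.cast_zero]
        constructor
        · intro h
          exact (zmod_torsion_even n hn2 x).mp (by linear_combination -h)
        · intro h
          have := (zmod_torsion_even n hn2 x).mpr h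
          linear_combination -this
      have hcardfix : Fintype.card {x : ZMod n // Equiv.subLeft ((0 : ℕ) : ZMod n) x = x} = 2 := by
        rw [Fintype.card_congr (Equiv.subtypeEquivRight hfixiff), Fintype.card_subtype,
          show Finset.univ.filter (fun x : ZMod n => x = 0 ∨ x = ((n / 2 : ℕ) : ZMod n)) =
            ({0, ((n / 2 : ℕ) : ZMod n)} : Finset (ZMod n)) from by
              ext x
              simp [Finset.mem_filter, Finset.mem_insert, Finset.mem_singleton],
          Finset.card_insert_of_notMem
            (Finset.notMem_singleton.mpr (Ne.symm (zmod_half_ne_zero n hn2 hn))),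
          Finset.card_singleton]
      rw [inv_count_two hcardfix, hcardfix]
      refine ⟨?_, ?_, ?_, ?_, ?_, ?_⟩
      · intro h; exfalso; omega
      · intro h; exfalso; omega
      · intro _ h _; exfalso; omega
      · intro _ h _; exfalso; omega
      · intro _ _ h4
        rw [show n - 2 = 4 * ((n - 2) / 4) + 2 from by omega, sqf_two_mod_four, mul_zero]
      · intro _ _ h4
        obtain ⟨q, hq⟩ : ∃ q, n - 2 = 4 * q := ⟨(n - 2) / 4, by omega⟩
        rw [show (n - 2) / 2 = 2 * q from by omega, show (n - 2) / 4 = q from by omega, hq,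
          sqf_eq_ma]
        ring
    · -- n even, ℓ odd : no fixed points
      have hred := reduce_lemma n ℓ hℓ α hα 1 (Or.inr ⟨hn2, by omega⟩)
      have hfree : ∀ x : ZMod n, Equiv.subLeft ((1 : ℕ) : ZMod n) x ≠ x := by
        intro x h
        rw [Equiv.subLeft_apply, Nat.cast_one] at h
        exact zmod_no_half_one n hn2 hn x (by linear_combination -h)
      have h2 : Equiv.subLeft ((1 : ℕ) : ZMod n) * Equiv.subLeft ((1 : ℕ) : ZMod n) = 1 := by
        ext x
        show ((1 : ℕ) : ZMod n) - (((1 : ℕ) : ZMod n) - x) = x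
        ring
      have hcount := card_sqrt_free n (ZMod n) (Equiv.subLeft ((1 : ℕ) : ZMod n))
        (ZMod.card n) h2 hfree
      rw [hred, hcount]
      refine ⟨?_, ?_, ?_, ?_, ?_, ?_⟩
      · intro h; exfalso; omega
      · intro h; exfalso; omega
      · intro _ _ h4
        obtain ⟨q, hq⟩ : ∃ q, n = 4 * q := ⟨n / 4, by omega⟩
        rw [show n / 2 = 2 * q from by omega, show n / 4 = q from by omega, hq, sqf_eq_ma]
      · intro _ _ h4
        rw [show n = 4 * (n / 4) + 2 from by omega, sqf_two_mod_four]
      · intro _ h _; exfalso; omega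
      · intro _ h _; exfalso; omega
  · -- n odd : one fixed point
    have hred := reduce_lemma n ℓ hℓ α hα 0 (Or.inl ⟨by omega, rfl⟩)
    rw [hred, card_sqrt_subLeft n (((0 : ℕ) : ZMod n))]
    have hfixiff : ∀ x : ZMod n, (Equiv.subLeft ((0 : ℕ) : ZMod n) x = x) ↔ x = 0 := by
      intro x
      rw [Equiv.subLeft_apply, Nat.cast_zero]
      constructor
      · intro h
        exact (zmod_torsion_odd n (by omega) x).mp (by linear_combination -h)
      · intro h
        have := (zmod_torsion_odd n (by omega) x).mpr h
        linear_combination -this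
    have hcardfix : Fintype.card {x : ZMod n // Equiv.subLeft ((0 : ℕ) : ZMod n) x = x} = 1 := by
      rw [Fintype.card_congr (Equiv.subtypeEquivRight hfixiff)]
      exact Fintype.card_subtype_eq (0 : ZMod n)
    rw [inv_count_of_subsingleton (le_of_eq hcardfix), hcardfix, one_mul]
    refine ⟨?_, ?_, ?_, ?_, ?_, ?_⟩
    · intro h1
      obtain ⟨q, hq⟩ : ∃ q, n - 1 = 4 * q := ⟨(n - 1) / 4, by omega⟩
      rw [show (n - 1) / 2 = 2 * q from by omega, show (n - 1) / 4 = q from by omega, hq,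
        sqf_eq_ma]
    · intro h1
      rw [show n - 1 = 4 * ((n - 1) / 4) + 2 from by omega, sqf_two_mod_four]
    · intro h _ _; exfalso; omega
    · intro h _ _; exfalso; omega
    · intro h _ _; exfalso; omega
    · intro h _ _; exfalso; omega
end

section
/- Let n ≥ 1. Consider the action of the group ℤ/nℤ × ℤ/nℤ on the set of permutations of ℤ/nℤ given by (h, k)·π = σ^k ∘ π ∘ σ^{−h}. Then the number N of orbits of this action satisfies n·N = Σ_{d | n} φ(d)²·(n/d − 1)!·d^{n/d − 1}, the sum being over all positive divisors d of n. -/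
open Equiv Function

/-- Iterating an intertwining relation. -/
lemma aux13_iterate {γ : Type*} [AddCommGroup γ] (π : Equiv.Perm γ) (a b : γ)
    (hπ : ∀ x, π (x + a) = π x + b) : ∀ (t : ℕ) (x : γ), π (x + t • a) = π x + t • b := by
  intro t
  induction t with
  | zero => simp
  | succ t ih =>
    intro x
    rw [succ_nsmul, succ_nsmul, ← add_assoc, hπ, ih, add_assoc]

/-- If an intertwiner exists, the orders agree. -/
lemma aux13_order_eq {n : ℕ} [NeZero n] {a b : ZMod n} (π : Equiv.Perm (ZMod n))
    (hπ : ∀ x, π (x + a) = π x + b) : addOrderOf a = addOrderOf b := by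
  have key := aux13_iterate π a b hπ
  apply Nat.dvd_antisymm
  · have h1 := key (addOrderOf b) 0
    rw [addOrderOf_nsmul_eq_zero, add_zero] at h1
    have h2 : (0 : ZMod n) + addOrderOf b • a = 0 + 0 := π.injective (by rw [h1]; ring_nf)
    rw [zero_add, zero_add] at h2
    exact addOrderOf_dvd_of_nsmul_eq_zero h2
  · have h1 := key (addOrderOf a) 0
    rw [addOrderOf_nsmul_eq_zero, add_zero] at h1
    have h2 : addOrderOf a • b = 0 := by
      have h3 : π 0 + addOrderOf a • b = π 0 + 0 := by rw [add_zero]; exact h1.symm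
      exact add_left_cancel h3
    exact addOrderOf_dvd_of_nsmul_eq_zero h2

/-- Transport the intertwiner count along compatible bijections. -/
def aux13_transport {α β : Type*} (e₁ e₂ : α ≃ β) (A A' : α → α) (B B' : β → β)
    (h₁ : ∀ x, e₁ (A x) = B (e₁ x)) (h₂ : ∀ x, e₂ (A' x) = B' (e₂ x)) :
    {π : Equiv.Perm α // ∀ x, π (A x) = A' (π x)} ≃
      {π : Equiv.Perm β // ∀ y, π (B y) = B' (π y)} where
  toFun := fun p => ⟨(e₁.symm.trans p.1).trans e₂, by
    intro y
    simp only [Equiv.trans_apply]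
    rw [show e₁.symm (B y) = A (e₁.symm y) from
      e₁.injective (by rw [h₁, Equiv.apply_symm_apply]; exact congrArg B (e₁.apply_symm_apply y).symm), p.2, h₂]⟩
  invFun := fun p => ⟨(e₁.trans p.1).trans e₂.symm, by
    intro x
    simp only [Equiv.trans_apply]
    rw [h₁, p.2]
    exact e₂.injective (by rw [Equiv.apply_symm_apply, h₂, Equiv.apply_symm_apply])⟩
  left_inv := fun p => Subtype.ext (Equiv.ext fun x => by simp)
  right_inv := fun p => Subtype.ext (Equiv.ext fun y => by simp)

/-- Counting the permutations of `ZMod g × ZMod m` commuting with the shift `(0,1)`. -/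
lemma aux13_prod_count (g m : ℕ) [NeZero g] [NeZero m] :
    Nat.card {π : Equiv.Perm (ZMod g × ZMod m) //
      ∀ p, π (p + ((0 : ZMod g), (1 : ZMod m))) = π p + (0, 1)} =
      g.factorial * m ^ g := by
  classical
  set v : ZMod g × ZMod m := ((0 : ZMod g), (1 : ZMod m)) with hv
  -- the explicit parametrization
  let Φ : Equiv.Perm (ZMod g) × (ZMod g → ZMod m) →
      {π : Equiv.Perm (ZMod g × ZMod m) // ∀ p, π (p + v) = π p + v} := fun q =>
    ⟨{ toFun := fun p => (q.1 p.1, p.2 + q.2 p.1)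
       invFun := fun p => (q.1.symm p.1, p.2 - q.2 (q.1.symm p.1))
       left_inv := fun p => by simp
       right_inv := fun p => by simp },
     by
      rintro ⟨r, s⟩
      simp [hv, Prod.ext_iff]
      ring⟩
  have hbij : Function.Bijective Φ := by
    constructor
    · rintro ⟨ρ, τ⟩ ⟨ρ', τ'⟩ h
      have h' := congrArg (fun f => (f : Equiv.Perm (ZMod g × ZMod m))) (Subtype.ext_iff.mp h)
      have key : ∀ r : ZMod g, (ρ r, (0 : ZMod m) + τ r) = (ρ' r, (0 : ZMod m) + τ' r) := by
        intro r
        exact congrFun (congrArg (fun (f : Equiv.Perm (ZMod g × ZMod m)) =>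
          (f : ZMod g × ZMod m → ZMod g × ZMod m)) h') (r, 0)
      have e1 : ρ = ρ' := Equiv.ext fun r => (Prod.ext_iff.mp (key r)).1
      have e2 : τ = τ' := funext fun r => by
        have := (Prod.ext_iff.mp (key r)).2
        simpa using this
      rw [e1, e2]
    · rintro ⟨π, hπ⟩
      -- structure of an equivariant permutation
      have hform : ∀ (r : ZMod g) (q : ZMod m), π (r, q) = ((π (r, 0)).1, (π (r, 0)).2 + q) := by
        intro r q
        have h1 : ∀ t : ℕ, π ((r, 0) + t • v) = π (r, 0) + t • v := fun t =>
          aux13_iterate π v v hπ t (r, 0)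
        have h2 := h1 q.val
        have h3 : ((r, (0:ZMod m)) + q.val • v) = (r, q) := by
          rw [hv]
          refine Prod.ext_iff.mpr ⟨by simp, ?_⟩
          simp [nsmul_eq_mul, ZMod.natCast_val, ZMod.cast_id]
        rw [h3] at h2
        rw [h2, hv]
        refine Prod.ext_iff.mpr ⟨by simp, ?_⟩
        simp [nsmul_eq_mul, ZMod.natCast_val, ZMod.cast_id, add_comm]
      set ρ : ZMod g → ZMod g := fun r => (π (r, 0)).1 with hρ
      set τ : ZMod g → ZMod m := fun r => (π (r, 0)).2 with hτ
      have hρinj : Function.Injective ρ := by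
        intro r r' h
        have h1 : π (r', τ r - τ r') = π (r, 0) := by
          rw [hform r' (τ r - τ r')]
          rw [hform r 0]
          simp only [hρ, hτ] at h ⊢
          simp only [add_zero]
          rw [add_sub_cancel, ← h]
        have := π.injective h1
        exact ((Prod.ext_iff.mp this).1).symm
      have hρbij : Function.Bijective ρ := Finite.injective_iff_bijective.mp hρinj
      refine ⟨(Equiv.ofBijective ρ hρbij, τ), ?_⟩
      apply Subtype.ext
      apply Equiv.ext
      rintro ⟨r, q⟩
      show ((Equiv.ofBijective ρ hρbij) r, q + τ r) = π (r, q)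
      rw [hform r q]
      exact Prod.ext rfl (add_comm _ _)
  rw [← Nat.card_congr (Equiv.ofBijective Φ hbij)]
  simp [Nat.card_eq_fintype_card, Fintype.card_perm, ZMod.card]

/-- The shift by `a` on `ZMod n` is conjugate to the shift by `(0,1)` on
`ZMod (n/m) × ZMod m` where `m` is the additive order of `a`. -/
lemma aux13_conj {n : ℕ} [NeZero n] (a : ZMod n) (m : ℕ) (hm : addOrderOf a = m) :
    ∃ e : ZMod n ≃ ZMod (n / m) × ZMod m, ∀ x, e (x + a) = e x + (0, 1) := by
  have hn : (0:ℕ) < n := Nat.pos_of_ne_zero (NeZero.ne n)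
  have hmpos : 0 < m := hm ▸ addOrderOf_pos a
  have hmdvd : m ∣ n := by
    rw [← hm]
    have := addOrderOf_dvd_card (x := a)
    rwa [ZMod.card] at this
  set g := n / m with hg
  have hgm : g * m = n := Nat.div_mul_cancel hmdvd
  have hgpos : 0 < g := Nat.div_pos (Nat.le_of_dvd hn hmdvd) hmpos
  haveI : NeZero g := ⟨hgpos.ne'⟩
  haveI : NeZero m := ⟨hmpos.ne'⟩
  -- the parametrizing map
  set G : ZMod g × ZMod m → ZMod n := fun p => (p.1.val : ZMod n) + (p.2.val : ZMod n) * a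
    with hG
  have hma : (m : ZMod n) * a = 0 := by
    have : m • a = 0 := hm ▸ addOrderOf_nsmul_eq_zero a
    rwa [nsmul_eq_mul] at this
  -- reduction of coefficients mod m
  have hmod : ∀ s : ℕ, ((s % m : ℕ) : ZMod n) * a = (s : ZMod n) * a := by
    intro s
    conv_rhs => rw [← Nat.mod_add_div s m]
    push_cast
    rw [add_mul, mul_comm (m : ZMod n) ((s / m : ℕ) : ZMod n), mul_assoc, hma, mul_zero, add_zero]
  have hcast : ∀ s : ℕ, (((s : ZMod m)).val : ZMod n) * a = (s : ZMod n) * a := by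
    intro s
    rw [ZMod.val_natCast, hmod]
  have hinj : Function.Injective G := by
    rintro ⟨r, q⟩ ⟨r', q'⟩ h
    simp only [hG] at h
    have h1 : (m : ZMod n) * (r.val : ZMod n) = (m : ZMod n) * (r'.val : ZMod n) := by
      have h0 := congrArg (fun x => (m : ZMod n) * x) h
      simp only [mul_add] at h0
      rw [show (m:ZMod n) * ((q.val:ZMod n)*a) = (q.val:ZMod n) * ((m:ZMod n)*a) by ring,
        show (m:ZMod n) * ((q'.val:ZMod n)*a) = (q'.val:ZMod n) * ((m:ZMod n)*a) by ring,
        hma] at h0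
      simp only [mul_zero, add_zero] at h0
      exact h0
    have hr : r = r' := by
      have hrv : r.val < g := r.val_lt
      have hrv' : r'.val < g := r'.val_lt
      have h2 : ((m * r.val : ℕ) : ZMod n) = ((m * r'.val : ℕ) : ZMod n) := by
        push_cast
        exact h1
      have h3 : m * r.val = m * r'.val := by
        have l1 : m * r.val < n := by
          calc m * r.val < m * g := (Nat.mul_lt_mul_left hmpos).mpr hrv
          _ = n := by rw [mul_comm]; exact hgm
        have l2 : m * r'.val < n := by
          calc m * r'.val < m * g := (Nat.mul_lt_mul_left hmpos).mpr hrv'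
          _ = n := by rw [mul_comm]; exact hgm
        have h4 := congrArg ZMod.val h2
        rwa [ZMod.val_natCast_of_lt l1, ZMod.val_natCast_of_lt l2] at h4
      exact ZMod.val_injective _ (Nat.eq_of_mul_eq_mul_left hmpos h3)
    subst hr
    have hq : q = q' := by
      have h4 : (q.val : ZMod n) * a = (q'.val : ZMod n) * a := add_left_cancel h
      have h5 : (q.val • a : ZMod n) = q'.val • a := by
        rw [nsmul_eq_mul, nsmul_eq_mul]; exact h4
      have h6 : q.val % addOrderOf a = q'.val % addOrderOf a := nsmul_eq_nsmul_iff_modEq.mp h5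
      rw [hm, Nat.mod_eq_of_lt q.val_lt, Nat.mod_eq_of_lt q'.val_lt] at h6
      exact ZMod.val_injective _ h6
    rw [hq]
  have hbij : Function.Bijective G := by
    rw [Fintype.bijective_iff_injective_and_card]
    refine ⟨hinj, ?_⟩
    simp [ZMod.card, hgm]
  -- equivariance on the `G` side
  have hequiv : ∀ p, G (p + ((0 : ZMod g), (1 : ZMod m))) = G p + a := by
    rintro ⟨r, q⟩
    simp only [hG, Prod.fst_add, Prod.snd_add, add_zero]
    have e1 : q + 1 = ((q.val + 1 : ℕ) : ZMod m) := by
      push_cast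
      rw [ZMod.natCast_val, ZMod.cast_id]
    rw [e1, hcast]
    push_cast
    ring
  refine ⟨(Equiv.ofBijective G hbij).symm, ?_⟩
  intro x
  obtain ⟨p, rfl⟩ := hbij.surjective x
  rw [show G p + a = G (p + ((0 : ZMod g), (1 : ZMod m))) from (hequiv p).symm,
    Equiv.ofBijective_symm_apply_apply, Equiv.ofBijective_symm_apply_apply]

/-- The number of permutations intertwining shift-by-`a` with shift-by-`b`. -/
lemma aux13_count {n : ℕ} [NeZero n] (a b : ZMod n) :
    Nat.card {π : Equiv.Perm (ZMod n) // ∀ x, π (x + a) = π x + b} =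
      if addOrderOf a = addOrderOf b then
        (n / addOrderOf a).factorial * (addOrderOf a) ^ (n / addOrderOf a) else 0 := by
  split_ifs with h
  · set m := addOrderOf a with hm
    have hn : (0:ℕ) < n := Nat.pos_of_ne_zero (NeZero.ne n)
    have hmpos : 0 < m := addOrderOf_pos a
    have hmdvd : m ∣ n := by
      have := addOrderOf_dvd_card (x := a)
      rwa [ZMod.card] at this
    haveI : NeZero m := ⟨hmpos.ne'⟩
    haveI : NeZero (n / m) :=
      ⟨(Nat.div_pos (Nat.le_of_dvd hn hmdvd) hmpos).ne'⟩
    obtain ⟨e₁, he₁⟩ := aux13_conj a m rfl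
    obtain ⟨e₂, he₂⟩ := aux13_conj b m h.symm
    have E := aux13_transport e₁ e₂ (· + a) (· + b)
      (· + ((0 : ZMod (n/m)), (1 : ZMod m))) (· + ((0 : ZMod (n/m)), (1 : ZMod m))) he₁ he₂
    rw [Nat.card_congr E, aux13_prod_count]
  · have : IsEmpty {π : Equiv.Perm (ZMod n) // ∀ x, π (x + a) = π x + b} :=
      ⟨fun p => h (aux13_order_eq p.1 p.2)⟩
    exact Nat.card_of_isEmpty

/-- Let `n ≥ 1` and let `σ : i ↦ i + 1` on `ℤ/nℤ`.  Consider the action of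
`ℤ/nℤ × ℤ/nℤ` on the permutations of `ℤ/nℤ` by `(h, k)·π = σ^k ∘ π ∘ σ^{-h}`
(whose orbits are the sets `{σ^k ∘ π ∘ σ^{-h} : h, k}`).  The number `N` of orbits
satisfies `n·N = Σ_{d ∣ n} φ(d)²·(n/d - 1)!·d^{n/d - 1}`. -/
theorem stmt_13 (n : ℕ) (hn : 1 ≤ n)
    (σ : Equiv.Perm (ZMod n)) (hσ : ∀ i, σ i = i + 1) (N : ℕ)
    (hN : N = Nat.card {s : Set (Equiv.Perm (ZMod n)) //
      ∃ π : Equiv.Perm (ZMod n),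
        s = {π' | ∃ h k : ℕ, π' = σ ^ k * π * (σ ^ h)⁻¹}}) :
    n * N = ∑ d ∈ n.divisors,
      d.totient ^ 2 * (n / d - 1).factorial * d ^ (n / d - 1) := by
  classical
  haveI : NeZero n := ⟨by omega⟩
  -- powers of σ are translations
  have hσ' : ∀ k : ℕ, σ ^ k = Equiv.addRight (k : ZMod n) := by
    intro k
    induction k with
    | zero => ext x; simp
    | succ k ih =>
      ext x
      rw [pow_succ]
      simp only [Equiv.Perm.mul_apply, ih, Equiv.coe_addRight, hσ]
      push_cast
      ring
  -- the additive action
  letI : AddAction (ZMod n × ZMod n) (Equiv.Perm (ZMod n)) :=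
    { vadd := fun g π => (Equiv.addRight (-g.1)).trans (π.trans (Equiv.addRight g.2))
      zero_vadd := fun π => by
        ext x
        show π (x + -(0 : ZMod n × ZMod n).1) + (0 : ZMod n × ZMod n).2 = π x
        simp
      add_vadd := fun g h π => by
        ext x
        show π (x + -(g.1 + h.1)) + (g.2 + h.2) = π ((x + -g.1) + -h.1) + h.2 + g.2
        rw [show x + -(g.1 + h.1) = x + -g.1 + -h.1 by ring]
        ring }
  have hvadd : ∀ (g : ZMod n × ZMod n) (π : Equiv.Perm (ZMod n)) (x : ZMod n),
      (g +ᵥ π) x = π (x + -g.1) + g.2 := fun _ _ _ => rfl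
  -- orbits are the sets in the statement
  have horb : ∀ π : Equiv.Perm (ZMod n),
      {π' | ∃ h k : ℕ, π' = σ ^ k * π * (σ ^ h)⁻¹} =
        AddAction.orbit (ZMod n × ZMod n) π := by
    intro π
    ext π'
    constructor
    · rintro ⟨h, k, rfl⟩
      refine ⟨((h : ZMod n), (k : ZMod n)), ?_⟩
      rw [eq_mul_inv_iff_mul_eq]
      ext x
      show (((h : ZMod n), (k : ZMod n)) +ᵥ π) ((σ ^ h) x) = (σ ^ k) (π x)
      rw [hvadd, hσ' h, hσ' k]
      simp
    · rintro ⟨g, rfl⟩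
      refine ⟨g.1.val, g.2.val, ?_⟩
      rw [eq_mul_inv_iff_mul_eq]
      ext x
      show (g +ᵥ π) ((σ ^ g.1.val) x) = (σ ^ g.2.val) (π x)
      rw [hvadd, hσ' g.1.val, hσ' g.2.val]
      simp [ZMod.natCast_val, ZMod.cast_id]
  -- identify N with the number of orbits
  set Ω := Quotient (AddAction.orbitRel (ZMod n × ZMod n) (Equiv.Perm (ZMod n))) with hΩ
  let F : Ω → {s : Set (Equiv.Perm (ZMod n)) // ∃ π : Equiv.Perm (ZMod n),
      s = {π' | ∃ h k : ℕ, π' = σ ^ k * π * (σ ^ h)⁻¹}} :=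
    Quotient.lift (fun π => ⟨AddAction.orbit (ZMod n × ZMod n) π, π, (horb π).symm⟩)
      (fun π π' hrel => Subtype.ext
        (AddAction.orbit_eq_iff.mpr (AddAction.orbitRel_apply.mp hrel)))
  have hFbij : Function.Bijective F := by
    constructor
    · rintro ⟨π⟩ ⟨π'⟩ hF
      apply Quotient.sound
      have heq : AddAction.orbit (ZMod n × ZMod n) π = AddAction.orbit (ZMod n × ZMod n) π' :=
        congrArg Subtype.val hF
      exact AddAction.orbitRel_apply.mpr (heq ▸ AddAction.mem_orbit_self π)
    · rintro ⟨s, π, rfl⟩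
      exact ⟨Quotient.mk _ π, Subtype.ext (horb π).symm⟩
  have hNΩ : N = Nat.card Ω := by
    rw [hN, ← Nat.card_congr (Equiv.ofBijective F hFbij)]
  -- Burnside
  haveI : Fintype Ω := Fintype.ofFinite _
  haveI : ∀ g : ZMod n × ZMod n, Fintype (AddAction.fixedBy (Equiv.Perm (ZMod n)) g) :=
    fun g => Fintype.ofFinite _
  have burn := AddAction.sum_card_fixedBy_eq_card_orbits_mul_card_addGroup
    (ZMod n × ZMod n) (Equiv.Perm (ZMod n))
  -- fixed point counts
  have hfix : ∀ g : ZMod n × ZMod n,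
      Fintype.card (AddAction.fixedBy (Equiv.Perm (ZMod n)) g) =
      (if addOrderOf g.1 = addOrderOf g.2 then
        (n / addOrderOf g.1).factorial * (addOrderOf g.1) ^ (n / addOrderOf g.1) else 0) := by
    intro g
    rw [← aux13_count g.1 g.2, ← Nat.card_eq_fintype_card]
    apply Nat.card_congr
    apply Equiv.subtypeEquivRight
    intro π
    constructor
    · intro hp y
      have h1 : (g +ᵥ π) (y + g.1) = π (y + g.1) := by rw [hp]
      rw [hvadd] at h1
      rw [← h1]
      ring_nf
    · intro hp
      ext x
      rw [hvadd]
      have h2 := hp (x + -g.1)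
      rw [show x + -g.1 + g.1 = x by ring] at h2
      rw [h2]
  -- evaluate the Burnside sum
  have hsum : ∑ g : ZMod n × ZMod n, Fintype.card (AddAction.fixedBy (Equiv.Perm (ZMod n)) g)
      = ∑ d ∈ n.divisors, d.totient ^ 2 * ((n / d).factorial * d ^ (n / d)) := by
    have hdvd : ∀ a : ZMod n, addOrderOf a ∣ n := by
      intro a
      have := addOrderOf_dvd_card (x := a)
      rwa [ZMod.card] at this
    calc ∑ g : ZMod n × ZMod n, Fintype.card (AddAction.fixedBy (Equiv.Perm (ZMod n)) g)
        = ∑ a : ZMod n, ∑ b : ZMod n, (if addOrderOf a = addOrderOf b then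
            (n / addOrderOf a).factorial * (addOrderOf a) ^ (n / addOrderOf a) else 0) := by
          have h1 : ∑ g : ZMod n × ZMod n, Fintype.card (AddAction.fixedBy (Equiv.Perm (ZMod n)) g)
              = ∑ g : ZMod n × ZMod n, (if addOrderOf g.1 = addOrderOf g.2 then
                  (n / addOrderOf g.1).factorial * (addOrderOf g.1) ^ (n / addOrderOf g.1) else 0) :=
            Finset.sum_congr rfl fun g _ => hfix g
          rw [h1, Fintype.sum_prod_type]
      _ = ∑ a : ZMod n, (addOrderOf a).totient *
            ((n / addOrderOf a).factorial * (addOrderOf a) ^ (n / addOrderOf a)) := by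
          refine Finset.sum_congr rfl (fun a _ => ?_)
          rw [← Finset.sum_filter]
          rw [Finset.sum_const, smul_eq_mul]
          congr 1
          have hfilt : Finset.univ.filter (fun b : ZMod n => addOrderOf a = addOrderOf b) =
              Finset.univ.filter (fun b : ZMod n => addOrderOf b = addOrderOf a) := by
            apply Finset.filter_congr
            intro b _
            exact ⟨Eq.symm, Eq.symm⟩
          rw [hfilt]
          have := IsAddCyclic.card_addOrderOf_eq_totient (α := ZMod n) (d := addOrderOf a)
            (by rw [ZMod.card]; exact hdvd a)
          exact this
      _ = ∑ d ∈ n.divisors, ∑ a ∈ Finset.univ.filter (fun a : ZMod n => addOrderOf a = d),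
            (addOrderOf a).totient *
              ((n / addOrderOf a).factorial * (addOrderOf a) ^ (n / addOrderOf a)) :=
          (Finset.sum_fiberwise_of_maps_to
            (fun a _ => Nat.mem_divisors.mpr ⟨hdvd a, NeZero.ne n⟩) _).symm
      _ = ∑ d ∈ n.divisors, d.totient ^ 2 * ((n / d).factorial * d ^ (n / d)) := by
          refine Finset.sum_congr rfl fun d hd => ?_
          obtain ⟨hddvd, -⟩ := Nat.mem_divisors.mp hd
          have hterm : ∀ a ∈ Finset.univ.filter (fun a : ZMod n => addOrderOf a = d),
              (addOrderOf a).totient *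
                ((n / addOrderOf a).factorial * (addOrderOf a) ^ (n / addOrderOf a)) =
              d.totient * ((n / d).factorial * d ^ (n / d)) := by
            intro a ha
            rw [(Finset.mem_filter.mp ha).2]
          rw [Finset.sum_congr rfl hterm, Finset.sum_const, smul_eq_mul]
          have hcard := IsAddCyclic.card_addOrderOf_eq_totient (α := ZMod n) (d := d)
            (by rw [ZMod.card]; exact hddvd)
          rw [hcard, sq]
          ring
  rw [hsum] at burn
  have hcard2 : Fintype.card (ZMod n × ZMod n) = n * n := by simp [ZMod.card]
  rw [hcard2, ← Nat.card_eq_fintype_card, ← hNΩ] at burn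
  apply Nat.eq_of_mul_eq_mul_left (show 0 < n by omega)
  calc n * (n * N) = N * (n * n) := by ring
    _ = ∑ d ∈ n.divisors, d.totient ^ 2 * ((n / d).factorial * d ^ (n / d)) := burn.symm
    _ = n * ∑ d ∈ n.divisors, d.totient ^ 2 * (n / d - 1).factorial * d ^ (n / d - 1) := by
        rw [Finset.mul_sum]
        refine Finset.sum_congr rfl fun d hd => ?_
        obtain ⟨hddvd, -⟩ := Nat.mem_divisors.mp hd
        have hdpos : 0 < d := Nat.pos_of_dvd_of_pos hddvd (by omega)
        have hepos : 0 < n / d := Nat.div_pos (Nat.le_of_dvd (by omega) hddvd) hdpos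
        obtain ⟨e', he'⟩ : ∃ e', n / d = e' + 1 := ⟨n / d - 1, by omega⟩
        have hn' : (e' + 1) * d = n := by rw [← he']; exact Nat.div_mul_cancel hddvd
        rw [he']
        simp only [Nat.add_sub_cancel, Nat.factorial_succ, pow_succ]
        rw [← hn']
        ring
end
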